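/- arXiv:1806.00729 — 5 statements merged into one kernel-verified Lean document; each statement's English description precedes it below -/
import Mathlib

section
/- Let n = 2m be a positive integer divisible by 6, and let a σ_n-partition of K_n have defining sequence a_1, a_2, …, a_m ∈ {0,1,2}. If for every j ∈ {1, …, m−1} either a_{j+1} = a_j or a_{j+1} ≡ a_j + 1 (mod 3), then the σ_n-partition admits a transitive σ_n-orientation. -/
/-- A σ_n-k-partition of K_n: a symmetric labeling of the edges of the complete
graph on `ZMod n` with labels in `ZMod k` such that shifting both endpoints by 1
increases the label by 1 (mod k). -/
def IsSigmaPartition (n k : ℕ) (ℓ : ZMod n → ZMod n → ZMod k) : Prop :=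
  (∀ a b : ZMod n, ℓ a b = ℓ b a) ∧
  (∀ a b : ZMod n, a ≠ b → ℓ (a + 1) (b + 1) = ℓ a b + 1)

/-- `a` precedes `b` in the ordering `τ` of the vertices. -/
def Precedes {n : ℕ} (τ : Fin n ≃ ZMod n) (a b : ZMod n) : Prop :=
  τ.symm a < τ.symm b

/-- σ_n reverses the orientation of the edge {a,b} in the transitive orientation
consistent with `τ`: `a` precedes `b`, but `b+1` precedes `a+1`. -/
def Reverses {n : ℕ} (τ : Fin n ≃ ZMod n) (a b : ZMod n) : Prop :=
  Precedes τ a b ∧ Precedes τ (b + 1) (a + 1)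

/-- The transitive orientation consistent with `τ` is a transitive σ_n-orientation
of the σ_n-k-partition `ℓ`: every edge whose orientation σ_n reverses has
label k-1 (i.e. -1 in `ZMod k`). -/
def IsTransSigmaOrientation (n k : ℕ) (ℓ : ZMod n → ZMod n → ZMod k)
    (τ : Fin n ≃ ZMod n) : Prop :=
  ∀ a b : ZMod n, a ≠ b → Reverses τ a b → ℓ a b = -1

/-- `j` is a local minimum of the ordering `τ`: it precedes both its cyclic
neighbours. -/
def CycLocalMin {n : ℕ} (τ : Fin n ≃ ZMod n) (j : ZMod n) : Prop :=
  Precedes τ j (j - 1) ∧ Precedes τ j (j + 1)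

/-- `j` is a local maximum of the ordering `τ`: both its cyclic neighbours
precede it. -/
def CycLocalMax {n : ℕ} (τ : Fin n ≃ ZMod n) (j : ZMod n) : Prop :=
  Precedes τ (j - 1) j ∧ Precedes τ (j + 1) j

/-- An ordering is bitonic if it has a unique local minimum and a unique local
maximum. -/
def Bitonic {n : ℕ} (τ : Fin n ≃ ZMod n) : Prop :=
  (∃! j, CycLocalMin τ j) ∧ (∃! j, CycLocalMax τ j)

/-- The defining sequence halts at index `i`: `a_{i+1} = a_i`. -/
def Halts (n k : ℕ) (ℓ : ZMod n → ZMod n → ZMod k) (i : ℕ) : Prop :=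
  ℓ 0 ((i + 1 : ℕ) : ZMod n) = ℓ 0 ((i : ℕ) : ZMod n)

/-- The defining sequence steps at index `i`: `a_{i+1} ≡ a_i + 1 (mod k)`. -/
def Steps (n k : ℕ) (ℓ : ZMod n → ZMod n → ZMod k) (i : ℕ) : Prop :=
  ℓ 0 ((i + 1 : ℕ) : ZMod n) = ℓ 0 ((i : ℕ) : ZMod n) + 1

/-- The defining sequence jumps at index `i`: it neither halts nor steps there. -/
def Jumps (n k : ℕ) (ℓ : ZMod n → ZMod n → ZMod k) (i : ℕ) : Prop :=
  ¬ Halts n k ℓ i ∧ ¬ Steps n k ℓ i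

namespace Stmt0Aux

/-- Number of "step" moves among indices `1..s`. -/
def Dd (δ : ℕ → ℕ) (s : ℕ) : ℕ := ∑ t ∈ Finset.range s, δ (t+1)

lemma Dd_zero (δ : ℕ → ℕ) : Dd δ 0 = 0 := Finset.sum_range_zero _

lemma Dd_succ (δ : ℕ → ℕ) (s : ℕ) : Dd δ (s+1) = Dd δ s + δ (s+1) :=
  Finset.sum_range_succ _ _

lemma Dd_facts (δ : ℕ → ℕ) (hδ : ∀ t, δ t ≤ 1) :
    ∀ s r, r ≤ s → Dd δ r ≤ Dd δ s ∧ Dd δ s ≤ Dd δ r + (s - r) := by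
  intro s
  induction s with
  | zero => intro r hr; have : r = 0 := Nat.le_zero.mp hr; subst this; omega
  | succ s ih =>
    intro r hr
    rcases Nat.lt_or_ge r (s+1) with h | h
    · have h1 := ih r (by omega)
      have h2 := Dd_succ δ s
      have h3 := hδ (s+1)
      omega
    · have : r = s + 1 := by omega
      subst this; omega

lemma Dd_le (δ : ℕ → ℕ) (hδ : ∀ t, δ t ≤ 1) (s : ℕ) : Dd δ s ≤ s := by
  have := Dd_facts δ hδ s 0 (Nat.zero_le _)
  have h0 := Dd_zero δ
  omega

/-- number of `L` choices among the first `k` choices of the growth string. -/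
def NN (n m : ℕ) (δ : ℕ → ℕ) (k : ℕ) : ℕ :=
  if k < m then Dd δ k else (k + 1 - m) + Dd δ (n - 2 - k)

lemma NN_le {n m : ℕ} (δ : ℕ → ℕ) (hδ : ∀ t, δ t ≤ 1) (hnm : n = 2*m) (hm : 3 ≤ m)
    {k : ℕ} (hk : k ≤ n - 2) : NN n m δ k ≤ k := by
  unfold NN; split
  · exact Dd_le δ hδ k
  · have := Dd_le δ hδ (n - 2 - k); omega

lemma NN_alt {n m : ℕ} (δ : ℕ → ℕ) (hnm : n = 2*m) (hm : 3 ≤ m)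
    {k : ℕ} (h1 : m - 1 ≤ k) (hk : k ≤ n - 2) :
    NN n m δ k = (k + 1 - m) + Dd δ (n - 2 - k) := by
  unfold NN; split
  · have hk' : k = m - 1 := by omega
    have e2 : n - 2 - k = k := by omega
    rw [e2]; omega
  · rfl

lemma NN_step {n m : ℕ} (δ : ℕ → ℕ) (hδ : ∀ t, δ t ≤ 1) (hnm : n = 2*m) (hm : 3 ≤ m)
    {k : ℕ} (hk : k + 1 ≤ n - 2) :
    NN n m δ k ≤ NN n m δ (k+1) ∧ NN n m δ (k+1) ≤ NN n m δ k + 1 := by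
  by_cases h1 : k + 1 < m
  · have h2 : k < m := by omega
    unfold NN
    rw [if_pos h1, if_pos h2, Dd_succ]
    have := hδ (k+1); omega
  · have hk1 : NN n m δ (k+1) = (k + 2 - m) + Dd δ (n - 3 - k) := by
      have h' := NN_alt δ hnm hm (k := k+1) (by omega) (by omega)
      have e' : n - 2 - (k+1) = n - 3 - k := by omega
      rw [e'] at h'
      first
      | (rw [h']; omega)
      | rw [h']
    have hk0 : NN n m δ k = (k + 1 - m) + Dd δ (n - 2 - k) := by
      exact NN_alt δ hnm hm (by omega) (by omega)
    have e : n - 2 - k = (n - 3 - k) + 1 := by omega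
    have h2 := Dd_succ δ (n - 3 - k)
    have h3 := hδ (n - 3 - k + 1)
    rw [e] at hk0
    omega

lemma NN_lip {n m : ℕ} (δ : ℕ → ℕ) (hδ : ∀ t, δ t ≤ 1) (hnm : n = 2*m) (hm : 3 ≤ m) :
    ∀ {k j : ℕ}, j ≤ k → k ≤ n - 2 →
      NN n m δ j ≤ NN n m δ k ∧ NN n m δ k ≤ NN n m δ j + (k - j) := by
  intro k
  induction k with
  | zero => intro j h1 h2; have : j = 0 := Nat.le_zero.mp h1; subst this; omega
  | succ k ih =>
    intro j h1 h2
    rcases Nat.lt_or_ge j (k+1) with h | h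
    · have h3 := ih (j := j) (by omega) (by omega)
      have h4 := NN_step δ hδ hnm hm (k := k) (by omega)
      omega
    · have : j = k + 1 := by omega
      subst this; omega



def bef (n m : ℕ) (δ : ℕ → ℕ) (i i' : ℕ) : Prop :=
  if i ≤ m then
    (if i' ≤ m then i < i' else NN n m δ (i + (n - i') - 1) < n - i')
  else
    (if i' ≤ m then n - i ≤ NN n m δ (i' + (n - i) - 1) else i' < i)

lemma bef_irrefl (n m : ℕ) (δ : ℕ → ℕ) (i : ℕ) : ¬ bef n m δ i i := by
  unfold bef
  rcases le_or_gt i m with h | h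
  · rw [if_pos h, if_pos h]; omega
  · rw [if_neg (by omega), if_neg (by omega)]; omega

lemma bef_connex (n m : ℕ) (δ : ℕ → ℕ) {i i' : ℕ} (h : i ≠ i') :
    bef n m δ i i' ∨ bef n m δ i' i := by
  unfold bef
  rcases le_or_gt i m with h1 | h1 <;> rcases le_or_gt i' m with h2 | h2
  · rw [if_pos h1, if_pos h2, if_pos h2, if_pos h1]; omega
  · rw [if_pos h1, if_neg (by omega), if_neg (by omega), if_pos h1]; omega
  · rw [if_neg (by omega), if_pos h2, if_pos h2, if_neg (by omega)]; omega
  · rw [if_neg (by omega), if_neg (by omega), if_neg (by omega), if_neg (by omega)]; omega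

lemma bef_trans (n m : ℕ) (δ : ℕ → ℕ) (hδ : ∀ t, δ t ≤ 1) (hnm : n = 2*m) (hm : 3 ≤ m)
    {x y z : ℕ} (hx : x ≤ n - 1) (hy : y ≤ n - 1) (hz : z ≤ n - 1)
    (h1 : bef n m δ x y) (h2 : bef n m δ y z) : bef n m δ x z := by
  unfold bef at h1 h2 ⊢
  rcases le_or_gt x m with hxm | hxm <;> rcases le_or_gt y m with hym | hym <;>
    rcases le_or_gt z m with hzm | hzm
  · rw [if_pos hxm, if_pos hym] at h1; rw [if_pos hym, if_pos hzm] at h2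
    rw [if_pos hxm, if_pos hzm]; omega
  · rw [if_pos hxm, if_pos hym] at h1; rw [if_pos hym, if_neg (by omega)] at h2
    rw [if_pos hxm, if_neg (by omega)]
    have hl := NN_lip δ hδ hnm hm (k := y + (n - z) - 1) (j := x + (n - z) - 1)
      (by omega) (by omega)
    omega
  · rw [if_pos hxm, if_neg (by omega)] at h1; rw [if_neg (by omega), if_pos hzm] at h2
    rw [if_pos hxm, if_pos hzm]
    by_contra hc
    have hzx : z ≤ x := by omega
    have hl := NN_lip δ hδ hnm hm (k := x + (n - y) - 1) (j := z + (n - y) - 1)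
      (by omega) (by omega)
    omega
  · rw [if_pos hxm, if_neg (by omega)] at h1; rw [if_neg (by omega), if_neg (by omega)] at h2
    rw [if_pos hxm, if_neg (by omega)]
    have hl := NN_lip δ hδ hnm hm (k := x + (n - z) - 1) (j := x + (n - y) - 1)
      (by omega) (by omega)
    omega
  · rw [if_neg (by omega), if_pos hym] at h1; rw [if_pos hym, if_pos hzm] at h2
    rw [if_neg (by omega), if_pos hzm]
    have hl := NN_lip δ hδ hnm hm (k := z + (n - x) - 1) (j := y + (n - x) - 1)
      (by omega) (by omega)
    omega
  · rw [if_neg (by omega), if_pos hym] at h1; rw [if_pos hym, if_neg (by omega)] at h2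
    rw [if_neg (by omega), if_neg (by omega)]
    by_contra hc
    have hxz : x ≤ z := by omega
    have hl := NN_lip δ hδ hnm hm (k := y + (n - x) - 1) (j := y + (n - z) - 1)
      (by omega) (by omega)
    omega
  · rw [if_neg (by omega), if_neg (by omega)] at h1; rw [if_neg (by omega), if_pos hzm] at h2
    rw [if_neg (by omega), if_pos hzm]
    have hl := NN_lip δ hδ hnm hm (k := z + (n - y) - 1) (j := z + (n - x) - 1)
      (by omega) (by omega)
    omega
  · rw [if_neg (by omega), if_neg (by omega)] at h1
    rw [if_neg (by omega), if_neg (by omega)] at h2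
    rw [if_neg (by omega), if_neg (by omega)]; omega


lemma exists_equiv (n : ℕ) (hn : 0 < n) (R : ZMod n → ZMod n → Prop)
    (hirr : ∀ v, ¬ R v v) (htr : ∀ {x y z}, R x y → R y z → R x z)
    (hconn : ∀ {x y : ZMod n}, x ≠ y → R x y ∨ R y x) :
    ∃ τ : Fin n ≃ ZMod n, ∀ a b, Precedes τ a b → R a b := by
  haveI : NeZero n := ⟨hn.ne'⟩
  classical
  set rank : ZMod n → ℕ := fun v => (Finset.univ.filter (fun w => R w v)).card with hrank
  have hlt : ∀ v, rank v < n := by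
    intro v
    have hss : (Finset.univ.filter (fun w => R w v)) ⊂ Finset.univ := by
      refine ⟨Finset.subset_univ _, fun hsub => ?_⟩
      have hv := hsub (Finset.mem_univ v)
      exact hirr v (Finset.mem_filter.mp hv).2
    have h := Finset.card_lt_card hss
    simpa [Finset.card_univ, ZMod.card] using h
  have hmono : ∀ {v w}, R v w → rank v < rank w := by
    intro v w h
    apply Finset.card_lt_card
    constructor
    · intro u hu
      rw [Finset.mem_filter] at hu ⊢
      exact ⟨hu.1, htr hu.2 h⟩
    · intro hsub
      have hv : v ∈ Finset.univ.filter (fun w' => R w' w) :=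
        Finset.mem_filter.mpr ⟨Finset.mem_univ _, h⟩
      exact hirr v (Finset.mem_filter.mp (hsub hv)).2
  set g : ZMod n → Fin n := fun v => ⟨rank v, hlt v⟩ with hg
  have hginj : Function.Injective g := by
    intro v w hvw
    by_contra hne
    have hvw' : rank v = rank w := congrArg Fin.val hvw
    rcases hconn hne with h | h
    · have := hmono h; omega
    · have := hmono h; omega
  have hgbij : Function.Bijective g :=
    (Fintype.bijective_iff_injective_and_card g).mpr ⟨hginj, by simp [ZMod.card]⟩
  refine ⟨(Equiv.ofBijective g hgbij).symm, ?_⟩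
  intro a b hab
  have hab' : rank a < rank b := by
    have h1 : (Equiv.ofBijective g hgbij).symm.symm a < (Equiv.ofBijective g hgbij).symm.symm b := hab
    rw [Equiv.symm_symm] at h1
    exact h1
  have hne : a ≠ b := by
    rintro rfl; exact lt_irrefl _ hab'
  rcases hconn hne with h | h
  · exact h
  · exact absurd (hmono h) (by omega)


end Stmt0Aux

/-- If n = 2m is positive and divisible by 6 and the defining
sequence of a σ_n-partition satisfies that each term either repeats or increases
by 1 (mod 3), then the partition admits a transitive σ_n-orientation. -/
theorem stmt_0 (n m : ℕ) (hn : 0 < n) (hnm : n = 2 * m) (h6 : 6 ∣ n)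
    (ℓ : ZMod n → ZMod n → ZMod 3) (hP : IsSigmaPartition n 3 ℓ)
    (hseq : ∀ j : ℕ, 1 ≤ j → j ≤ m - 1 →
      ℓ 0 ((j + 1 : ℕ) : ZMod n) = ℓ 0 ((j : ℕ) : ZMod n) ∨
      ℓ 0 ((j + 1 : ℕ) : ZMod n) = ℓ 0 ((j : ℕ) : ZMod n) + 1) :
    ∃ τ : Fin n ≃ ZMod n, IsTransSigmaOrientation n 3 ℓ τ := by
  classical
  haveI : NeZero n := ⟨hn.ne'⟩
  have hm3 : 3 ∣ m := by omega
  have hm : 3 ≤ m := by omega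
  haveI : Fact (1 < n) := ⟨by omega⟩
  open Stmt0Aux in
  -- the defining sequence
  set A : ℕ → ZMod 3 := fun j => ℓ 0 ((j : ℕ) : ZMod n) with hA
  set δ : ℕ → ℕ := fun j => if A (j+1) = A j + 1 then 1 else 0 with hδdef
  have hδ : ∀ t, δ t ≤ 1 := by
    intro t; simp only [hδdef]; split <;> omega
  have hAstep : ∀ j : ℕ, 1 ≤ j → j ≤ m - 1 → A (j+1) = A j + ((δ j : ℕ) : ZMod 3) := by
    intro j h1 h2
    rcases hseq j h1 h2 with h | h
    · have h' : A (j+1) = A j := h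
      have hne : ¬ (A (j+1) = A j + 1) := by
        intro hc
        rw [h'] at hc
        exact one_ne_zero (left_eq_add.mp hc)
      simp only [hδdef]; rw [if_neg hne]
      simp [h']
    · have h' : A (j+1) = A j + 1 := h
      simp only [hδdef]; rw [if_pos h']
      push_cast
      exact h'
  have hDdcast : ∀ s, s ≤ m - 1 → ((Stmt0Aux.Dd δ s : ℕ) : ZMod 3) = A (s+1) - A 1 := by
    intro s
    induction s with
    | zero => intro _; rw [Stmt0Aux.Dd_zero]; simp
    | succ s ih =>
      intro hs
      have h1 := ih (by omega)
      have h2 := hAstep (s+1) (by omega) (by omega)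
      rw [Stmt0Aux.Dd_succ]
      push_cast
      push_cast at h1
      rw [h1, h2]
      ring
  -- shifting lemma
  have hshift : ∀ (c : ℕ) (x y : ZMod n), x ≠ y →
      ℓ (x + (c : ZMod n)) (y + (c : ZMod n)) = ℓ x y + ((c : ℕ) : ZMod 3) := by
    intro c
    induction c with
    | zero => intro x y _; simp
    | succ c ih =>
      intro x y hxy
      have h1 := ih x y hxy
      have h2 := hP.2 (x + (c : ZMod n)) (y + (c : ZMod n))
        (by intro hc; exact hxy (add_right_cancel hc))
      have e1 : x + ((c + 1 : ℕ) : ZMod n) = (x + (c : ZMod n)) + 1 := by push_cast; ring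
      have e2 : y + ((c + 1 : ℕ) : ZMod n) = (y + (c : ZMod n)) + 1 := by push_cast; ring
      rw [e1, e2, h2, h1]
      push_cast
      ring
  set p : ZMod n := ((2 * (A 1).val : ℕ) : ZMod n) with hp
  have hvcast : (((A 1).val : ℕ) : ZMod 3) = A 1 := ZMod.natCast_rightInverse _
  have hL0 : ∀ (x : ℕ) (u : ZMod n), u ≠ 0 →
      ℓ (p + (x : ZMod n)) (p + (x : ZMod n) + u) = ℓ 0 u - A 1 + ((x : ℕ) : ZMod 3) := by
    intro x u hu
    have h := hshift (2 * (A 1).val + x) 0 u (Ne.symm hu)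
    have e1 : (0 : ZMod n) + ((2 * (A 1).val + x : ℕ) : ZMod n) = p + (x : ZMod n) := by
      rw [hp]; push_cast; ring
    have e2 : u + ((2 * (A 1).val + x : ℕ) : ZMod n) = p + (x : ZMod n) + u := by
      rw [hp]; push_cast; ring
    rw [e1, e2] at h
    rw [h]
    push_cast
    rw [hvcast]
    have h2 : (2 : ZMod 3) * A 1 = - A 1 := by
      have : ∀ z : ZMod 3, 2 * z = -z := by decide
      exact this _
    linear_combination h2
  have hcne : ∀ d : ℕ, 1 ≤ d → d ≤ n - 1 → ((d : ℕ) : ZMod n) ≠ 0 := by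
    intro d h1 h2 hc
    have hd := (ZMod.natCast_eq_zero_iff d n).mp hc
    have := Nat.le_of_dvd (by omega) hd
    omega
  have hrefl : ∀ d : ℕ, 1 ≤ d → d ≤ n - 1 → A (n - d) = A d - ((d : ℕ) : ZMod 3) := by
    intro d h1 h2
    have hne : (0 : ZMod n) ≠ ((n - d : ℕ) : ZMod n) := by
      intro hc
      exact hcne (n - d) (by omega) (by omega) hc.symm
    have h := hshift d 0 ((n - d : ℕ) : ZMod n) hne
    have e1 : (0 : ZMod n) + ((d : ℕ) : ZMod n) = ((d : ℕ) : ZMod n) := by ring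
    have e2 : ((n - d : ℕ) : ZMod n) + ((d : ℕ) : ZMod n) = 0 := by
      rw [← Nat.cast_add, show n - d + d = n from by omega, ZMod.natCast_self]
    rw [e1, e2] at h
    rw [hP.1 ((d : ℕ) : ZMod n) 0] at h
    have h' : A d = A (n - d) + ((d : ℕ) : ZMod 3) := h
    linear_combination -h'
  have hAhigh : ∀ d, m ≤ d → d ≤ n - 1 → A d = A (n - d) - (((n - d : ℕ)) : ZMod 3) := by
    intro d h1 h2
    have h := hrefl (n - d) (by omega) (by omega)
    rw [show n - (n - d) = d from by omega] at h
    exact h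
  have castm1 : ((m - 1 : ℕ) : ZMod 3) = -1 := by
    obtain ⟨q, hq⟩ := hm3
    rw [show m - 1 = 3 * (q - 1) + 2 from by omega]
    push_cast
    rw [show (3 : ZMod 3) = 0 from by decide, zero_mul, zero_add]
    decide
  have hLab : ∀ (x d : ℕ), 1 ≤ d → d ≤ n - 1 →
      ℓ (p + (x : ZMod n)) (p + (x : ZMod n) + ((d : ℕ) : ZMod n))
        = A d - A 1 + ((x : ℕ) : ZMod 3) :=
    fun x d h1 h2 => hL0 x _ (hcne d h1 h2)
  -- the ordering
  obtain ⟨τ, hτ⟩ := Stmt0Aux.exists_equiv n hn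
    (fun v w => Stmt0Aux.bef n m δ ((v - p).val) ((w - p).val))
    (fun v => Stmt0Aux.bef_irrefl n m δ _)
    (fun {x y z} h1 h2 => Stmt0Aux.bef_trans n m δ hδ (by omega) hm
      (by have := ZMod.val_lt (x - p); omega)
      (by have := ZMod.val_lt (y - p); omega)
      (by have := ZMod.val_lt (z - p); omega) h1 h2)
    (fun {x y} hxy => by
      apply Stmt0Aux.bef_connex n m δ
      intro hc
      apply hxy
      have h1 := ZMod.natCast_rightInverse (n := n) (x - p)
      have h2 := ZMod.natCast_rightInverse (n := n) (y - p)
      rw [hc, h2] at h1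
      exact (sub_left_inj.mp h1).symm)
  refine ⟨τ, ?_⟩
  intro a b hab hrev
  obtain ⟨hpr1, hpr2⟩ := hrev
  have hR1 : Stmt0Aux.bef n m δ ((a - p).val) ((b - p).val) := hτ _ _ hpr1
  have hR2 : Stmt0Aux.bef n m δ (((b + 1) - p).val) (((a + 1) - p).val) := hτ _ _ hpr2
  set i := (a - p).val with hi
  set i' := (b - p).val with hi'
  have hco : ∀ v : ZMod n, ((v + 1) - p).val = ((v - p).val + 1) % n := by
    intro v
    rw [show (v + 1) - p = (v - p) + 1 from by ring, ZMod.val_add, ZMod.val_one]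
  have hb1 : Stmt0Aux.bef n m δ ((i' + 1) % n) ((i + 1) % n) := by
    rw [hco b, hco a] at hR2
    exact hR2
  have hiv : i ≤ n - 1 := by have := ZMod.val_lt (a - p); omega
  have hi'v : i' ≤ n - 1 := by have := ZMod.val_lt (b - p); omega
  have hne : i ≠ i' := by
    intro hc
    apply hab
    have h1 := ZMod.natCast_rightInverse (n := n) (a - p)
    have h2 := ZMod.natCast_rightInverse (n := n) (b - p)
    rw [← hi] at h1
    rw [← hi'] at h2
    rw [hc, h2] at h1
    exact (sub_left_inj.mp h1).symm
  have hacoord : a = p + ((i : ℕ) : ZMod n) := by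
    have h1 := ZMod.natCast_rightInverse (n := n) (a - p)
    rw [← hi] at h1
    rw [h1]; ring
  have hbcoord : b = p + ((i' : ℕ) : ZMod n) := by
    have h2 := ZMod.natCast_rightInverse (n := n) (b - p)
    rw [← hi'] at h2
    rw [h2]; ring
  -- generic label computation: for i < i', with d = i' - i
  have hlabel : ∀ d : ℕ, d = i' - i → i < i' → ℓ a b = A d - A 1 + ((i : ℕ) : ZMod 3) := by
    intro d hd hii
    have hcast : ((i' : ℕ) : ZMod n) = ((i : ℕ) : ZMod n) + ((d : ℕ) : ZMod n) := by
      rw [← Nat.cast_add]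
      congr 1
      omega
    rw [hacoord, hbcoord, hcast, ← add_assoc]
    exact hLab i d (by omega) (by omega)
  -- main case analysis
  rcases le_or_gt i m with him | him
  · rcases le_or_gt i' m with him' | him'
    · -- both right of the minimum
      have hlt : i < i' := by
        unfold Stmt0Aux.bef at hR1
        rw [if_pos him, if_pos him'] at hR1
        exact hR1
      rw [Nat.mod_eq_of_lt (by omega), Nat.mod_eq_of_lt (by omega)] at hb1
      unfold Stmt0Aux.bef at hb1
      rcases le_or_gt (i' + 1) m with hi'1 | hi'1
      · rw [if_pos hi'1, if_pos (show i + 1 ≤ m by omega)] at hb1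
        exact absurd hb1 (by omega)
      · have hi'm : i' = m := by omega
        rw [if_neg (by omega), if_pos (show i + 1 ≤ m by omega)] at hb1
        rw [hi'm] at hb1
        rw [show (i + 1) + (n - (m + 1)) - 1 = i + m - 1 from by omega,
            show n - (m + 1) = m - 1 from by omega] at hb1
        have hNa := Stmt0Aux.NN_alt δ hnm hm (k := i + m - 1) (by omega) (by omega)
        rw [show n - 2 - (i + m - 1) = m - 1 - i from by omega] at hNa
        have hDle := Stmt0Aux.Dd_le δ hδ (m - 1 - i)
        have hDeq : Stmt0Aux.Dd δ (m - 1 - i) = m - 1 - i := by omega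
        rw [hlabel (i' - i) rfl hlt]
        have hDc := hDdcast (i' - i - 1) (by omega)
        rw [show i' - i - 1 + 1 = i' - i from by omega] at hDc
        rw [← hDc, show i' - i - 1 = m - 1 - i from by omega, hDeq,
            ← Nat.cast_add, show m - 1 - i + i = m - 1 from by omega, castm1]
    · -- a right, b left
      unfold Stmt0Aux.bef at hR1
      rw [if_pos him, if_neg (by omega)] at hR1
      rcases Nat.lt_or_ge i' (n - 1) with hi'top | hi'top
      · -- i' ≤ n - 2 : generic sign-change case
        rw [Nat.mod_eq_of_lt (by omega), Nat.mod_eq_of_lt (by omega)] at hb1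
        unfold Stmt0Aux.bef at hb1
        rw [if_neg (by omega)] at hb1
        rcases le_or_gt (i + 1) m with hi1 | hi1
        · rw [if_pos hi1] at hb1
          rw [show (i + 1) + (n - (i' + 1)) - 1 = i + (n - i') - 1 from by omega] at hb1
          rcases le_or_gt m (i + (n - i')) with hc | hc
          · -- difference d = i' - i has n - d ≤ m
            have hNa := Stmt0Aux.NN_alt δ hnm hm (k := i + (n - i') - 1) (by omega) (by omega)
            rw [show n - 2 - (i + (n - i') - 1) = (i' - i) - 1 from by omega] at hNa
            have hDeq : Stmt0Aux.Dd δ ((i' - i) - 1) = m - 1 - i := by omega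
            rw [hlabel (i' - i) rfl (by omega)]
            have hDc := hDdcast ((i' - i) - 1) (by omega)
            rw [show (i' - i) - 1 + 1 = i' - i from by omega] at hDc
            rw [← hDc, hDeq, ← Nat.cast_add,
              show m - 1 - i + i = m - 1 from by omega, castm1]
          · -- difference d = i' - i > m
            have hNN : Stmt0Aux.NN n m δ (i + (n - i') - 1)
                = Stmt0Aux.Dd δ (i + (n - i') - 1) := by
              unfold Stmt0Aux.NN
              rw [if_pos (by omega)]
            have hDeq : Stmt0Aux.Dd δ (i + (n - i') - 1) = n - i' - 1 := by omega
            rw [hlabel (i' - i) rfl (by omega)]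
            have hhigh := hAhigh (i' - i) (by omega) (by omega)
            rw [show n - (i' - i) = i + (n - i') from by omega] at hhigh
            have hDc := hDdcast (i + (n - i') - 1) (by omega)
            rw [show i + (n - i') - 1 + 1 = i + (n - i') from by omega] at hDc
            rw [hhigh]
            rw [show A (i + (n - i')) - ((i + (n - i') : ℕ) : ZMod 3) - A 1 + ((i : ℕ) : ZMod 3)
                = (A (i + (n - i')) - A 1) - ((i + (n - i') : ℕ) : ZMod 3) + ((i : ℕ) : ZMod 3)
                from by ring, ← hDc, hDeq]
            rw [show i + (n - i') = (n - i' - 1) + (i + 1) from by omega]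
            push_cast
            ring
        · -- i = m : impossible
          have hi_m : i = m := by omega
          rw [hi_m] at hR1
          have hNa := Stmt0Aux.NN_alt δ hnm hm (k := m + (n - i') - 1) (by omega) (by omega)
          exact absurd hR1 (by omega)
      · -- i' = n - 1, b = p - 1
        have hi'n : i' = n - 1 := by omega
        rw [hi'n, show i + (n - (n - 1)) - 1 = i from by omega] at hR1
        have him1 : i ≤ m - 1 := by
          by_contra h'
          have hi_m : i = m := by omega
          rw [hi_m] at hR1
          have hNa := Stmt0Aux.NN_alt δ hnm hm (k := m) (by omega) (by omega)
          exact absurd hR1 (by omega)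
        have hNN : Stmt0Aux.NN n m δ i = Stmt0Aux.Dd δ i := by
          unfold Stmt0Aux.NN
          rw [if_pos (by omega)]
        have hDeq : Stmt0Aux.Dd δ i = 0 := by omega
        rw [hlabel (i' - i) rfl (by omega)]
        have hhigh := hAhigh (i' - i) (by omega) (by omega)
        rw [show n - (i' - i) = i + 1 from by omega] at hhigh
        have hDc := hDdcast i (by omega)
        rw [hhigh]
        rw [show A (i + 1) - ((i + 1 : ℕ) : ZMod 3) - A 1 + ((i : ℕ) : ZMod 3)
            = (A (i + 1) - A 1) - ((i + 1 : ℕ) : ZMod 3) + ((i : ℕ) : ZMod 3)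
            from by ring, ← hDc, hDeq]
        push_cast
        ring
  · rcases le_or_gt i' m with him' | him'
    · -- a left, b right : no reversal possible
      exfalso
      unfold Stmt0Aux.bef at hR1
      rw [if_neg (by omega), if_pos him'] at hR1
      rcases Nat.lt_or_ge i (n - 1) with hitop | hitop
      · rw [Nat.mod_eq_of_lt (by omega), Nat.mod_eq_of_lt (by omega)] at hb1
        unfold Stmt0Aux.bef at hb1
        rcases le_or_gt (i' + 1) m with hi'1 | hi'1
        · rw [if_pos hi'1, if_neg (by omega)] at hb1
          rw [show (i' + 1) + (n - (i + 1)) - 1 = i' + (n - i) - 1 from by omega] at hb1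
          omega
        · have hi'm : i' = m := by omega
          rw [if_neg (by omega), if_neg (by omega)] at hb1
          omega
      · have hin : i = n - 1 := by omega
        rw [hin, show (n - 1 + 1) % n = 0 from by rw [show n - 1 + 1 = n from by omega, Nat.mod_self]] at hb1
        rcases le_or_gt (i' + 1) m with hi'1 | hi'1
        · rw [Nat.mod_eq_of_lt (by omega)] at hb1
          unfold Stmt0Aux.bef at hb1
          rw [if_pos hi'1, if_pos (by omega)] at hb1
          omega
        · have hi'm : i' = m := by omega
          rw [hi'm, Nat.mod_eq_of_lt (by omega)] at hb1
          unfold Stmt0Aux.bef at hb1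
          rw [if_neg (by omega), if_pos (by omega)] at hb1
          rw [show 0 + (n - (m + 1)) - 1 = m - 2 from by omega,
              show n - (m + 1) = m - 1 from by omega] at hb1
          have hNN : Stmt0Aux.NN n m δ (m - 2) = Stmt0Aux.Dd δ (m - 2) := by
            unfold Stmt0Aux.NN
            rw [if_pos (by omega)]
          have := Stmt0Aux.Dd_le δ hδ (m - 2)
          omega
    · -- both left : no reversal possible
      exfalso
      unfold Stmt0Aux.bef at hR1
      rw [if_neg (by omega), if_neg (by omega)] at hR1
      rcases Nat.lt_or_ge i (n - 1) with hitop | hitop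
      · rw [Nat.mod_eq_of_lt (by omega), Nat.mod_eq_of_lt (by omega)] at hb1
        unfold Stmt0Aux.bef at hb1
        rw [if_neg (by omega), if_neg (by omega)] at hb1
        omega
      · have hin : i = n - 1 := by omega
        rw [hin, show (n - 1 + 1) % n = 0 from by rw [show n - 1 + 1 = n from by omega, Nat.mod_self],
            Nat.mod_eq_of_lt (by omega)] at hb1
        unfold Stmt0Aux.bef at hb1
        rw [if_neg (by omega), if_pos (by omega)] at hb1
        rw [show 0 + (n - (i' + 1)) - 1 = n - i' - 2 from by omega] at hb1
        have := Stmt0Aux.NN_le δ hδ hnm hm (k := n - i' - 2) (by omega)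
        omega
end

section
/- Let n = 2m be a positive integer divisible by 6, and let a σ_n-partition of K_n have defining sequence a_1, …, a_m with a_1 = 0 such that for every j ∈ {1, …, m−1} either a_{j+1} = a_j or a_{j+1} ≡ a_j + 1 (mod 3). Then the σ_n-partition admits a standard transitive σ_n-orientation consistent with a bitonic ordering τ whose first element τ(1) (its unique local minimum) is the vertex 0 and whose last element τ(n) (its unique local maximum) is the vertex n/2. -/
namespace SP

/-- `M B m v` : the largest `i ≤ m` with `i - B i ≤ v`. -/
def M (B : ℕ → ℕ) (m v : ℕ) : ℕ := Nat.findGreatest (fun i => i - B i ≤ v) m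

/-- `N B m w` : the largest `i ≤ m` with `B i ≤ w`. -/
def N (B : ℕ → ℕ) (m w : ℕ) : ℕ := Nat.findGreatest (fun i => B i ≤ w) m

/-- The rank function on residues `t ∈ [0, 2m-1]`. -/
def kk (B : ℕ → ℕ) (m t : ℕ) : ℕ :=
  if t = 0 then 0
  else if t = m then 2*m - 1
  else if t < m then (if t + B m + 1 ≤ m then M B m t else 2*m - 1 - N B m (m - 1 - t))
  else (if 2*m - t ≤ B m then N B m (2*m - t - 1) else 2*m - 1 - M B m (t - m))

structure Good (B : ℕ → ℕ) : Prop where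
  one : B 1 = 0
  mono : ∀ i j, i ≤ j → B i ≤ B j
  step : ∀ i, B (i+1) ≤ B i + 1

variable {B : ℕ → ℕ} {m : ℕ}

lemma Good.zero (hG : Good B) : B 0 = 0 :=
  Nat.le_antisymm (hG.one ▸ hG.mono 0 1 (by omega)) (Nat.zero_le _)

lemma Good.lt (hG : Good B) : ∀ i, 1 ≤ i → B i < i := by
  intro i hi
  induction i with
  | zero => omega
  | succ j ih =>
    rcases Nat.eq_zero_or_pos j with h | h
    · subst h; simp [hG.one]
    · have := hG.step j; have := ih (by omega); omega

lemma Good.le (hG : Good B) : ∀ i, B i ≤ i := by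
  intro i; rcases Nat.eq_zero_or_pos i with h | h
  · simp [h, hG.zero]
  · exact le_of_lt (hG.lt i h)

lemma Good.diff (hG : Good B) : ∀ i j, i ≤ j → B j ≤ B i + (j - i) := by
  intro i j hij
  induction j with
  | zero => have : i = 0 := by omega
            subst this; simp
  | succ t ih =>
    rcases Nat.eq_or_lt_of_le hij with h | h
    · subst h; simp
    · have := hG.step t; have := ih (by omega); omega

lemma Good.subMono (hG : Good B) {i j : ℕ} (hij : i ≤ j) : i - B i ≤ j - B j := by
  have h1 := hG.diff i j hij
  have h2 := hG.le i
  have h3 := hG.le j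
  omega

/-- characterization of `M`. -/
lemma le_M_iff (hG : Good B) {i v : ℕ} (hi : i ≤ m) : i ≤ M B m v ↔ i - B i ≤ v := by
  constructor
  · intro h
    have hspec : M B m v - B (M B m v) ≤ v := by
      have := Nat.findGreatest_spec (P := fun i => i - B i ≤ v) (Nat.zero_le m)
        (by simp [hG.zero])
      exact this
    exact le_trans (hG.subMono h) hspec
  · intro h; exact Nat.le_findGreatest hi h

/-- characterization of `N`. -/
lemma le_N_iff (hG : Good B) {i w : ℕ} (hi : i ≤ m) : i ≤ N B m w ↔ B i ≤ w := by
  constructor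
  · intro h
    have hspec : B (N B m w) ≤ w := by
      have := Nat.findGreatest_spec (P := fun i => B i ≤ w) (Nat.zero_le m)
        (by simp [hG.zero])
      exact this
    exact le_trans (hG.mono _ _ h) hspec
  · intro h; exact Nat.le_findGreatest hi h

/-- Exactness package for `M`. -/
lemma M_spec (hG : Good B) {v : ℕ} (hv : 1 ≤ v) (hvm : v + B m + 1 ≤ m) :
    M B m v < m ∧ M B m v - B (M B m v) = v ∧ B (M B m v + 1) = B (M B m v)
    ∧ v ≤ M B m v := by
  have hvM : v ≤ M B m v := by
    rw [le_M_iff hG (by omega)]; omega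
  have hMm : M B m v < m := by
    by_contra h
    have : m ≤ M B m v := by omega
    rw [le_M_iff hG (le_refl m)] at this
    have := hG.le m; omega
  have hspec : M B m v - B (M B m v) ≤ v :=
    Nat.findGreatest_spec (P := fun i => i - B i ≤ v) (Nat.zero_le m) (by simp [hG.zero])
  have hle := hG.le (M B m v)
  have hstep := hG.step (M B m v)
  have hmono := hG.mono (M B m v) (M B m v + 1) (by omega)
  have hex : M B m v - B (M B m v) = v := by
    by_contra hne
    have hlt : M B m v - B (M B m v) < v := by omega
    have : M B m v + 1 ≤ M B m v :=
      Nat.le_findGreatest (m := M B m v + 1) (n := m)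
        (P := fun i => i - B i ≤ v) (by omega) (by show M B m v + 1 - B (M B m v + 1) ≤ v; omega)
    omega
  have hng : ¬ (M B m v + 1 - B (M B m v + 1) ≤ v) :=
    Nat.findGreatest_is_greatest (k := M B m v + 1) (P := fun i => i - B i ≤ v)
      (n := m) (Nat.lt_succ_self _) (by omega)
  exact ⟨hMm, hex, by omega, hvM⟩

/-- Exactness package for `N`. -/
lemma N_spec (hG : Good B) {w : ℕ} (hw : w + 1 ≤ B m) :
    N B m w < m ∧ B (N B m w) = w ∧ B (N B m w + 1) = w + 1 ∧ 1 ≤ N B m w := by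
  have hm1 : 1 ≤ m := by have := hG.le m; omega
  have h1 : 1 ≤ N B m w := by
    rw [le_N_iff hG hm1]; simp [hG.one]
  have hNm : N B m w < m := by
    by_contra h
    have : m ≤ N B m w := by omega
    rw [le_N_iff hG (le_refl m)] at this
    omega
  have hspec : B (N B m w) ≤ w :=
    Nat.findGreatest_spec (P := fun i => B i ≤ w) (Nat.zero_le m) (by simp [hG.zero])
  have hstep := hG.step (N B m w)
  have hex : B (N B m w) = w := by
    by_contra hne
    have : N B m w + 1 ≤ N B m w :=
      Nat.le_findGreatest (m := N B m w + 1) (n := m)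
        (P := fun i => B i ≤ w) (by omega) (by show B (N B m w + 1) ≤ w; omega)
    omega
  have hng : ¬ (B (N B m w + 1) ≤ w) :=
    Nat.findGreatest_is_greatest (k := N B m w + 1) (P := fun i => B i ≤ w)
      (n := m) (Nat.lt_succ_self _) (by omega)
  exact ⟨hNm, hex, by omega, h1⟩

lemma M_strictMono (hG : Good B) {v : ℕ} (hv : 1 ≤ v) (hvm : v + 1 + B m + 1 ≤ m) :
    M B m v < M B m (v + 1) := by
  obtain ⟨hMm, hex, _, _⟩ := M_spec (m := m) hG hv (by omega)
  have : M B m v + 1 ≤ M B m (v+1) := by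
    have hmono := hG.mono (M B m v) (M B m v + 1) (by omega)
    rw [le_M_iff hG (by omega)]
    omega
  omega

lemma N_strictMono (hG : Good B) {w : ℕ} (hw : w + 1 + 1 ≤ B m) :
    N B m w < N B m (w + 1) := by
  obtain ⟨hNm, hex, hs, _⟩ := N_spec (m := m) (w := w) hG (by omega)
  have : N B m w + 1 ≤ N B m (w+1) := by
    rw [le_N_iff hG (by omega)]
    omega
  omega


lemma locU1 (hG : Good B) {u : ℕ} (hu1 : 1 ≤ u) (hu2 : u < m) (hc : u + B m + 1 ≤ m) :
    kk B m u = M B m u ∧ u ≤ M B m u ∧ 1 ≤ M B m u ∧ M B m u < m := by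
  obtain ⟨h1, h2, _, h4⟩ := M_spec (m := m) hG hu1 (by omega)
  refine ⟨?_, h4, by omega, h1⟩
  unfold kk
  rw [if_neg (by omega), if_neg (by omega), if_pos hu2, if_pos (by omega)]

lemma locU2 (hG : Good B) {u : ℕ} (hu1 : 1 ≤ u) (hu2 : u < m) (hc : m ≤ u + B m) :
    kk B m u = 2*m - 1 - N B m (m-1-u) ∧ 1 ≤ N B m (m-1-u) ∧ N B m (m-1-u) < m ∧
    m ≤ kk B m u ∧ kk B m u ≤ 2*m - 2 := by
  obtain ⟨h1, _, _, h4⟩ := N_spec (m := m) (w := m-1-u) hG (by omega)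
  have hv : kk B m u = 2*m - 1 - N B m (m-1-u) := by
    unfold kk
    rw [if_neg (by omega), if_neg (by omega), if_pos hu2, if_neg (by omega)]
  exact ⟨hv, h4, h1, by omega, by omega⟩

lemma locD1 (hG : Good B) {k : ℕ} (hm1 : 1 ≤ m) (hk1 : 1 ≤ k) (hk2 : k ≤ B m) :
    kk B m (2*m - k) = N B m (k-1) ∧ 1 ≤ N B m (k-1) ∧ N B m (k-1) < m := by
  have hkm : k < m := lt_of_le_of_lt hk2 (hG.lt m hm1)
  obtain ⟨h1, _, _, h4⟩ := N_spec (m := m) (w := k-1) hG (by omega)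
  have hv : kk B m (2*m - k) = N B m (k-1) := by
    unfold kk
    rw [if_neg (by omega), if_neg (by omega), if_neg (by omega)]
    have h : 2*m - (2*m - k) = k := by omega
    rw [h, if_pos hk2]
  exact ⟨hv, h4, h1⟩

lemma locD2 (hG : Good B) {k : ℕ} (hk1 : B m + 1 ≤ k) (hk2 : k < m) :
    kk B m (2*m - k) = 2*m - 1 - M B m (m-k) ∧ 1 ≤ M B m (m-k) ∧ M B m (m-k) < m ∧
    m ≤ kk B m (2*m - k) ∧ kk B m (2*m - k) ≤ 2*m - 2 := by
  obtain ⟨h1, _, _, h4⟩ := M_spec (m := m) (v := m - k) hG (by omega) (by omega)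
  have hv : kk B m (2*m - k) = 2*m - 1 - M B m (m-k) := by
    unfold kk
    rw [if_neg (by omega), if_neg (by omega), if_neg (by omega)]
    have h : 2*m - (2*m - k) = k := by omega
    rw [h, if_neg (by omega)]
    have h2 : 2*m - k - m = m - k := by omega
    rw [h2]
  exact ⟨hv, by omega, h1, by omega, by omega⟩

lemma kk_zero : kk B m 0 = 0 := by unfold kk; simp

lemma kk_m (hm1 : 1 ≤ m) : kk B m m = 2*m - 1 := by
  unfold kk; rw [if_neg (by omega), if_pos rfl]

/-- every rank is at most `2m-1`, and only `m` attains it -/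
lemma kk_le (hG : Good B) (hm : 3 ≤ m) {t : ℕ} (ht : t ≤ 2*m - 1) :
    kk B m t ≤ 2*m - 1 ∧ (t ≠ m → kk B m t ≤ 2*m - 2) ∧ (1 ≤ t → 1 ≤ kk B m t) := by
  rcases Nat.eq_zero_or_pos t with h0 | h0
  · subst h0
    refine ⟨by rw [kk_zero]; omega, fun _ => by rw [kk_zero]; omega, fun h => absurd h (by omega)⟩
  rcases eq_or_ne t m with hm' | hm'
  · subst hm'; rw [kk_m (by omega)]; omega
  rcases lt_or_ge t m with hlt | hge
  · rcases le_or_gt (t + B m + 1) m with hc | hc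
    · obtain ⟨hv, _, h3, h4⟩ := locU1 (m := m) hG h0 hlt hc
      refine ⟨by omega, fun _ => by omega, fun _ => by omega⟩
    · obtain ⟨hv, _, _, h4, h5⟩ := locU2 (m := m) hG h0 hlt (by omega)
      refine ⟨by omega, fun _ => by omega, fun _ => by omega⟩
  · -- t > m
    set k := 2*m - t with hk
    have htk : t = 2*m - k := by omega
    have hk1 : 1 ≤ k := by omega
    have hkm : k < m := by omega
    rcases le_or_gt k (B m) with hc | hc
    · obtain ⟨hv, h2, h3⟩ := locD1 (m := m) hG (by omega) hk1 hc
      rw [htk]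
      refine ⟨by omega, fun _ => by omega, fun _ => by omega⟩
    · obtain ⟨hv, _, _, h4, h5⟩ := locD2 (m := m) hG (by omega) hkm
      rw [htk]
      refine ⟨by omega, fun _ => by omega, fun _ => by omega⟩

/-- ranks strictly increase along the up chain -/
lemma kk_up (hG : Good B) (hm : 3 ≤ m) {t : ℕ} (ht : t < m) :
    kk B m t < kk B m (t+1) := by
  rcases Nat.eq_zero_or_pos t with h0 | h0
  · subst h0
    rw [kk_zero]
    exact (kk_le hG hm (by omega)).2.2 (by omega)
  rcases eq_or_ne (t+1) m with hm' | hm'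
  · rw [hm', kk_m (by omega)]
    have := (kk_le (m := m) hG hm (show t ≤ 2*m - 1 by omega)).2.1 (by omega)
    omega
  -- 1 ≤ t, t + 1 ≤ m - 1
  have ht1 : t + 1 < m := by omega
  rcases le_or_gt (t + 1 + B m + 1) m with hc1 | hc1
  · -- both U1
    obtain ⟨hv1, _, _, _⟩ := locU1 (m := m) hG h0 ht (by omega)
    obtain ⟨hv2, _, _, _⟩ := locU1 (m := m) hG (by omega) ht1 hc1
    rw [hv1, hv2]
    exact M_strictMono (m := m) hG h0 (by omega)
  rcases le_or_gt (t + B m + 1) m with hc2 | hc2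
  · -- t U1, t+1 U2
    obtain ⟨hv1, _, _, h4⟩ := locU1 (m := m) hG h0 ht hc2
    obtain ⟨hv2, _, _, h5, _⟩ := locU2 (m := m) hG (by omega) ht1 (by omega)
    omega
  · -- both U2
    obtain ⟨hv1, _, hn1, _, _⟩ := locU2 (m := m) hG h0 ht (by omega)
    obtain ⟨hv2, _, hn2, _, _⟩ := locU2 (m := m) hG (by omega) ht1 (by omega)
    have hlt : N B m (m-1-(t+1)) < N B m (m-1-t) := by
      have h : m - 1 - t = (m - 1 - (t+1)) + 1 := by omega
      rw [h]
      exact N_strictMono (m := m) hG (by omega)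
    omega

/-- ranks strictly decrease along the down chain -/
lemma kk_down (hG : Good B) (hm : 3 ≤ m) {t : ℕ} (ht1 : m ≤ t) (ht2 : t ≤ 2*m - 2) :
    kk B m (t+1) < kk B m t := by
  rcases eq_or_ne t m with hm' | hm'
  · rw [hm', kk_m (by omega)]
    have := (kk_le (m := m) hG hm (show m + 1 ≤ 2*m - 1 by omega)).2.1 (by omega)
    omega
  set k := 2*m - t with hk
  have htk : t = 2*m - k := by omega
  have htk1 : t + 1 = 2*m - (k-1) := by omega
  have hk2 : 2 ≤ k := by omega
  have hkm : k < m := by omega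
  rcases le_or_gt k (B m) with hc | hc
  · -- k, k-1 both D1
    obtain ⟨hv1, _, _⟩ := locD1 (m := m) hG (by omega) (by omega) hc
    have hkle : k - 1 ≤ B m := by omega
    obtain ⟨hv2, _, _⟩ := locD1 (m := m) hG (by omega) (by omega) hkle
    rw [htk1, htk, hv1, hv2]
    have h2 : k - 1 - 1 = k - 2 := by omega
    have h : k - 1 = (k - 2) + 1 := by omega
    have hN := N_strictMono (m := m) hG (w := k - 2) (by omega)
    rw [h2, h]
    exact hN
  rcases eq_or_lt_of_le (show B m + 1 ≤ k by omega) with hc2 | hc2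
  · -- k D2, k-1 D1  (k = B m + 1)
    obtain ⟨hv1, _, _, h4, _⟩ := locD2 (m := m) hG (by omega) hkm
    have hkle : k - 1 ≤ B m := by omega
    obtain ⟨hv2, _, h3⟩ := locD1 (m := m) hG (by omega) (by omega) hkle
    rw [htk1, htk, hv2]
    omega
  · -- both D2
    obtain ⟨hv1, _, hM1, _, _⟩ := locD2 (m := m) hG (by omega) hkm
    have hkge : B m + 1 ≤ k - 1 := by omega
    obtain ⟨hv2, _, hM2, _, _⟩ := locD2 (m := m) hG hkge (by omega)
    rw [htk1, htk, hv1, hv2]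
    have h : m - (k-1) = (m - k) + 1 := by omega
    have hMlt := M_strictMono (m := m) hG (v := m - k) (by omega) (by omega)
    rw [h]
    omega

/-- U1 < D1 comparison -/
lemma CL1 (hG : Good B) (hm : 3 ≤ m) {u k : ℕ} (hu1 : 1 ≤ u) (hu2 : u + B m + 1 ≤ m)
    (hk1 : 1 ≤ k) (hk2 : k ≤ B m) :
    (M B m u < N B m (k-1) ↔ B (u+k) + 1 ≤ k) := by
  obtain ⟨hN1, hN2, _, hN4⟩ := N_spec (m := m) (w := k-1) hG (by omega)
  have hNk : k ≤ N B m (k-1) := by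
    have := hG.lt (N B m (k-1)) (by omega); omega
  have hukm : u + k ≤ m := by omega
  have hBle := hG.le (u+k)
  constructor
  · intro h
    have h2 : ¬ (N B m (k-1) ≤ M B m u) := by omega
    rw [le_M_iff hG (by omega)] at h2
    have h3 : u + k ≤ N B m (k-1) := by omega
    rw [le_N_iff hG (by omega)] at h3
    omega
  · intro h
    have h3 : u + k ≤ N B m (k-1) := by
      rw [le_N_iff hG (by omega)]; omega
    have h4 : ¬ (u + k ≤ M B m u) := by
      rw [le_M_iff hG (by omega)]
      omega
    omega

/-- D1 < U1 comparison -/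
lemma CL2 (hG : Good B) (hm : 3 ≤ m) {u k : ℕ} (hu1 : 1 ≤ u) (hu2 : u + B m + 1 ≤ m)
    (hk1 : 1 ≤ k) (hk2 : k ≤ B m) :
    (N B m (k-1) < M B m u ↔ k ≤ B (u+k)) := by
  obtain ⟨hM1, hM2, _, hM4⟩ := M_spec (m := m) (v := u) hG hu1 (by omega)
  have hukm : u + k ≤ m := by omega
  have hBle := hG.le (u+k)
  have hBleM := hG.le (M B m u)
  constructor
  · intro h
    have h2 : ¬ (M B m u ≤ N B m (k-1)) := by omega
    rw [le_N_iff hG (by omega)] at h2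
    have h3 : u + k ≤ M B m u := by omega
    rw [le_M_iff hG (by omega)] at h3
    omega
  · intro h
    have h3 : u + k ≤ M B m u := by
      rw [le_M_iff hG (by omega)]; omega
    have h4 : ¬ (u + k ≤ N B m (k-1)) := by
      rw [le_N_iff hG (by omega)]
      omega
    omega

/-- D2 < U2 comparison (inner):  `M (m-k) < N (m-1-u) ↔ B s + u + 1 ≤ m` -/
lemma CL3 (hG : Good B) (hm : 3 ≤ m) {u k : ℕ} (hu1 : 1 ≤ u) (hu2 : u + 1 ≤ m)
    (huS : m ≤ u + B m) (hk1 : B m + 1 ≤ k) (hk2 : k + 1 ≤ m) :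
    (M B m (m-k) < N B m (m-1-u) ↔ B (2*m - u - k) + u + 1 ≤ m) := by
  have hSm : B m < m := hG.lt m (by omega)
  have hs1 : m + 1 ≤ u + k := by omega
  have hs2 : 2*m - u - k ≤ m - 1 := by omega
  have hs3 : 2 ≤ 2*m - u - k := by omega
  obtain ⟨hN1, hN2, _, hN4⟩ := N_spec (m := m) (w := m-1-u) hG (by omega)
  have hBle := hG.le (2*m - u - k)
  constructor
  · intro h
    have h2 : ¬ (N B m (m-1-u) ≤ M B m (m-k)) := by omega
    rw [le_M_iff hG (by omega)] at h2
    have h3 : 2*m - u - k ≤ N B m (m-1-u) := by omega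
    rw [le_N_iff hG (by omega)] at h3
    omega
  · intro h
    have h3 : 2*m - u - k ≤ N B m (m-1-u) := by
      rw [le_N_iff hG (by omega)]; omega
    have h4 : ¬ (2*m - u - k ≤ M B m (m-k)) := by
      rw [le_M_iff hG (by omega)]
      omega
    omega

/-- U2 < D2 comparison (inner):  `N (m-1-u) < M (m-k) ↔ m ≤ B s + u` -/
lemma CL4 (hG : Good B) (hm : 3 ≤ m) {u k : ℕ} (hu1 : 1 ≤ u) (hu2 : u + 1 ≤ m)
    (huS : m ≤ u + B m) (hk1 : B m + 1 ≤ k) (hk2 : k + 1 ≤ m) :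
    (N B m (m-1-u) < M B m (m-k) ↔ m ≤ B (2*m - u - k) + u) := by
  have hSm : B m < m := hG.lt m (by omega)
  have hs1 : m + 1 ≤ u + k := by omega
  have hs2 : 2*m - u - k ≤ m - 1 := by omega
  have hs3 : 2 ≤ 2*m - u - k := by omega
  obtain ⟨hM1, hM2, _, hM4⟩ := M_spec (m := m) (v := m-k) hG (by omega) (by omega)
  have hBle := hG.le (2*m - u - k)
  have hBleM := hG.le (M B m (m-k))
  constructor
  · intro h
    have h2 : ¬ (M B m (m-k) ≤ N B m (m-1-u)) := by omega
    rw [le_N_iff hG (by omega)] at h2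
    have h3 : 2*m - u - k ≤ M B m (m-k) := by omega
    rw [le_M_iff hG (by omega)] at h3
    omega
  · intro h
    have h3 : 2*m - u - k ≤ M B m (m-k) := by
      rw [le_M_iff hG (by omega)]; omega
    have h4 : ¬ (2*m - u - k ≤ N B m (m-1-u)) := by
      rw [le_N_iff hG (by omega)]
      omega
    omega

lemma main1UB (hG : Good B) (hm : 3 ≤ m) {u k : ℕ} (hu : u + 1 ≤ m) (hk1 : 1 ≤ k)
    (hk2 : k ≤ m) (H1 : kk B m u < kk B m (2*m - k)) :
    (u + k ≤ m → B (u+k) + 1 ≤ k) ∧ (m + 1 ≤ u + k → B (2*m - u - k) ≤ m - 1 - u) := by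
  have hSm : B m < m := hG.lt m (by omega)
  rcases Nat.eq_zero_or_pos u with hu0 | hu0
  · exact ⟨fun h => by have := hG.lt (u+k) (by omega); omega, fun h => by omega⟩
  rcases eq_or_ne k m with hkm | hkm
  · refine ⟨fun h => by omega, fun h => ?_⟩
    have := hG.lt (2*m - u - k) (by omega)
    omega
  have hkm' : k < m := by omega
  rcases le_or_gt (u + B m + 1) m with hU | hU
  · rcases le_or_gt k (B m) with hD | hD
    · obtain ⟨hval, _, _, _⟩ := locU1 (m := m) hG hu0 (by omega) hU
      obtain ⟨hvalD, _, _⟩ := locD1 (m := m) hG (by omega) hk1 hD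
      rw [hval, hvalD] at H1
      have := (CL1 (m := m) hG hm hu0 hU hk1 hD).mp H1
      exact ⟨fun _ => by omega, fun h => by omega⟩
    · constructor
      · intro h; have := hG.mono (u+k) m h; omega
      · intro h; have := hG.mono (2*m-u-k) m (by omega); omega
  · rcases le_or_gt k (B m) with hD | hD
    · obtain ⟨_, _, _, hge, _⟩ := locU2 (m := m) hG hu0 (by omega) (by omega)
      obtain ⟨hvalD, _, hlt⟩ := locD1 (m := m) hG (by omega) hk1 hD
      rw [hvalD] at H1
      omega
    · obtain ⟨hval, hN1, hN2, _, _⟩ := locU2 (m := m) hG hu0 (by omega) (by omega)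
      obtain ⟨hvalD, hM1, hM2, _, _⟩ := locD2 (m := m) hG hD hkm'
      rw [hval, hvalD] at H1
      have hMN : M B m (m-k) < N B m (m-1-u) := by omega
      have hres := (CL3 (m := m) hG hm hu0 hu (by omega) hD (by omega)).mp hMN
      exact ⟨fun h => by omega, fun _ => by omega⟩

lemma main1LB (hG : Good B) (hm : 3 ≤ m) {u k : ℕ} (hu : u + 1 ≤ m) (hk1 : 1 ≤ k)
    (hk2 : k ≤ m) (H2 : kk B m ((2*m - k + 1) % (2*m)) < kk B m (u + 1)) :
    (u + k ≤ m → k ≤ B (u+k) + 1) ∧ (m + 1 ≤ u + k → m - 1 - u ≤ B (2*m - u - k)) := by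
  have hSm : B m < m := hG.lt m (by omega)
  rcases eq_or_ne k 1 with hk1' | hk1'
  · subst hk1'
    exact ⟨fun _ => by omega, fun h => by omega⟩
  have hmod : (2*m - k + 1) % (2*m) = 2*m - (k-1) := by
    rw [Nat.mod_eq_of_lt (by omega)]; omega
  rw [hmod] at H2
  rcases eq_or_ne (u+1) m with hu1' | hu1'
  · exact ⟨fun h => by omega, fun h => by omega⟩
  have hu2 : u + 2 ≤ m := by omega
  rcases le_or_gt (u + 1 + B m + 1) m with hU | hU
  · rcases le_or_gt (k-1) (B m) with hD | hD
    · obtain ⟨hval, _, _, _⟩ := locU1 (m := m) hG (by omega) (by omega) hU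
      obtain ⟨hvalD, _, _⟩ := locD1 (m := m) hG (by omega) (by omega) hD
      rw [hval, hvalD] at H2
      have hres := (CL2 (m := m) hG hm (u := u+1) (k := k-1) (by omega) hU (by omega) hD).mp H2
      have he : u + 1 + (k-1) = u + k := by omega
      rw [he] at hres
      exact ⟨fun _ => by omega, fun h => by omega⟩
    · obtain ⟨hval, _, _, hlt⟩ := locU1 (m := m) hG (by omega) (by omega) hU
      obtain ⟨_, _, _, hge, _⟩ := locD2 (m := m) (k := k-1) hG (by omega) (show k - 1 < m by omega)
      rw [hval] at H2
      omega
  · rcases le_or_gt (k-1) (B m) with hD | hD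
    · constructor
      · intro h
        have := hG.diff (u+k) m h
        omega
      · intro h
        have := hG.diff (2*m-u-k) m (by omega)
        omega
    · obtain ⟨hval, hN1, hN2, _, _⟩ := locU2 (m := m) (u := u+1) hG (by omega) (by omega) (by omega)
      obtain ⟨hvalD, hM1, hM2, _, _⟩ := locD2 (m := m) (k := k-1) hG hD (by omega)
      rw [hval, hvalD] at H2
      have hNM : N B m (m-1-(u+1)) < M B m (m-(k-1)) := by omega
      have hres := (CL4 (m := m) hG hm (u := u+1) (k := k-1) (by omega) (by omega) (by omega) hD
        (by omega)).mp hNM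
      have he : 2*m - (u+1) - (k-1) = 2*m - u - k := by omega
      rw [he] at hres
      exact ⟨fun h => by omega, fun _ => by omega⟩

/-- the key fact extracted from a reversal with `a` on the up side. -/
lemma main1 (hG : Good B) (hm : 3 ≤ m) {u k : ℕ} (hu : u + 1 ≤ m) (hk1 : 1 ≤ k)
    (hk2 : k ≤ m) (H1 : kk B m u < kk B m (2*m - k))
    (H2 : kk B m ((2*m - k + 1) % (2*m)) < kk B m (u + 1)) :
    (u + k ≤ m → B (u+k) + 1 = k) ∧ (m + 1 ≤ u + k → B (2*m - u - k) = m - 1 - u) := by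
  obtain ⟨h1, h2⟩ := main1UB hG hm hu hk1 hk2 H1
  obtain ⟨h3, h4⟩ := main1LB hG hm hu hk1 hk2 H2
  exact ⟨fun h => by have := h1 h; have := h3 h; omega,
         fun h => by have := h2 h; have := h4 h; omega⟩

/-- no reversal can have `a` on the down side and `b` on the up side. -/
lemma main2 (hG : Good B) (hm : 3 ≤ m) {u k : ℕ} (hu : u + 1 ≤ m) (hk1 : 1 ≤ k)
    (hk2 : k ≤ m) (H1 : kk B m (2*m - k) < kk B m u)
    (H2 : kk B m (u + 1) < kk B m ((2*m - k + 1) % (2*m))) : False := by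
  have hSm : B m < m := hG.lt m (by omega)
  rcases eq_or_ne k m with hkm | hkm
  · rw [show 2*m - k = m by omega, kk_m (by omega)] at H1
    have := (kk_le (m := m) hG hm (show u ≤ 2*m - 1 by omega)).1
    omega
  rcases eq_or_ne k 1 with hk1' | hk1'
  · subst hk1'
    rw [show 2*m - 1 + 1 = 2*m by omega, Nat.mod_self, kk_zero] at H2
    omega
  have hmod : (2*m - k + 1) % (2*m) = 2*m - (k-1) := by
    rw [Nat.mod_eq_of_lt (by omega)]; omega
  rw [hmod] at H2
  rcases Nat.eq_zero_or_pos u with hu0 | hu0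
  · subst hu0
    rw [kk_zero] at H1
    omega
  rcases eq_or_ne (u+1) m with hu1' | hu1'
  · rw [hu1', kk_m (by omega)] at H2
    have := (kk_le (m := m) hG hm (show 2*m - (k-1) ≤ 2*m - 1 by omega)).1
    omega
  have hu2 : u + 2 ≤ m := by omega
  rcases le_or_gt (u + B m + 1) m with hU | hU
  · rcases le_or_gt k (B m) with hD | hD
    · obtain ⟨hval, _, _, _⟩ := locU1 (m := m) hG hu0 (by omega) hU
      obtain ⟨hvalD, _, _⟩ := locD1 (m := m) hG (by omega) hk1 hD
      rw [hval, hvalD] at H1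
      have hres := (CL2 (m := m) hG hm hu0 hU hk1 hD).mp H1
      rcases le_or_gt (u + 1 + B m + 1) m with hU' | hU'
      · obtain ⟨hval', _, _, _⟩ := locU1 (m := m) hG (by omega) (by omega) hU'
        obtain ⟨hvalD', _, _⟩ := locD1 (m := m) hG (by omega) (by omega) (show k - 1 ≤ B m by omega)
        rw [hval', hvalD'] at H2
        have hres2 := (CL1 (m := m) hG hm (u := u+1) (k := k-1) (by omega) hU' (by omega)
          (by omega)).mp H2
        have he : u + 1 + (k-1) = u + k := by omega
        rw [he] at hres2
        omega
      · obtain ⟨_, _, _, hge, _⟩ := locU2 (m := m) (u := u+1) hG (by omega) (by omega) (by omega)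
        obtain ⟨hvalD', _, hlt'⟩ := locD1 (m := m) hG (by omega) (by omega) (show k - 1 ≤ B m by omega)
        rw [hvalD'] at H2
        omega
    · obtain ⟨hval, _, _, hlt⟩ := locU1 (m := m) hG hu0 (by omega) hU
      obtain ⟨_, _, _, hge, _⟩ := locD2 (m := m) (k := k) hG (by omega) (by omega)
      rw [hval] at H1
      omega
  · rcases le_or_gt (k-1) (B m) with hD' | hD'
    · obtain ⟨_, _, _, hge, _⟩ := locU2 (m := m) (u := u+1) hG (by omega) (by omega) (by omega)
      obtain ⟨hvalD', _, hlt'⟩ := locD1 (m := m) hG (by omega) (by omega) hD'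
      rw [hvalD'] at H2
      omega
    · obtain ⟨hval, hN1, hN2, _, _⟩ := locU2 (m := m) hG hu0 (by omega) (by omega)
      obtain ⟨hvalD, hM1, hM2, _, _⟩ := locD2 (m := m) (k := k) hG (by omega) (by omega)
      rw [hval, hvalD] at H1
      have hNM : N B m (m-1-u) < M B m (m-k) := by omega
      have hres := (CL4 (m := m) hG hm hu0 (by omega) (by omega) (by omega) (by omega)).mp hNM
      obtain ⟨hval', hN1', hN2', _, _⟩ := locU2 (m := m) (u := u+1) hG (by omega) (by omega) (by omega)
      obtain ⟨hvalD', hM1', hM2', _, _⟩ := locD2 (m := m) hG hD' (by omega)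
      rw [hval', hvalD'] at H2
      have hMN : M B m (m-(k-1)) < N B m (m-1-(u+1)) := by omega
      have hres2 := (CL3 (m := m) hG hm (u := u+1) (k := k-1) (by omega) (by omega) (by omega)
        hD' (by omega)).mp hMN
      have he : 2*m - (u+1) - (k-1) = 2*m - u - k := by omega
      rw [he] at hres2
      omega

lemma kk_up_lt (hG : Good B) (hm : 3 ≤ m) {s t : ℕ} (hst : s < t) (ht : t ≤ m) :
    kk B m s < kk B m t := by
  induction t with
  | zero => omega
  | succ r ih =>
    rcases eq_or_ne s r with h | h
    · rw [h]; exact kk_up hG hm (by omega)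
    · exact lt_trans (ih (by omega) (by omega)) (kk_up hG hm (by omega))

lemma kk_down_lt (hG : Good B) (hm : 3 ≤ m) {s t : ℕ} (hs : m ≤ s) (hst : s < t)
    (ht : t ≤ 2*m - 1) : kk B m t < kk B m s := by
  induction t with
  | zero => omega
  | succ r ih =>
    rcases eq_or_ne s r with h | h
    · rw [h]; exact kk_down hG hm (by omega) (by omega)
    · exact lt_trans (kk_down hG hm (by omega) (by omega)) (ih (by omega) (by omega))

lemma kk_inj_mixed (hG : Good B) (hm : 3 ≤ m) {s t : ℕ} (hs : s < m) (ht1 : m < t)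
    (ht2 : t ≤ 2*m - 1) : kk B m s ≠ kk B m t := by
  intro h
  rcases Nat.eq_zero_or_pos s with hs0 | hs0
  · rw [hs0, kk_zero] at h
    have := (kk_le (m := m) hG hm ht2).2.2 (by omega)
    omega
  set k := 2*m - t with hkdef
  have htk : t = 2*m - k := by omega
  have hk1 : 1 ≤ k := by omega
  have hkm : k < m := by omega
  rw [htk] at h
  rcases le_or_gt (s + B m + 1) m with hU | hU
  · rcases le_or_gt k (B m) with hD | hD
    · obtain ⟨hval, _, _, _⟩ := locU1 (m := m) hG hs0 hs hU
      obtain ⟨hvalD, _, _⟩ := locD1 (m := m) hG (by omega) hk1 hD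
      rw [hval, hvalD] at h
      obtain ⟨_, _, hdM, _⟩ := M_spec (m := m) (v := s) hG hs0 (by omega)
      obtain ⟨_, hN2, hdN, _⟩ := N_spec (m := m) (w := k-1) hG (by omega)
      rw [h] at hdM
      omega
    · obtain ⟨hval, _, _, hlt⟩ := locU1 (m := m) hG hs0 hs hU
      obtain ⟨_, _, _, hge, _⟩ := locD2 (m := m) (k := k) hG (by omega) hkm
      rw [hval] at h
      omega
  · rcases le_or_gt k (B m) with hD | hD
    · obtain ⟨_, _, _, hge, _⟩ := locU2 (m := m) hG hs0 hs (by omega)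
      obtain ⟨hvalD, _, hlt⟩ := locD1 (m := m) hG (by omega) hk1 hD
      rw [hvalD] at h
      omega
    · obtain ⟨hval, hN1, hN2, _, _⟩ := locU2 (m := m) hG hs0 hs (by omega)
      obtain ⟨hvalD, hM1, hM2, _, _⟩ := locD2 (m := m) (k := k) hG (by omega) hkm
      rw [hval, hvalD] at h
      have heq : N B m (m-1-s) = M B m (m-k) := by omega
      obtain ⟨_, _, hdM, _⟩ := M_spec (m := m) (v := m-k) hG (by omega) (by omega)
      obtain ⟨_, hN2', hdN, _⟩ := N_spec (m := m) (w := m-1-s) hG (by omega)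
      rw [← heq] at hdM
      omega

lemma kk_inj (hG : Good B) (hm : 3 ≤ m) {s t : ℕ} (hs : s ≤ 2*m - 1) (ht : t ≤ 2*m - 1)
    (h : kk B m s = kk B m t) : s = t := by
  by_contra hne
  rcases le_or_gt s m with hsm | hsm
  · rcases le_or_gt t m with htm | htm
    · rcases lt_or_gt_of_ne hne with hlt | hlt
      · exact absurd h (Nat.ne_of_lt (kk_up_lt hG hm hlt htm))
      · exact absurd h.symm (Nat.ne_of_lt (kk_up_lt hG hm hlt hsm))
    · have hsm' : s < m := by
        rcases eq_or_ne s m with he | he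
        · rw [he, kk_m (by omega)] at h
          have := (kk_le (m := m) hG hm ht).2.1 (by omega)
          omega
        · omega
      exact absurd h (kk_inj_mixed hG hm hsm' htm ht)
  · rcases le_or_gt t m with htm | htm
    · have htm' : t < m := by
        rcases eq_or_ne t m with he | he
        · rw [he, kk_m (by omega)] at h
          have := (kk_le (m := m) hG hm hs).2.1 (by omega)
          omega
        · omega
      exact absurd h.symm (kk_inj_mixed hG hm htm' hsm hs)
    · rcases lt_or_gt_of_ne hne with hlt | hlt
      · exact absurd h.symm (Nat.ne_of_lt (kk_down_lt hG hm (by omega) hlt ht))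
      · exact absurd h (Nat.ne_of_lt (kk_down_lt hG hm (by omega) hlt hs))

end SP

/-- Under the hypotheses of Theorem 2 (with a_1 = 0), the partition
admits a standard transitive σ_n-orientation whose bitonic ordering starts at
vertex 0 (the unique local minimum) and ends at vertex n/2 (the unique local
maximum). -/
theorem stmt_1 (n m : ℕ) (hn : 0 < n) (hnm : n = 2 * m) (h6 : 6 ∣ n)
    (ℓ : ZMod n → ZMod n → ZMod 3) (hP : IsSigmaPartition n 3 ℓ)
    (ha1 : ℓ 0 1 = 0)
    (hseq : ∀ j : ℕ, 1 ≤ j → j ≤ m - 1 →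
      ℓ 0 ((j + 1 : ℕ) : ZMod n) = ℓ 0 ((j : ℕ) : ZMod n) ∨
      ℓ 0 ((j + 1 : ℕ) : ZMod n) = ℓ 0 ((j : ℕ) : ZMod n) + 1) :
    ∃ τ : Fin n ≃ ZMod n, IsTransSigmaOrientation n 3 ℓ τ ∧ Bitonic τ ∧
      τ ⟨0, hn⟩ = 0 ∧ CycLocalMin τ (τ ⟨0, hn⟩) ∧
      τ ⟨n - 1, Nat.sub_lt hn one_pos⟩ = ((n / 2 : ℕ) : ZMod n) ∧
      CycLocalMax τ (τ ⟨n - 1, Nat.sub_lt hn one_pos⟩) := by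
  subst hnm
  have hm3 : 3 ≤ m := by omega
  have h3m : 3 ∣ m := by omega
  have h3n : (3 : ℕ) ∣ 2 * m := by omega
  haveI : NeZero (2 * m) := ⟨by omega⟩
  -- the integer lift of the defining sequence
  set B : ℕ → ℕ := fun i => ∑ t ∈ Finset.Ico 1 i,
      (if ℓ 0 ((t + 1 : ℕ) : ZMod (2*m)) = ℓ 0 ((t : ℕ) : ZMod (2*m)) + 1 then 1 else 0) with hBdef
  have hG : SP.Good B := by
    constructor
    · simp [hBdef]
    · intro i j hij
      apply Finset.sum_le_sum_of_subset
      exact Finset.Ico_subset_Ico le_rfl hij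
    · intro i
      rcases Nat.eq_zero_or_pos i with h0 | h0
      · subst h0; simp [hBdef]
      · simp only [hBdef]
        rw [Finset.sum_Ico_succ_top (by omega : 1 ≤ i)]
        split <;> omega
  have hBsucc : ∀ i, 1 ≤ i → B (i+1) = B i +
      (if ℓ 0 ((i + 1 : ℕ) : ZMod (2*m)) = ℓ 0 ((i : ℕ) : ZMod (2*m)) + 1 then 1 else 0) := by
    intro i hi
    simp only [hBdef]
    exact Finset.sum_Ico_succ_top (by omega : 1 ≤ i) _
  have hBval : ∀ i, 1 ≤ i → i ≤ m → ((B i : ℕ) : ZMod 3) = ℓ 0 ((i : ℕ) : ZMod (2*m)) := by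
    intro i hi
    induction i, hi using Nat.le_induction with
    | base =>
      intro _
      rw [hG.one]; rw [show ((1:ℕ) : ZMod (2*m)) = 1 by push_cast; ring]; simpa using ha1.symm
    | succ i hi1 ih =>
      intro him
      rcases hseq i hi1 (by omega) with hH | hS
      · have hcond : ¬ (ℓ 0 ((i + 1 : ℕ) : ZMod (2*m)) = ℓ 0 ((i : ℕ) : ZMod (2*m)) + 1) := by
          rw [hH]
          intro hc
          have : (1 : ZMod 3) = 0 := by
            have := left_eq_add.mp hc
            exact this
          simp at this
        rw [hBsucc i hi1, if_neg hcond, Nat.add_zero, ih (by omega), hH]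
      · rw [hBsucc i hi1, if_pos hS, hS]
        push_cast
        rw [ih (by omega)]
  -- the ordering
  have hval_le : ∀ v : ZMod (2*m), v.val ≤ 2*m - 1 := fun v => by
    have := ZMod.val_lt v; omega
  have hKlt : ∀ v : ZMod (2*m), SP.kk B m v.val < 2*m := fun v => by
    have := (SP.kk_le (m := m) hG hm3 (hval_le v)).1; omega
  set Kf : ZMod (2*m) → Fin (2*m) := fun v => ⟨SP.kk B m v.val, hKlt v⟩ with hKf
  have hKbij : Function.Bijective Kf := by
    rw [Fintype.bijective_iff_injective_and_card]
    constructor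
    · intro a b hab
      have h : SP.kk B m a.val = SP.kk B m b.val := congrArg Fin.val hab
      exact ZMod.val_injective (2*m) (SP.kk_inj hG hm3 (hval_le a) (hval_le b) h)
    · simp
  set τ : Fin (2*m) ≃ ZMod (2*m) := (Equiv.ofBijective Kf hKbij).symm with hτ
  have hsymm : ∀ v : ZMod (2*m), τ.symm v = Kf v := fun v => by
    rw [hτ, Equiv.symm_symm]; rfl
  have hPrec : ∀ a b : ZMod (2*m), Precedes τ a b ↔ SP.kk B m a.val < SP.kk B m b.val := by
    intro a b
    unfold Precedes
    rw [hsymm, hsymm]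
    exact Iff.rfl
  -- val arithmetic
  have hvalsucc : ∀ v : ZMod (2*m), (v + 1).val = if v.val = 2*m - 1 then 0 else v.val + 1 := by
    intro v
    have h1 : ((v.val + 1 : ℕ) : ZMod (2*m)) = v + 1 := by
      push_cast
      rw [ZMod.natCast_rightInverse v]
    rw [← h1, ZMod.val_natCast]
    split
    · next h => rw [show v.val + 1 = 2*m from by omega, Nat.mod_self]
    · next h =>
        apply Nat.mod_eq_of_lt
        have := ZMod.val_lt v; omega
  have hvalpred : ∀ v : ZMod (2*m), (v - 1).val = if v.val = 0 then 2*m - 1 else v.val - 1 := by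
    intro v
    have h := hvalsucc (v - 1)
    rw [sub_add_cancel] at h
    have hlt := ZMod.val_lt (v - 1)
    split_ifs at h with hc
    · rw [if_pos (by omega : v.val = 0)]
      exact hc
    · rw [if_neg (by omega : ¬ v.val = 0)]
      omega
  -- label machinery
  have hshift : ∀ (x y : ZMod (2*m)), x ≠ y → ∀ t : ℕ,
      ℓ (x + (t : ℕ)) (y + (t : ℕ)) = ℓ x y + ((t : ℕ) : ZMod 3) := by
    intro x y hxy t
    induction t with
    | zero => simp
    | succ r ih =>
      have h1 : ((r + 1 : ℕ) : ZMod (2*m)) = ((r : ℕ) : ZMod (2*m)) + 1 := by push_cast; ring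
      have h2 : ((r + 1 : ℕ) : ZMod 3) = ((r : ℕ) : ZMod 3) + 1 := by push_cast; ring
      rw [h1, h2, ← add_assoc, ← add_assoc, ← add_assoc]
      rw [hP.2 (x + (r : ℕ)) (y + (r : ℕ)) (by
        intro hc
        exact hxy (by
          have := add_right_cancel hc
          exact this))]
      rw [ih]
  have hl0 : ∀ a b : ZMod (2*m), a ≠ b → ℓ a b = ℓ 0 (b - a) + ((a.val : ℕ) : ZMod 3) := by
    intro a b hab
    have hca : ((a.val : ℕ) : ZMod (2*m)) = a := ZMod.natCast_rightInverse a
    have h := hshift 0 (b - a) (fun hc => hab (sub_eq_zero.mp hc.symm).symm) a.val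
    rw [zero_add, hca, sub_add_cancel] at h
    exact h
  have hcsym : ∀ e : ℕ, 1 ≤ e → e < 2*m →
      ℓ 0 ((2*m - e : ℕ) : ZMod (2*m)) = ℓ 0 ((e : ℕ) : ZMod (2*m)) - ((e : ℕ) : ZMod 3) := by
    intro e he1 he2
    have hne : (0 : ZMod (2*m)) ≠ ((2*m - e : ℕ) : ZMod (2*m)) := by
      intro hc
      have hv : ((2*m - e : ℕ) : ZMod (2*m)).val = 2*m - e := ZMod.val_cast_of_lt (by omega)
      rw [← hc, ZMod.val_zero] at hv
      omega
    have h := hshift 0 ((2*m - e : ℕ) : ZMod (2*m)) hne e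
    rw [zero_add] at h
    have hsum : ((2*m - e : ℕ) : ZMod (2*m)) + ((e : ℕ) : ZMod (2*m)) = 0 := by
      rw [← Nat.cast_add, show 2*m - e + e = 2*m from by omega]
      exact ZMod.natCast_self (2*m)
    rw [hsum, hP.1 _ 0] at h
    exact eq_sub_of_add_eq h.symm
  -- the label of a reversed edge
  have hlab : ∀ u k : ℕ, u + 1 ≤ m → 1 ≤ k → k ≤ m →
      (u + k ≤ m → B (u+k) + 1 = k) → (m + 1 ≤ u + k → B (2*m - u - k) = m - 1 - u) →
      ℓ ((u : ℕ) : ZMod (2*m)) ((2*m - k : ℕ) : ZMod (2*m)) = -1 := by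
    intro u k hu hk1 hk2 hc1 hc2
    have hvu : ((u : ℕ) : ZMod (2*m)).val = u := ZMod.val_cast_of_lt (by omega)
    have hne : ((u : ℕ) : ZMod (2*m)) ≠ ((2*m - k : ℕ) : ZMod (2*m)) := by
      intro hc
      have h2 : ((2*m - k : ℕ) : ZMod (2*m)).val = 2*m - k := ZMod.val_cast_of_lt (by omega)
      rw [hc, h2] at hvu
      omega
    have hsub : ((2*m - k : ℕ) : ZMod (2*m)) - ((u : ℕ) : ZMod (2*m)) = ((2*m - (u+k) : ℕ) : ZMod (2*m)) := by
      rw [show 2*m - (u+k) = 2*m - k - u from by omega, Nat.cast_sub (by omega : u ≤ 2*m - k)]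
    rw [hl0 _ _ hne, hsub, hvu, hcsym (u + k) (by omega) (by omega)]
    rcases le_or_gt (u + k) m with hem | hem
    · rw [← hBval (u + k) (by omega) hem]
      have hc := hc1 (by omega)
      have h5 : ((B (u+k) + u + 1 : ℕ) : ZMod 3) = ((u + k : ℕ) : ZMod 3) := by
        rw [show B (u+k) + u + 1 = u + k from by omega]
      push_cast at h5 ⊢
      linear_combination h5
    · have he3 : ((u + k : ℕ) : ZMod (2*m)) = ((2*m - (2*m - (u+k)) : ℕ) : ZMod (2*m)) := by
        rw [show 2*m - (2*m - (u+k)) = u + k from by omega]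
      rw [he3, hcsym (2*m - (u+k)) (by omega) (by omega),
        ← hBval (2*m - (u+k)) (by omega) (by omega)]
      have hc := hc2 (by omega)
      rw [show 2*m - u - k = 2*m - (u+k) from by omega] at hc
      have h6 : ((2*m - (u+k) + (u+k) : ℕ) : ZMod 3) = ((0 : ℕ) : ZMod 3) := by
        rw [show 2*m - (u+k) + (u+k) = 2*m from by omega]
        exact (ZMod.natCast_eq_zero_iff (2*m) 3).mpr h3n
      have h7 : ((m : ℕ) : ZMod 3) = 0 := (ZMod.natCast_eq_zero_iff m 3).mpr h3m
      have h8 : ((B (2*m - (u+k)) + u + 1 : ℕ) : ZMod 3) = ((m : ℕ) : ZMod 3) := by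
        rw [show B (2*m - (u+k)) + u + 1 = m from by omega]
      push_cast at h6 h8 ⊢
      rw [h7] at h8
      linear_combination h8 - h6
  -- the orientation property
  have hOrient : IsTransSigmaOrientation (2*m) 3 ℓ τ := by
    intro a b hab hrev
    obtain ⟨h1, h2⟩ := hrev
    rw [hPrec] at h1 h2
    have hva := ZMod.val_lt a
    have hvb := ZMod.val_lt b
    have hvne : a.val ≠ b.val := fun hc => hab (ZMod.val_injective (2*m) hc)
    rcases lt_or_ge a.val m with ham | ham
    · rcases lt_or_ge b.val m with hbm | hbm
      · have hsa : (a + 1).val = a.val + 1 := by rw [hvalsucc, if_neg (by omega)]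
        have hsb : (b + 1).val = b.val + 1 := by rw [hvalsucc, if_neg (by omega)]
        rw [hsa, hsb] at h2
        rcases lt_trichotomy a.val b.val with hlt | heq | hgt
        · have := SP.kk_up_lt hG hm3 (show a.val + 1 < b.val + 1 by omega) (by omega)
          omega
        · exact absurd heq hvne
        · have := SP.kk_up_lt hG hm3 hgt (by omega)
          omega
      · set u := a.val with hudef
        set k := 2*m - b.val with hkdef
        have hbv : b.val = 2*m - k := by omega
        have hsa : (a + 1).val = u + 1 := by rw [hvalsucc, if_neg (by omega)]
        have hsb : (b + 1).val = (2*m - k + 1) % (2*m) := by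
          rw [hvalsucc]
          split_ifs with hc
          · rw [show 2*m - k + 1 = 2*m from by omega, Nat.mod_self]
          · rw [Nat.mod_eq_of_lt (by omega)]
            omega
        rw [hbv] at h1
        rw [hsa, hsb] at h2
        obtain ⟨hc1, hc2⟩ := SP.main1 hG hm3 (show u + 1 ≤ m by omega) (by omega)
          (by omega) h1 h2
        have hres := hlab u k (by omega) (by omega) (by omega) hc1 hc2
        have ha' : ((u : ℕ) : ZMod (2*m)) = a := ZMod.natCast_rightInverse a
        have hb' : ((2*m - k : ℕ) : ZMod (2*m)) = b := by
          rw [← hbv]; exact ZMod.natCast_rightInverse b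
        rw [ha', hb'] at hres
        exact hres
    · rcases lt_or_ge b.val m with hbm | hbm
      · exfalso
        set u := b.val with hudef
        set k := 2*m - a.val with hkdef
        have hav : a.val = 2*m - k := by omega
        have hsb : (b + 1).val = u + 1 := by rw [hvalsucc, if_neg (by omega)]
        have hsa : (a + 1).val = (2*m - k + 1) % (2*m) := by
          rw [hvalsucc]
          split_ifs with hc
          · rw [show 2*m - k + 1 = 2*m from by omega, Nat.mod_self]
          · rw [Nat.mod_eq_of_lt (by omega)]
            omega
        rw [hav] at h1
        rw [hsa, hsb] at h2
        exact SP.main2 hG hm3 (show u + 1 ≤ m by omega) (by omega) (by omega) h1 h2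
      · rcases lt_trichotomy a.val b.val with hlt | heq | hgt
        · have := SP.kk_down_lt hG hm3 (show m ≤ a.val by omega) hlt (by omega)
          omega
        · exact absurd heq hvne
        · rcases eq_or_ne a.val (2*m - 1) with hc | hc
          · have hsa : (a + 1).val = 0 := by rw [hvalsucc, if_pos (by omega)]
            rw [hsa, SP.kk_zero] at h2
            omega
          · have hsa : (a + 1).val = a.val + 1 := by rw [hvalsucc, if_neg (by omega)]
            have hsb : (b + 1).val = b.val + 1 := by rw [hvalsucc, if_neg (by omega)]
            rw [hsa, hsb] at h2
            have := SP.kk_down_lt hG hm3 (show m ≤ b.val + 1 by omega)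
              (show b.val + 1 < a.val + 1 by omega) (by omega)
            omega
  -- local extremes
  have hval0 : (0 : ZMod (2*m)).val = 0 := ZMod.val_zero
  have hvalm : (((m : ℕ)) : ZMod (2*m)).val = m := ZMod.val_cast_of_lt (by omega)
  have hmin0 : CycLocalMin τ 0 := by
    constructor
    · rw [hPrec, hvalpred, hval0, if_pos rfl, SP.kk_zero]
      exact (SP.kk_le (m := m) hG hm3 (le_refl (2*m - 1))).2.2 (by omega)
    · rw [hPrec, hvalsucc, hval0, if_neg (by omega), SP.kk_zero]
      exact (SP.kk_le (m := m) hG hm3 (show 0 + 1 ≤ 2*m - 1 by omega)).2.2 (by omega)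
  have hmaxm : CycLocalMax τ ((m : ℕ) : ZMod (2*m)) := by
    constructor
    · rw [hPrec, hvalpred, hvalm, if_neg (by omega), SP.kk_m (by omega)]
      have := (SP.kk_le (m := m) hG hm3 (show m - 1 ≤ 2*m - 1 by omega)).2.1 (by omega)
      omega
    · rw [hPrec, hvalsucc, hvalm, if_neg (by omega), SP.kk_m (by omega)]
      have := (SP.kk_le (m := m) hG hm3 (show m + 1 ≤ 2*m - 1 by omega)).2.1 (by omega)
      omega
  have hBitonic : Bitonic τ := by
    constructor
    · refine ⟨0, hmin0, ?_⟩
      intro j hj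
      obtain ⟨hj1, hj2⟩ := hj
      rw [hPrec] at hj1 hj2
      by_contra hne
      have hjv : j.val ≠ 0 := by
        intro hc
        exact hne (ZMod.val_injective (2*m) (by rw [hc, hval0]))
      have hjlt := ZMod.val_lt j
      rcases le_or_gt j.val m with hjm | hjm
      · rw [hvalpred, if_neg hjv] at hj1
        have := SP.kk_up_lt hG hm3 (show j.val - 1 < j.val by omega) (by omega)
        omega
      · rcases eq_or_ne j.val (2*m - 1) with hc | hc
        · rw [hvalsucc, if_pos hc, SP.kk_zero] at hj2
          omega
        · rw [hvalsucc, if_neg hc] at hj2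
          have := SP.kk_down_lt hG hm3 (show m ≤ j.val by omega)
            (show j.val < j.val + 1 by omega) (by omega)
          omega
    · refine ⟨((m : ℕ) : ZMod (2*m)), hmaxm, ?_⟩
      intro j hj
      obtain ⟨hj1, hj2⟩ := hj
      rw [hPrec] at hj1 hj2
      by_contra hne
      have hjv : j.val ≠ m := by
        intro hc
        apply hne
        apply ZMod.val_injective (2*m)
        rw [hc, hvalm]
      have hjlt := ZMod.val_lt j
      rcases le_or_gt j.val m with hjm | hjm
      · rw [hvalsucc, if_neg (by omega)] at hj2
        have := SP.kk_up_lt hG hm3 (show j.val < j.val + 1 by omega) (by omega)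
        omega
      · rw [hvalpred, if_neg (by omega)] at hj1
        have := SP.kk_down_lt hG hm3 (show m ≤ j.val - 1 by omega)
          (show j.val - 1 < j.val by omega) (by omega)
        omega
  -- endpoints
  have hτ0 : τ ⟨0, hn⟩ = 0 := by
    have h0 : τ.symm 0 = ⟨0, hn⟩ := by
      rw [hsymm]
      apply Fin.ext
      simp only [hKf]
      rw [hval0, SP.kk_zero]
    rw [← h0, Equiv.apply_symm_apply]
  have hτm : τ ⟨2*m - 1, Nat.sub_lt hn one_pos⟩ = ((2*m/2 : ℕ) : ZMod (2*m)) := by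
    rw [show (2*m/2 : ℕ) = m from by omega]
    have h0 : τ.symm ((m : ℕ) : ZMod (2*m)) = ⟨2*m - 1, Nat.sub_lt hn one_pos⟩ := by
      rw [hsymm]
      apply Fin.ext
      simp only [hKf]
      rw [hvalm, SP.kk_m (by omega)]
    rw [← h0, Equiv.apply_symm_apply]
  refine ⟨τ, hOrient, hBitonic, hτ0, ?_, hτm, ?_⟩
  · rw [hτ0]; exact hmin0
  · rw [hτm, show (2*m/2 : ℕ) = m from by omega]; exact hmaxm
end

section
/- If a σ_n-partition of K_n admits a standard transitive σ_n-orientation, then n is even and its defining sequence a_1, …, a_{n/2} satisfies, for every index 1 ≤ j ≤ n/2 − 1, either a_{j+1} = a_j or a_{j+1} ≡ a_j + 1 (mod 3). -/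
namespace St2

variable {n : ℕ}

lemma cast_val_eq [NeZero n] (v : ZMod n) : ((v.val : ℕ) : ZMod n) = v :=
  ZMod.natCast_rightInverse v

lemma val_sub_one [NeZero n] {v : ZMod n} (h : v ≠ 0) : (v - 1).val = v.val - 1 := by
  have h1 : 1 ≤ v.val := Nat.one_le_iff_ne_zero.mpr (by simpa [ZMod.val_eq_zero] using h)
  have hlt : v.val - 1 < n := lt_of_le_of_lt (Nat.sub_le _ _) (ZMod.val_lt v)
  have e : ((v.val - 1 : ℕ) : ZMod n) = v - 1 := by
    rw [Nat.cast_sub h1, cast_val_eq, Nat.cast_one]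
  rw [← e, ZMod.val_cast_of_lt hlt]

lemma one_ne_zero' (h2 : 2 ≤ n) : (1 : ZMod n) ≠ 0 := by
  haveI : Fact (1 < n) := ⟨by omega⟩
  exact one_ne_zero

lemma succ_ne (h2 : 2 ≤ n) (v : ZMod n) : v + 1 ≠ v := by
  intro h
  have : (1 : ZMod n) = 0 := by
    have := sub_eq_zero_of_eq h
    simpa using this
  exact one_ne_zero' h2 this

/-- `Up τ v` : the step from `v` to `v+1` goes up. -/
def Up (τ : Fin n ≃ ZMod n) (v : ZMod n) : Prop := τ.symm v < τ.symm (v + 1)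

variable (τ : Fin n ≃ ZMod n)

lemma pne {a b : ZMod n} (h : a ≠ b) : τ.symm a ≠ τ.symm b :=
  fun he => h (τ.symm.injective he)

lemma plt_of_not {a b : ZMod n} (h : b ≠ a) (hn : ¬ τ.symm a < τ.symm b) :
    τ.symm b < τ.symm a :=
  lt_of_le_of_ne (not_lt.mp hn) (pne τ h)

section Chains

variable [NeZero n]

lemma pm_lt (m : ZMod n) (hmin : ∀ v, τ.symm m ≤ τ.symm v)
    (v : ZMod n) (hv : v ≠ m) : τ.symm m < τ.symm v :=
  lt_of_le_of_ne (hmin v) (pne τ (Ne.symm hv))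

lemma up_m (m : ZMod n) (h2 : 2 ≤ n) (hmin : ∀ v, τ.symm m ≤ τ.symm v) : Up τ m :=
  pm_lt τ m hmin (m + 1) (succ_ne h2 m)

lemma sub_one_ne (h2 : 2 ≤ n) (v : ZMod n) : v - 1 ≠ v := by
  intro he
  have : v - 1 + 1 = v + 1 := by rw [he]
  rw [sub_add_cancel] at this
  exact succ_ne h2 v this.symm

lemma down_pred_m (m : ZMod n) (h2 : 2 ≤ n) (hmin : ∀ v, τ.symm m ≤ τ.symm v) :
    ¬ Up τ (m - 1) := by
  intro h
  unfold Up at h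
  rw [sub_add_cancel] at h
  exact absurd (pm_lt τ m hmin (m - 1) (sub_one_ne h2 m)) (not_lt.mpr h.le)

lemma up_pred (m : ZMod n) (h2 : 2 ≤ n) (hum : ∀ v, CycLocalMin τ v → v = m)
    {v : ZMod n} (hv : Up τ v) (hvm : v ≠ m) : Up τ (v - 1) := by
  by_contra h
  unfold Up at h
  rw [sub_add_cancel] at h
  have h1 : τ.symm v < τ.symm (v - 1) :=
    plt_of_not τ (Ne.symm (sub_one_ne h2 v)) h
  exact hvm (hum v ⟨h1, hv⟩)

lemma down_succ (m : ZMod n) (h2 : 2 ≤ n) (hum : ∀ v, CycLocalMin τ v → v = m)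
    {v : ZMod n} (hv : ¬ Up τ v) (hvm : v + 1 ≠ m) : ¬ Up τ (v + 1) := by
  intro h
  apply hvm
  apply hum
  refine ⟨?_, h⟩
  show τ.symm (v + 1) < τ.symm (v + 1 - 1)
  rw [add_sub_cancel_right]
  exact plt_of_not τ (fun he => succ_ne h2 v he) hv

lemma up_arc (m : ZMod n) (h2 : 2 ≤ n) (hum : ∀ v, CycLocalMin τ v → v = m)
    (hmin : ∀ v, τ.symm m ≤ τ.symm v) :
    ∀ (k : ℕ) (v : ZMod n), Up τ v → (v - m).val = k →
    ∀ i : ℕ, i ≤ k → Up τ (m + (i : ℕ)) := by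
  intro k
  induction k with
  | zero =>
    intro v hv hval i hi
    interval_cases i
    simpa using up_m τ m h2 hmin
  | succ k ih =>
    intro v hv hval i hi
    have hvm : v ≠ m := by
      intro h
      rw [h, sub_self, ZMod.val_zero] at hval
      omega
    have hsub : v - m ≠ 0 := sub_ne_zero.mpr hvm
    have hv1 : Up τ (v - 1) := up_pred τ m h2 hum hv hvm
    have hval1 : (v - 1 - m).val = k := by
      have e : v - 1 - m = (v - m) - 1 := by ring
      rw [e, val_sub_one hsub, hval]
      omega
    rcases Nat.lt_succ_iff_lt_or_eq.mp (Nat.lt_succ_of_le hi) with h | h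
    · exact ih (v - 1) hv1 hval1 i (by omega)
    · have hcast : m + ((i : ℕ) : ZMod n) = v := by
        have hc := cast_val_eq (v - m)
        rw [hval, ← h] at hc
        rw [hc]
        ring
      rw [hcast]
      exact hv

lemma up_mono (m : ZMod n) (K : ℕ) (hK : ∀ i ≤ K, Up τ (m + (i : ℕ))) :
    ∀ s t : ℕ, s ≤ t → t ≤ K + 1 →
      s = t ∨ τ.symm (m + (s : ℕ)) < τ.symm (m + (t : ℕ)) := by
  intro s t
  induction t with
  | zero => intro hs _; left; omega
  | succ t ih =>
    intro hs ht
    rcases Nat.eq_or_lt_of_le hs with h | h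
    · left; exact h
    · right
      have hstep : τ.symm (m + (t : ℕ)) < τ.symm (m + ((t + 1 : ℕ) : ZMod n)) := by
        have hu := hK t (by omega)
        unfold Up at hu
        have e : m + (t : ℕ) + 1 = m + ((t + 1 : ℕ) : ZMod n) := by push_cast; ring
        rwa [e] at hu
      rcases ih (by omega) (by omega) with h' | h'
      · rw [h']; exact hstep
      · exact lt_trans h' hstep

lemma up_cmp (m : ZMod n) (h2 : 2 ≤ n) (hum : ∀ v, CycLocalMin τ v → v = m)
    (hmin : ∀ v, τ.symm m ≤ τ.symm v) {a b : ZMod n} (ha : Up τ a) (hb : Up τ b)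
    (hab : τ.symm a < τ.symm b) : τ.symm (a + 1) < τ.symm (b + 1) := by
  set ka := (a - m).val with hka
  set kb := (b - m).val with hkb
  have hUa := up_arc τ m h2 hum hmin ka a ha rfl
  have hUb := up_arc τ m h2 hum hmin kb b hb rfl
  have hma : m + ((ka : ℕ) : ZMod n) = a := by
    rw [hka, cast_val_eq]; ring
  have hmb : m + ((kb : ℕ) : ZMod n) = b := by
    rw [hkb, cast_val_eq]; ring
  have hkab : ka < kb := by
    by_contra h
    push_neg at h
    rcases up_mono τ m ka hUa kb ka h (by omega) with he | hlt
    · rw [← hma, ← hmb, he] at hab; exact lt_irrefl _ hab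
    · rw [hma, hmb] at hlt
      exact lt_asymm hab hlt
  have hca : m + ((ka + 1 : ℕ) : ZMod n) = a + 1 := by
    push_cast
    push_cast at hma
    rw [← add_assoc, hma]
  rcases up_mono τ m kb hUb (ka + 1) kb (by omega) (by omega) with he | hlt
  · rw [he, hmb] at hca
    rw [← hca]
    exact hb
  · rw [hca, hmb] at hlt
    exact lt_trans hlt hb


lemma not_up_iff (h2 : 2 ≤ n) (v : ZMod n) : ¬ Up τ v ↔ τ.symm (v + 1) < τ.symm v := by
  constructor
  · intro h
    exact plt_of_not τ (fun he => succ_ne h2 v he) h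
  · intro h hu
    exact lt_asymm h hu

lemma down_arc (m : ZMod n) (h2 : 2 ≤ n) (hum : ∀ v, CycLocalMin τ v → v = m)
    (hmin : ∀ v, τ.symm m ≤ τ.symm v) :
    ∀ (k : ℕ) (v : ZMod n), ¬ Up τ v → (m - 1 - v).val = k →
    ∀ i : ℕ, i ≤ k → ¬ Up τ (m - 1 - (i : ℕ)) := by
  intro k
  induction k with
  | zero =>
    intro v hv hval i hi
    interval_cases i
    simpa using down_pred_m τ m h2 hmin
  | succ k ih =>
    intro v hv hval i hi
    have hvm : v ≠ m - 1 := by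
      intro h
      rw [h] at hval
      rw [sub_self, ZMod.val_zero] at hval
      omega
    have hv1m : v + 1 ≠ m := by
      intro h
      apply hvm
      rw [← h]
      ring
    have hsub : m - 1 - v ≠ 0 := sub_ne_zero.mpr (Ne.symm hvm)
    have hv1 : ¬ Up τ (v + 1) := down_succ τ m h2 hum hv hv1m
    have hval1 : (m - 1 - (v + 1)).val = k := by
      have e : m - 1 - (v + 1) = (m - 1 - v) - 1 := by ring
      rw [e, val_sub_one hsub, hval]
      omega
    rcases Nat.lt_succ_iff_lt_or_eq.mp (Nat.lt_succ_of_le hi) with h | h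
    · exact ih (v + 1) hv1 hval1 i (by omega)
    · have hcast : m - 1 - ((i : ℕ) : ZMod n) = v := by
        have hc := cast_val_eq (m - 1 - v)
        rw [hval, ← h] at hc
        rw [hc]
        ring
      rw [hcast]
      exact hv

lemma down_mono (m : ZMod n) (h2 : 2 ≤ n) (K : ℕ)
    (hK : ∀ i ≤ K, ¬ Up τ (m - 1 - (i : ℕ))) :
    ∀ s t : ℕ, s ≤ t → t ≤ K →
      s = t ∨ τ.symm (m - 1 - (s : ℕ)) < τ.symm (m - 1 - (t : ℕ)) := by
  intro s t
  induction t with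
  | zero => intro hs _; left; omega
  | succ t ih =>
    intro hs ht
    rcases Nat.eq_or_lt_of_le hs with h | h
    · left; exact h
    · right
      have hstep : τ.symm (m - 1 - (t : ℕ)) <
          τ.symm (m - 1 - ((t + 1 : ℕ) : ZMod n)) := by
        have hu := (not_up_iff τ h2 _).mp (hK (t + 1) (by omega))
        have e : m - 1 - ((t + 1 : ℕ) : ZMod n) + 1 = m - 1 - (t : ℕ) := by
          push_cast; ring
        rwa [e] at hu
      rcases ih (by omega) (by omega) with h' | h'
      · rw [h']; exact hstep
      · exact lt_trans h' hstep

lemma down_cmp (m : ZMod n) (h2 : 2 ≤ n) (hum : ∀ v, CycLocalMin τ v → v = m)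
    (hmin : ∀ v, τ.symm m ≤ τ.symm v) {a b : ZMod n} (ha : ¬ Up τ a) (hb : ¬ Up τ b)
    (hab : τ.symm a < τ.symm b) : τ.symm (a + 1) < τ.symm (b + 1) := by
  set ka := (m - 1 - a).val with hka
  set kb := (m - 1 - b).val with hkb
  have hDa := down_arc τ m h2 hum hmin ka a ha rfl
  have hDb := down_arc τ m h2 hum hmin kb b hb rfl
  have hma : m - 1 - ((ka : ℕ) : ZMod n) = a := by
    rw [hka, cast_val_eq]; ring
  have hmb : m - 1 - ((kb : ℕ) : ZMod n) = b := by
    rw [hkb, cast_val_eq]; ring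
  have hkab : ka < kb := by
    by_contra h
    push_neg at h
    rcases down_mono τ m h2 ka hDa kb ka h (le_refl _) with he | hlt
    · rw [← hma, ← hmb, he] at hab; exact lt_irrefl _ hab
    · rw [hma, hmb] at hlt
      exact lt_asymm hab hlt
  rcases Nat.eq_zero_or_pos ka with h0 | hpos
  · -- a = m - 1, so a + 1 = m
    have ham : a = m - 1 := by
      rw [← hma, h0]
      push_cast
      ring
    have ha1 : a + 1 = m := by rw [ham]; ring
    rw [ha1]
    apply pm_lt τ m hmin
    intro hbm
    have : b = m - 1 := by rw [← hbm]; ring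
    rw [this, ← ham] at hab
    exact lt_irrefl _ hab
  · have hca : m - 1 - ((ka - 1 : ℕ) : ZMod n) = a + 1 := by
      rw [Nat.cast_sub hpos, Nat.cast_one, ← hma]
      ring
    have hcb : m - 1 - ((kb - 1 : ℕ) : ZMod n) = b + 1 := by
      rw [Nat.cast_sub (by omega : 1 ≤ kb), Nat.cast_one, ← hmb]
      ring
    rcases down_mono τ m h2 kb hDb (ka - 1) (kb - 1) (by omega) (by omega) with he | hlt
    · omega
    · rwa [hca, hcb] at hlt

lemma down_min (m : ZMod n) (h2 : 2 ≤ n) (hum : ∀ v, CycLocalMin τ v → v = m)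
    (hmin : ∀ v, τ.symm m ≤ τ.symm v) {v : ZMod n} (hv : ¬ Up τ v) :
    τ.symm (m - 1) ≤ τ.symm v := by
  set kv := (m - 1 - v).val with hkv
  have hDv := down_arc τ m h2 hum hmin kv v hv rfl
  have hmv : m - 1 - ((kv : ℕ) : ZMod n) = v := by
    rw [hkv, cast_val_eq]; ring
  rcases down_mono τ m h2 kv hDv 0 kv (Nat.zero_le _) (le_refl _) with he | hlt
  · rw [← hmv, ← he]
    simp
  · rw [hmv] at hlt
    apply le_of_lt
    simpa using hlt

lemma up_min (m : ZMod n) (h2 : 2 ≤ n) (hum : ∀ v, CycLocalMin τ v → v = m)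
    (hmin : ∀ v, τ.symm m ≤ τ.symm v) {v : ZMod n} (hv : Up τ v) :
    τ.symm (m + 1) ≤ τ.symm (v + 1) := by
  set kv := (v - m).val with hkv
  have hUv := up_arc τ m h2 hum hmin kv v hv rfl
  have hmv : m + ((kv : ℕ) : ZMod n) = v := by
    rw [hkv, cast_val_eq]; ring
  have hcv : m + ((kv + 1 : ℕ) : ZMod n) = v + 1 := by
    push_cast
    push_cast at hmv
    rw [← add_assoc, hmv]
  rcases up_mono τ m kv hUv 1 (kv + 1) (by omega) (le_refl _) with he | hlt
  · have : kv = 0 := by omega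
    rw [← hcv, ← he]
    simp
  · rw [hcv] at hlt
    have e1 : m + ((1 : ℕ) : ZMod n) = m + 1 := by push_cast; ring
    rw [e1] at hlt
    exact le_of_lt hlt

end Chains

/-! ### Label shifting -/

lemma shiftIter (ℓ : ZMod n → ZMod n → ZMod 3) (hP : IsSigmaPartition n 3 ℓ) :
    ∀ (t : ℕ) (a b : ZMod n), a ≠ b →
      ℓ (a + (t : ℕ)) (b + (t : ℕ)) = ℓ a b + (t : ZMod 3) := by
  intro t
  induction t with
  | zero => intro a b _; simp
  | succ t ih =>
    intro a b h
    have hne : a + (t : ℕ) ≠ b + (t : ℕ) := by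
      intro h'
      exact h (add_right_cancel h')
    have e1 : a + ((t + 1 : ℕ) : ZMod n) = (a + (t : ℕ)) + 1 := by push_cast; ring
    have e2 : b + ((t + 1 : ℕ) : ZMod n) = (b + (t : ℕ)) + 1 := by push_cast; ring
    rw [e1, e2, hP.2 _ _ hne, ih a b h]
    push_cast
    ring

lemma labelShift (ℓ : ZMod n → ZMod n → ZMod 3) (hP : IsSigmaPartition n 3 ℓ)
    [NeZero n] (x J : ZMod n) (hJ : J ≠ 0) :
    ℓ x (x + J) = ℓ 0 J + ((x.val : ℕ) : ZMod 3) := by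
  have h := shiftIter ℓ hP x.val 0 J (Ne.symm hJ)
  rw [zero_add, cast_val_eq] at h
  rw [add_comm J x] at h
  exact h

lemma three_dvd (h2 : 2 ≤ n) (ℓ : ZMod n → ZMod n → ZMod 3)
    (hP : IsSigmaPartition n 3 ℓ) : 3 ∣ n := by
  haveI : NeZero n := ⟨by omega⟩
  have h01 : (0 : ZMod n) ≠ 1 := Ne.symm (one_ne_zero' h2)
  have h := shiftIter ℓ hP n 0 1 h01
  rw [ZMod.natCast_self] at h
  simp only [add_zero] at h
  have : ((n : ℕ) : ZMod 3) = 0 := by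
    have := h.symm
    rwa [left_eq_add] at h
  exact (ZMod.natCast_eq_zero_iff n 3).mp this

/-! ### Classification of change points -/

lemma change_classify [NeZero n] (m : ZMod n) (h2 : 2 ≤ n)
    (hum : ∀ v, CycLocalMin τ v → v = m) (hmin : ∀ v, τ.symm m ≤ τ.symm v)
    {x y : ZMod n} (hxy : τ.symm x < τ.symm y)
    (hxy1 : τ.symm (y + 1) < τ.symm (x + 1)) :
    Up τ x ∧ ¬ Up τ y := by
  by_cases hx : Up τ x
  · refine ⟨hx, ?_⟩
    intro hy
    exact lt_asymm hxy1 (up_cmp τ m h2 hum hmin hx hy hxy)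
  · exfalso
    have hx' : τ.symm (x + 1) < τ.symm x := (not_up_iff τ h2 x).mp hx
    by_cases hy : Up τ y
    · -- p(y+1) < p(x+1) < p(x) < p(y) < p(y+1)
      exact lt_irrefl _ (lt_trans (lt_trans (lt_trans hxy1 hx') hxy) hy)
    · exact lt_asymm hxy1 (down_cmp τ m h2 hum hmin hx hy hxy)

/-- Existence of a T→F change point. -/
lemma exists_change (c : ZMod n → Prop) :
    ∀ (s : ℕ) (v : ZMod n), c v → ¬ c (v + (s : ℕ)) →
      ∃ x, c x ∧ ¬ c (x + 1) := by
  intro s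
  induction s with
  | zero => intro v hv hnv; simp at hnv; exact absurd hv hnv
  | succ s ih =>
    intro v hv hnv
    by_cases h1 : c (v + 1)
    · apply ih (v + 1) h1
      have e : v + 1 + ((s : ℕ) : ZMod n) = v + ((s + 1 : ℕ) : ZMod n) := by
        push_cast; ring
      rwa [e]
    · exact ⟨v, hv, h1⟩

/-! ### The main relation -/

lemma REL [NeZero n] (h2 : 2 ≤ n) (h3 : 3 ∣ n)
    (ℓ : ZMod n → ZMod n → ZMod 3) (hP : IsSigmaPartition n 3 ℓ)
    (hor : IsTransSigmaOrientation n 3 ℓ τ)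
    (m : ZMod n) (hum : ∀ v, CycLocalMin τ v → v = m)
    (hmin : ∀ v, τ.symm m ≤ τ.symm v)
    (j : ℕ) (hj1 : 1 ≤ j) (hj2 : j + 2 ≤ n) :
    ℓ 0 ((j + 1 : ℕ) : ZMod n) = ℓ 0 ((j : ℕ) : ZMod n) ∨
    ℓ 0 ((j + 1 : ℕ) : ZMod n) = ℓ 0 ((j : ℕ) : ZMod n) + 1 := by
  set J : ZMod n := ((j : ℕ) : ZMod n) with hJdef
  have hJ0 : J ≠ 0 := by
    rw [hJdef]
    intro h
    have := (ZMod.natCast_eq_zero_iff j n).mp h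
    have := Nat.le_of_dvd (by omega) this
    omega
  have hJ10 : J + 1 ≠ 0 := by
    intro h
    have e : ((j + 1 : ℕ) : ZMod n) = 0 := by push_cast; rw [← hJdef]; exact h
    have := (ZMod.natCast_eq_zero_iff (j + 1) n).mp e
    have := Nat.le_of_dvd (by omega) this
    omega
  have ej : ((j + 1 : ℕ) : ZMod n) = J + 1 := by push_cast; rw [hJdef]
  -- the comparison function
  set c : ZMod n → Prop := fun v => τ.symm v < τ.symm (v + J) with hcdef
  have hcm : c m := by
    show τ.symm m < τ.symm (m + J)
    apply pm_lt τ m hmin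
    intro h
    exact hJ0 (by linear_combination h)
  have hncm : ¬ c (m + ((n - j : ℕ) : ZMod n)) := by
    have e : m + ((n - j : ℕ) : ZMod n) + J = m := by
      rw [Nat.cast_sub (by omega : j ≤ n), ZMod.natCast_self, hJdef]
      ring
    show ¬ (τ.symm _ < τ.symm (m + ((n - j : ℕ) : ZMod n) + J))
    rw [e]
    exact not_lt.mpr (hmin _)
  obtain ⟨x, hcx, hncx⟩ := exists_change c (n - j) m hcm hncm
  have hcx : τ.symm x < τ.symm (x + J) := hcx
  have hncx : ¬ (τ.symm (x + 1) < τ.symm (x + 1 + J)) := hncx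
  have hyJ : τ.symm (x + J + 1) < τ.symm (x + 1) := by
    have h := plt_of_not τ (a := x + 1) (b := x + 1 + J)
      (by intro h; exact hJ0 (by linear_combination h)) hncx
    have e : x + 1 + J = x + J + 1 := by ring
    rwa [e] at h
  obtain ⟨hux, hdy⟩ := change_classify τ m h2 hum hmin hcx hyJ
  have hxne : x ≠ x + J := by
    intro h; exact hJ0 (by linear_combination h.symm)
  have hl1 : ℓ x (x + J) = -1 := hor x (x + J) hxne ⟨hcx, hyJ⟩
  have hs1 : ℓ x (x + J) = ℓ 0 J + ((x.val : ℕ) : ZMod 3) := labelShift ℓ hP x J hJ0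
  have e1 : ℓ 0 J + ((x.val : ℕ) : ZMod 3) = -1 := by rw [← hs1]; exact hl1
  -- (B)
  have hB : τ.symm (x - 1) < τ.symm (x + J) := by
    by_cases hxm : x = m
    · rw [hxm] at hdy ⊢
      have h5 := down_min τ m h2 hum hmin hdy
      apply lt_of_le_of_ne h5
      apply pne
      intro h
      exact hJ10 (by linear_combination h.symm)
    · have hu1 : Up τ (x - 1) := up_pred τ m h2 hum hux hxm
      have hu1' : τ.symm (x - 1) < τ.symm x := by
        have := hu1
        unfold Up at this
        rwa [sub_add_cancel] at this
      exact lt_trans hu1' hcx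
  -- (A)
  have hA : τ.symm (x + J + 1 + 1) < τ.symm (x + 1) := by
    by_cases hm1 : x + J + 1 = m
    · rw [hm1]
      have h6 := up_min τ m h2 hum hmin hux
      apply lt_of_le_of_ne h6
      apply pne
      intro h
      have hmx : m = x := add_right_cancel h
      rw [hmx] at hm1
      exact hJ10 (by linear_combination hm1)
    · have hd1 : ¬ Up τ (x + J + 1) := down_succ τ m h2 hum hdy hm1
      exact lt_trans ((not_up_iff τ h2 _).mp hd1) hyJ
  -- case split on c_{j+1}(x)
  rw [ej]
  by_cases hc2 : τ.symm x < τ.symm (x + J + 1)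
  · left
    have hne2 : x ≠ x + (J + 1) := by
      intro h; exact hJ10 (by linear_combination h.symm)
    have hrev2 : Reverses τ x (x + (J + 1)) := by
      constructor
      · show τ.symm x < τ.symm (x + (J + 1))
        rw [show x + (J + 1) = x + J + 1 by ring]
        exact hc2
      · show τ.symm (x + (J + 1) + 1) < τ.symm (x + 1)
        rw [show x + (J + 1) + 1 = x + J + 1 + 1 by ring]
        exact hA
    have hl2 : ℓ x (x + (J + 1)) = -1 := hor x _ hne2 hrev2
    have hs2 : ℓ x (x + (J + 1)) = ℓ 0 (J + 1) + ((x.val : ℕ) : ZMod 3) :=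
      labelShift ℓ hP x (J + 1) hJ10
    have e2 : ℓ 0 (J + 1) + ((x.val : ℕ) : ZMod 3) = -1 := by rw [← hs2]; exact hl2
    linear_combination e2 - e1
  · right
    have hc2' : τ.symm (x + J + 1) < τ.symm x := by
      apply plt_of_not τ (a := x) (b := x + J + 1)
      · intro h; exact hJ10 (by linear_combination h)
      · exact hc2
    have hne3 : x - 1 ≠ (x - 1) + (J + 1) := by
      intro h; exact hJ10 (by linear_combination h.symm)
    have hrev3 : Reverses τ (x - 1) ((x - 1) + (J + 1)) := by
      constructor
      · show τ.symm (x - 1) < τ.symm ((x - 1) + (J + 1))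
        rw [show (x - 1) + (J + 1) = x + J by ring]
        exact hB
      · show τ.symm ((x - 1) + (J + 1) + 1) < τ.symm ((x - 1) + 1)
        rw [show (x - 1) + (J + 1) + 1 = x + J + 1 by ring, sub_add_cancel]
        exact hc2'
    have hl3 : ℓ (x - 1) ((x - 1) + (J + 1)) = -1 := hor _ _ hne3 hrev3
    have hs3 : ℓ (x - 1) ((x - 1) + (J + 1)) =
        ℓ 0 (J + 1) + (((x - 1).val : ℕ) : ZMod 3) :=
      labelShift ℓ hP (x - 1) (J + 1) hJ10
    have hφ : (((x - 1).val : ℕ) : ZMod 3) = ((x.val : ℕ) : ZMod 3) - 1 := by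
      have key : ∀ w : ZMod n, ((w.val : ℕ) : ZMod 3) = ZMod.castHom h3 (ZMod 3) w := by
        intro w
        rw [ZMod.natCast_val, ZMod.castHom_apply]
      rw [key, key, map_sub, map_one]
    have e3 : ℓ 0 (J + 1) + ((x.val : ℕ) : ZMod 3) - 1 = -1 := by
      linear_combination hl3 - hs3 - hφ
    linear_combination e3 - e1

lemma mirror [NeZero n] (ℓ : ZMod n → ZMod n → ZMod 3) (hP : IsSigmaPartition n 3 ℓ)
    (k : ℕ) (hk1 : 1 ≤ k) (hk2 : k < n) :
    ℓ 0 ((k : ℕ) : ZMod n) = ℓ 0 (((n - k : ℕ) : ZMod n)) + ((k : ℕ) : ZMod 3) := by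
  have h0 : (0 : ZMod n) ≠ ((n - k : ℕ) : ZMod n) := by
    intro h
    have := (ZMod.natCast_eq_zero_iff (n - k) n).mp h.symm
    have := Nat.le_of_dvd (by omega) this
    omega
  have h := shiftIter ℓ hP k 0 ((n - k : ℕ) : ZMod n) h0
  have e : ((n - k : ℕ) : ZMod n) + ((k : ℕ) : ZMod n) = 0 := by
    rw [← Nat.cast_add, Nat.sub_add_cancel (le_of_lt hk2)]
    exact ZMod.natCast_self n
  rw [zero_add, e] at h
  rw [hP.1 0 ((k : ℕ) : ZMod n)]
  exact h

end St2

open St2 in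
/-- If a σ_n-partition admits a standard transitive σ_n-orientation,
then n is even and its defining sequence halts or steps at every index. -/
theorem stmt_2 (n : ℕ) (hn : 0 < n)
    (ℓ : ZMod n → ZMod n → ZMod 3) (hP : IsSigmaPartition n 3 ℓ)
    (hstd : ∃ τ : Fin n ≃ ZMod n, IsTransSigmaOrientation n 3 ℓ τ ∧ Bitonic τ) :
    Even n ∧ ∀ j : ℕ, 1 ≤ j → j ≤ n / 2 - 1 →
      ℓ 0 ((j + 1 : ℕ) : ZMod n) = ℓ 0 ((j : ℕ) : ZMod n) ∨
      ℓ 0 ((j + 1 : ℕ) : ZMod n) = ℓ 0 ((j : ℕ) : ZMod n) + 1 := by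
  haveI : NeZero n := ⟨hn.ne'⟩
  obtain ⟨τ, hor, hbit⟩ := hstd
  obtain ⟨m, hm, hum⟩ := hbit.1
  have h2 : 2 ≤ n := by
    by_contra h
    have hn1 : n = 1 := by omega
    subst hn1
    haveI : Subsingleton (ZMod 1) := inferInstanceAs (Subsingleton (Fin 1))
    have h1 : τ.symm m < τ.symm (m - 1) := hm.1
    have hsub : m - 1 = m := Subsingleton.elim _ _
    rw [hsub] at h1
    exact lt_irrefl _ h1
  have h3 : 3 ∣ n := three_dvd h2 ℓ hP
  have hmin : ∀ v, τ.symm m ≤ τ.symm v := by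
    set g := τ ⟨0, hn⟩ with hg
    have hsg : τ.symm g = ⟨0, hn⟩ := Equiv.symm_apply_apply τ _
    have haux : ∀ w : ZMod n, w ≠ g → τ.symm g < τ.symm w := by
      intro w hw
      rw [hsg, Fin.lt_def]
      have : τ.symm w ≠ ⟨0, hn⟩ := by rw [← hsg]; exact pne τ hw
      have : (τ.symm w).val ≠ 0 := by
        intro h0
        exact this (Fin.ext h0)
      exact Nat.pos_of_ne_zero this
    have hglm : CycLocalMin τ g := by
      constructor
      · exact haux (g - 1) (sub_one_ne h2 g)
      · exact haux (g + 1) (succ_ne h2 g)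
    have hgm := hum g hglm
    intro v
    rw [← hgm, hsg]
    simp [Fin.le_def]
  constructor
  · by_contra hodd
    have hn2 : n % 2 = 1 := Nat.not_even_iff.mp hodd
    have hn3 : 3 ≤ n := by omega
    set k := (n - 1) / 2 with hk
    have hnk : n = 2 * k + 1 := by omega
    have hrel := REL τ h2 h3 ℓ hP hor m hum hmin k (by omega) (by omega)
    have hmir := mirror ℓ hP k (by omega) (by omega)
    have hk1 : n - k = k + 1 := by omega
    rw [hk1] at hmir
    have hcast : ((k : ℕ) : ZMod 3) = 1 := by
      have hd : ((n : ℕ) : ZMod 3) = 0 := (ZMod.natCast_eq_zero_iff n 3).mpr h3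
      rw [hnk] at hd
      push_cast at hd
      revert hd
      generalize ((k : ℕ) : ZMod 3) = κ
      revert κ
      decide
    rw [hcast] at hmir
    rcases hrel with h | h
    · rw [hmir] at h
      have : (1 : ZMod 3) = 0 := by linear_combination -h
      exact absurd this (by decide)
    · rw [hmir] at h
      have : (2 : ZMod 3) = 0 := by linear_combination -h
      exact absurd this (by decide)
  · intro j hj1 hj2
    exact REL τ h2 h3 ℓ hP hor m hum hmin j hj1 (by omega)
end

section
/- Let k > 1 and let a σ_n-k-partition of K_n have defining sequence a_1, …, a_{⌊n/2⌋}. The partition admits a standard transitive σ_n-orientation if and only if n is divisible by 2k and for every index 1 ≤ j ≤ n/2 − 1 either a_{j+1} = a_j or a_{j+1} ≡ a_j + 1 (mod k). -/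
private lemma sp_cast_val {n : ℕ} [NeZero n] (a : ZMod n) : ((a.val : ℕ) : ZMod n) = a := by
  rw [ZMod.natCast_val, ZMod.cast_id]

private lemma sp_val_succ {n : ℕ} [NeZero n] {w : ZMod n} (h : w.val + 1 < n) :
    (w + 1).val = w.val + 1 := by
  rw [show w + 1 = ((w.val + 1 : ℕ) : ZMod n) by push_cast [sp_cast_val]; ring,
    ZMod.val_cast_of_lt h]

private lemma sp_phi_natCast {n k : ℕ} [NeZero n] (hkn : k ∣ n) (m : ℕ) :
    (((m : ZMod n).val : ℕ) : ZMod k) = (m : ZMod k) := by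
  rw [ZMod.val_natCast]
  conv_rhs => rw [← Nat.mod_add_div m n]
  push_cast
  obtain ⟨c, rfl⟩ := hkn
  simp [mul_assoc]

private lemma sp_phi_add {n k : ℕ} [NeZero n] (hkn : k ∣ n) (A B : ZMod n) :
    (((A + B).val : ℕ) : ZMod k) = ((A.val : ℕ) : ZMod k) + ((B.val : ℕ) : ZMod k) := by
  have e : A + B = ((A.val + B.val : ℕ) : ZMod n) := by push_cast [sp_cast_val]; ring
  rw [e, sp_phi_natCast hkn, Nat.cast_add, ← sp_phi_natCast hkn A.val, ← sp_phi_natCast hkn B.val,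
    sp_cast_val, sp_cast_val]

private lemma sp_shift {n k : ℕ} {ℓ : ZMod n → ZMod n → ZMod k}
    (hP : IsSigmaPartition n k ℓ) (c : ℕ) :
    ∀ a b : ZMod n, a ≠ b → ℓ (a + (c : ZMod n)) (b + (c : ZMod n)) = ℓ a b + (c : ZMod k) := by
  induction c with
  | zero => simp
  | succ c ih =>
    intro a b hab
    have h2 : (a + (c : ZMod n)) ≠ (b + (c : ZMod n)) := by
      simpa using hab
    have e : ℓ (a + ((c+1 : ℕ) : ZMod n)) (b + ((c+1 : ℕ) : ZMod n))
        = ℓ ((a + (c : ZMod n)) + 1) ((b + (c : ZMod n)) + 1) := by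
      congr 1 <;> (push_cast; ring)
    rw [e, hP.2 _ _ h2, ih a b hab]
    push_cast; ring

private lemma sp_shift' {n k : ℕ} [NeZero n] {ℓ : ZMod n → ZMod n → ZMod k}
    (hP : IsSigmaPartition n k ℓ) (a b : ZMod n) (hab : a ≠ b) :
    ℓ a b = ℓ 0 (b - a) + ((a.val : ℕ) : ZMod k) := by
  have h0 : (0 : ZMod n) ≠ b - a := by
    intro h
    exact hab ((sub_eq_zero.mp h.symm).symm)
  have := sp_shift hP a.val 0 (b - a) h0
  rw [sp_cast_val] at this
  simpa using this

private lemma sp_k_dvd {n k : ℕ} (hn2 : 2 ≤ n) (hk : 1 < k) {ℓ : ZMod n → ZMod n → ZMod k}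
    (hP : IsSigmaPartition n k ℓ) : k ∣ n := by
  haveI : NeZero n := ⟨by omega⟩
  haveI : Fact (1 < n) := ⟨by omega⟩
  haveI : NeZero k := ⟨by omega⟩
  have h01 : (0 : ZMod n) ≠ 1 := zero_ne_one
  have h := sp_shift hP n 0 1 h01
  rw [ZMod.natCast_self] at h
  simp only [add_zero] at h
  have h2 : (n : ZMod k) = 0 := by
    have := left_eq_add.mp h
    exact this
  exact (ZMod.natCast_eq_zero_iff n k).mp h2

private lemma sp_sym {n k : ℕ} [NeZero n] {ℓ : ZMod n → ZMod n → ZMod k}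
    (hP : IsSigmaPartition n k ℓ) (e : ZMod n) (he : e ≠ 0) :
    ℓ 0 (-e) = ℓ 0 e - ((e.val : ℕ) : ZMod k) := by
  have hne : (-e : ZMod n) ≠ 0 := neg_ne_zero.mpr he
  have h := sp_shift hP e.val (-e) 0 (by simpa using hne)
  rw [sp_cast_val] at h
  simp only [neg_add_cancel, zero_add] at h
  rw [hP.1 (-e) 0] at h
  linear_combination -h


-- the vertex just left of an arc: if w+1 is in the arc but w is not, then w+1 is the left endpoint
private lemma sp_left_end {n : ℕ} [NeZero n] {x w : ZMod n} {t : ℕ}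
    (h1 : ((w + 1) - x).val < t) (h2 : ¬ ((w - x).val < t)) : w + 1 = x := by
  by_contra hne
  have hγ : ((w + 1) - x).val ≠ 0 := by
    simp only [ne_eq, ZMod.val_eq_zero, sub_eq_zero]
    exact hne
  have he : w - x = ((((w + 1) - x).val - 1 : ℕ) : ZMod n) := by
    rw [Nat.cast_sub (by omega), sp_cast_val]
    push_cast
    ring
  rw [he, ZMod.val_cast_of_lt (by have := ZMod.val_lt ((w+1) - x); omega)] at h2
  omega

-- if w is in the arc but w+1 is not, then w is the right endpoint x + (t-1)
private lemma sp_right_end {n : ℕ} [NeZero n] {x w : ZMod n} {t : ℕ} (ht : t ≤ n - 1)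
    (hn2 : 2 ≤ n) (h1 : (w - x).val < t) (h2 : ¬ (((w + 1) - x).val < t)) :
    w = x + ((t - 1 : ℕ) : ZMod n) := by
  have he : (w + 1) - x = (((w - x).val + 1 : ℕ) : ZMod n) := by
    push_cast [sp_cast_val]; ring
  rw [he, ZMod.val_cast_of_lt (by omega)] at h2
  have hα : (w - x).val = t - 1 := by omega
  have hw : w = x + (((w - x).val : ℕ) : ZMod n) := by rw [sp_cast_val]; ring
  rw [hα] at hw
  exact hw

private lemma sp_arcs_exist {n : ℕ} [NeZero n] (hn2 : 2 ≤ n) (τ : Fin n ≃ ZMod n)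
    (hN : ∀ v : ZMod n, τ.symm v ≠ 0 →
      τ.symm (v - 1) < τ.symm v ∨ τ.symm (v + 1) < τ.symm v) :
    ∀ t, 1 ≤ t → t ≤ n →
      ∃ x : ZMod n, ∀ v : ZMod n, ((τ.symm v : ℕ) < t ↔ (v - x).val < t) := by
  intro t
  induction t with
  | zero => omega
  | succ t ih =>
    intro _ hle
    by_cases ht : t = 0
    · subst ht
      refine ⟨τ 0, fun v => ?_⟩
      rw [Nat.lt_one_iff, Nat.lt_one_iff, ZMod.val_eq_zero, sub_eq_zero]
      constructor
      · intro h
        have h' : τ.symm v = 0 := Fin.ext (by simpa using h)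
        exact (Equiv.symm_apply_eq τ).mp h'
      · intro h
        have h' : τ.symm v = 0 := by rw [Equiv.symm_apply_eq]; exact h
        simpa using congrArg Fin.val h'
    · have h1t : 1 ≤ t := by omega
      obtain ⟨x, hx⟩ := ih h1t (by omega)
      have htn : t < n := by omega
      set v1 := τ ⟨t, htn⟩ with hv1def
      have hpv1 : (τ.symm v1 : ℕ) = t := by rw [hv1def, Equiv.symm_apply_apply]
      have hv1x : ¬ ((v1 - x).val < t) := by rw [← hx]; omega
      have hvone : ∀ v : ZMod n, (τ.symm v : ℕ) = t → v = v1 := by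
        intro v hv
        have : τ.symm v = τ.symm v1 := Fin.ext (by rw [hpv1]; exact hv)
        exact τ.symm.injective this
      rcases hN v1 (by intro h; rw [h] at hpv1; simp at hpv1; omega) with hL | hR
      · -- left neighbour earlier: v1 = x + t, arc keeps left endpoint x
        have hj : ((v1 - 1) - x).val < t := (hx _).1 (by
          have := Fin.lt_def.mp hL; omega)
        have hval : (v1 - x).val = ((v1 - 1) - x).val + 1 := by
          have he : v1 - x = ((((v1 - 1) - x).val + 1 : ℕ) : ZMod n) := by
            push_cast [sp_cast_val]; ring
          rw [he, ZMod.val_cast_of_lt (by omega)]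
        have hvt : (v1 - x).val = t := by omega
        refine ⟨x, fun v => ?_⟩
        constructor
        · intro hpv
          rcases Nat.lt_or_ge (τ.symm v : ℕ) t with h | h
          · have := (hx v).1 h; omega
          · have : (τ.symm v : ℕ) = t := by omega
            rw [hvone v this]; omega
        · intro hvx
          rcases Nat.lt_or_ge (v - x).val t with h | h
          · have := (hx v).2 h; omega
          · have : (v - x).val = t := by omega
            have hv : v = v1 := by
              have e1 : v - x = ((t : ℕ) : ZMod n) := by
                rw [← this, sp_cast_val]
              have e2 : v1 - x = ((t : ℕ) : ZMod n) := by
                rw [← hvt, sp_cast_val]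
              have := e1.trans e2.symm
              have : v = v1 := by linear_combination this
              exact this
            rw [hv, hpv1]; omega
      · -- right neighbour earlier: v1 = x - 1, arc extends to x - 1
        have hj : ((v1 + 1) - x).val < t := (hx _).1 (by
          have := Fin.lt_def.mp hR; omega)
        have hv1 : v1 + 1 = x := sp_left_end hj hv1x
        refine ⟨x - 1, fun v => ?_⟩
        have hxv1 : v1 = x - 1 := by rw [← hv1]; ring
        constructor
        · intro hpv
          rcases Nat.lt_or_ge (τ.symm v : ℕ) t with h | h
          · have h2 := (hx v).1 h
            have he : v - (x - 1) = (((v - x).val + 1 : ℕ) : ZMod n) := by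
              push_cast [sp_cast_val]; ring
            rw [he, ZMod.val_cast_of_lt (by omega)]
            omega
          · have : (τ.symm v : ℕ) = t := by omega
            rw [hvone v this, hxv1]
            simp
        · intro hvx
          by_cases hv : v = v1
          · rw [hv, hpv1]; omega
          · have hne : (v - (x - 1)).val ≠ 0 := by
              simp only [ne_eq, ZMod.val_eq_zero, sub_eq_zero]
              intro h; exact hv (by rw [h, hxv1])
            have he : v - x = (((v - (x - 1)).val - 1 : ℕ) : ZMod n) := by
              rw [Nat.cast_sub (by omega), sp_cast_val]
              push_cast; ring
            have hlt : (v - x).val < t := by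
              rw [he, ZMod.val_cast_of_lt (by have := ZMod.val_lt (v - (x-1)); omega)]
              omega
            have := (hx v).2 hlt
            omega

private lemma sp_step {n : ℕ} [NeZero n] (τ : Fin n ≃ ZMod n) (x : ℕ → ZMod n)
    (hArc : ∀ t, 1 ≤ t → t ≤ n → ∀ v : ZMod n, ((τ.symm v : ℕ) < t ↔ (v - x t).val < t))
    (t : ℕ) (h1 : 1 ≤ t) (h2 : t + 1 ≤ n - 1) :
    x (t + 1) = x t ∨ x (t + 1) = x t - 1 := by
  have hn2 : 2 ≤ n := by omega
  have hu_lt : (x t - x (t+1)).val < n := ZMod.val_lt _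
  set u := (x t - x (t+1)).val with hu
  have hsub : ∀ j, j < t → (u + j) % n < t + 1 := by
    intro j hj
    have hvj : ((x t + (j : ℕ) - x t).val) < t := by
      rw [show x t + (j : ℕ) - x t = ((j : ℕ) : ZMod n) by ring, ZMod.val_cast_of_lt (by omega)]
      exact hj
    have hp : (τ.symm (x t + (j : ℕ)) : ℕ) < t := (hArc t h1 (by omega) _).2 hvj
    have hmem := (hArc (t+1) (by omega) (by omega) (x t + (j : ℕ))).1 (by omega)
    have e : x t + (j : ℕ) - x (t+1) = ((u + j : ℕ) : ZMod n) := by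
      push_cast [hu, sp_cast_val]
      ring
    rwa [e, ZMod.val_natCast] at hmem
  by_contra hcon
  push_neg at hcon
  have huval : x t - x (t+1) = ((u : ℕ) : ZMod n) := (sp_cast_val _).symm
  have hu0 : u ≠ 0 := by
    intro h
    rw [h] at huval
    simp only [Nat.cast_zero] at huval
    exact hcon.1 (by linear_combination -huval)
  have hu1 : u ≠ 1 := by
    intro h
    rw [h] at huval
    simp only [Nat.cast_one] at huval
    exact hcon.2 (by linear_combination -huval)
  rcases Nat.lt_or_ge (u + (t - 1)) n with hcase | hcase
  · have := hsub (t - 1) (by omega)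
    rw [Nat.mod_eq_of_lt hcase] at this
    omega
  · have hj0 : n - 1 - u < t := by omega
    have h5 := hsub (n - 1 - u) hj0
    have e : u + (n - 1 - u) = n - 1 := by omega
    rw [e, Nat.mod_eq_of_lt (by omega)] at h5
    omega

section Rev

variable {n : ℕ} [NeZero n] (hn2 : 2 ≤ n) (τ : Fin n ≃ ZMod n) (x : ℕ → ZMod n)
  (hArc : ∀ t, 1 ≤ t → t ≤ n → ∀ v : ZMod n, ((τ.symm v : ℕ) < t ↔ (v - x t).val < t))

include hn2 in
private lemma sp_add_one_ne (a : ZMod n) : a + 1 ≠ a := by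
  haveI : Fact (1 < n) := ⟨hn2⟩
  simp

include hn2 hArc in
private lemma sp_asc {a b : ZMod n} (hR : Reverses τ a b) :
    (τ.symm a : ℕ) < (τ.symm (a + 1) : ℕ) ∧ (τ.symm (b + 1) : ℕ) < (τ.symm b : ℕ) := by
  have hab : a ≠ b := by
    intro h
    rw [h] at hR
    exact lt_irrefl _ hR.1
  have hr1 : (τ.symm a : ℕ) < (τ.symm b : ℕ) := Fin.lt_def.mp hR.1
  have hr2 : (τ.symm (b+1) : ℕ) < (τ.symm (a+1) : ℕ) := Fin.lt_def.mp hR.2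
  constructor
  · by_contra h
    have hne : (τ.symm (a+1) : ℕ) ≠ (τ.symm a : ℕ) := by
      intro he
      exact sp_add_one_ne hn2 a (τ.symm.injective (Fin.ext he))
    have hlt : (τ.symm (a+1) : ℕ) < (τ.symm a : ℕ) := by omega
    set t := (τ.symm a : ℕ) with htdef
    have htn : t ≤ n := le_of_lt (Fin.is_lt _)
    have h1t : 1 ≤ t := by omega
    have m1 : ((a + 1) - x t).val < t := (hArc t h1t htn _).1 hlt
    have m2 : ¬ ((a - x t).val < t) := by rw [← hArc t h1t htn]; omega
    have m3 : ((b + 1) - x t).val < t := (hArc t h1t htn _).1 (by omega)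
    have m4 : ¬ ((b - x t).val < t) := by rw [← hArc t h1t htn]; omega
    have e1 : a + 1 = x t := sp_left_end m1 m2
    have e2 : b + 1 = x t := sp_left_end m3 m4
    exact hab (by linear_combination e1 - e2)
  · by_contra h
    have hne : (τ.symm (b+1) : ℕ) ≠ (τ.symm b : ℕ) := by
      intro he
      exact sp_add_one_ne hn2 b (τ.symm.injective (Fin.ext he))
    have hlt : (τ.symm b : ℕ) < (τ.symm (b+1) : ℕ) := by omega
    set t := (τ.symm (b+1) : ℕ) with htdef
    have htn1 : t ≤ n - 1 := by have := Fin.is_lt (τ.symm (b+1)); omega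
    have htn : t ≤ n := by omega
    have h1t : 1 ≤ t := by omega
    have m1 : (a - x t).val < t := (hArc t h1t htn _).1 (by omega)
    have m2 : ¬ (((a + 1) - x t).val < t) := by rw [← hArc t h1t htn]; omega
    have m3 : (b - x t).val < t := (hArc t h1t htn _).1 (by omega)
    have m4 : ¬ (((b + 1) - x t).val < t) := by rw [← hArc t h1t htn]; omega
    have e1 := sp_right_end htn1 hn2 m1 m2
    have e2 := sp_right_end htn1 hn2 m3 m4
    exact hab (e1.trans e2.symm)

include hn2 hArc in
private lemma sp_rev_classify {a b : ZMod n} (hR : Reverses τ a b) :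
    ∃ t, 1 ≤ t ∧ t ≤ n - 1 ∧ a = x t + ((t - 1 : ℕ) : ZMod n) ∧ b = x t - 1 := by
  obtain ⟨hA, hB⟩ := sp_asc hn2 τ x hArc hR
  have hr1 : (τ.symm a : ℕ) < (τ.symm b : ℕ) := Fin.lt_def.mp hR.1
  have hr2 : (τ.symm (b+1) : ℕ) < (τ.symm (a+1) : ℕ) := Fin.lt_def.mp hR.2
  set t := min (τ.symm b : ℕ) (τ.symm (a+1) : ℕ) with htdef
  have h1t : 1 ≤ t := by omega
  have htn1 : t ≤ n - 1 := by have := Fin.is_lt (τ.symm b); omega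
  have htn : t ≤ n := by omega
  refine ⟨t, h1t, htn1, ?_, ?_⟩
  · have m1 : (a - x t).val < t := (hArc t h1t htn _).1 (by omega)
    have m2 : ¬ (((a + 1) - x t).val < t) := by rw [← hArc t h1t htn]; omega
    exact sp_right_end htn1 hn2 m1 m2
  · have m3 : ((b + 1) - x t).val < t := (hArc t h1t htn _).1 (by omega)
    have m4 : ¬ ((b - x t).val < t) := by rw [← hArc t h1t htn]; omega
    have := sp_left_end m3 m4
    linear_combination this

include hn2 hArc in
private lemma sp_rev_exists (t : ℕ) (h1 : 1 ≤ t) (h2 : t ≤ n - 1) :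
    Reverses τ (x t + ((t - 1 : ℕ) : ZMod n)) (x t - 1) ∧
      x t + ((t - 1 : ℕ) : ZMod n) ≠ x t - 1 := by
  have htn : t ≤ n := by omega
  set A := x t + ((t - 1 : ℕ) : ZMod n) with hA
  set B := x t - 1 with hB
  have vA : (A - x t).val = t - 1 := by
    rw [hA, add_sub_cancel_left, ZMod.val_cast_of_lt (by omega)]
  have vB : (B - x t).val = n - 1 := by
    have e : B - x t = ((n - 1 : ℕ) : ZMod n) := by
      rw [hB, Nat.cast_sub (by omega)]
      simp [ZMod.natCast_self]
    rw [e, ZMod.val_cast_of_lt (by omega)]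
  have vB1 : ((B + 1) - x t).val = 0 := by
    rw [hB]
    simp
  have vA1 : ((A + 1) - x t).val = t := by
    have e : (A + 1) - x t = ((t : ℕ) : ZMod n) := by
      rw [hA, Nat.cast_sub (by omega)]
      push_cast
      ring
    rw [e, ZMod.val_cast_of_lt (by omega)]
  have pA : (τ.symm A : ℕ) < t := (hArc t h1 htn A).2 (by omega)
  have pB : ¬ ((τ.symm B : ℕ) < t) := by rw [hArc t h1 htn B]; omega
  have pB1 : (τ.symm (B + 1) : ℕ) < t := (hArc t h1 htn _).2 (by omega)
  have pA1 : ¬ ((τ.symm (A + 1) : ℕ) < t) := by rw [hArc t h1 htn _]; omega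
  refine ⟨⟨Fin.lt_def.mpr (by omega), Fin.lt_def.mpr (by omega)⟩, ?_⟩
  intro h
  have : (A - x t).val = (B - x t).val := by rw [h]
  omega

include hn2 hArc in
private lemma sp_bitonic
    (hStep : ∀ t, 1 ≤ t → t + 1 ≤ n - 1 → x (t + 1) = x t ∨ x (t + 1) = x t - 1) :
    Bitonic τ := by
  have hmem : ∀ (v : ZMod n) (t : ℕ), 1 ≤ t → t ≤ n → ((τ.symm v : ℕ) < t ↔ (v - x t).val < t) :=
    fun v t h1 h2 => hArc t h1 h2 v
  have hsub1 : ∀ a : ZMod n, a - 1 ≠ a := by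
    intro a h
    have := sp_add_one_ne hn2 (a - 1)
    rw [sub_add_cancel, h] at this
    exact this rfl
  constructor
  · -- unique local minimum
    have h0n : 0 < n := by omega
    refine ⟨τ ⟨0, h0n⟩, ⟨?_, ?_⟩, ?_⟩
    · -- τ 0 precedes its left neighbour
      refine Fin.lt_def.mpr ?_
      rw [Equiv.symm_apply_apply]
      have hne : τ.symm (τ ⟨0, h0n⟩ - 1) ≠ ⟨0, h0n⟩ := by
        intro h
        exact hsub1 _ ((Equiv.symm_apply_eq τ).mp h)
      have := Fin.val_ne_of_ne hne
      simp only [Fin.val_mk] at this ⊢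
      omega
    · refine Fin.lt_def.mpr ?_
      rw [Equiv.symm_apply_apply]
      have hne : τ.symm (τ ⟨0, h0n⟩ + 1) ≠ ⟨0, h0n⟩ := by
        intro h
        exact sp_add_one_ne hn2 _ ((Equiv.symm_apply_eq τ).mp h)
      have := Fin.val_ne_of_ne hne
      simp only [Fin.val_mk] at this ⊢
      omega
    · -- uniqueness
      intro v hv
      by_contra hne
      have hp0 : (τ.symm v : ℕ) ≠ 0 := by
        intro h
        apply hne
        rw [← Equiv.symm_apply_eq]
        exact Fin.ext (by simpa using h)
      set t' := (τ.symm v : ℕ) with ht'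
      have hlt : t' ≤ n - 1 := by have := Fin.is_lt (τ.symm v); omega
      have hv1 : (τ.symm v : ℕ) < (τ.symm (v - 1) : ℕ) := Fin.lt_def.mp hv.1
      have hv2 : (τ.symm v : ℕ) < (τ.symm (v + 1) : ℕ) := Fin.lt_def.mp hv.2
      rcases Nat.lt_or_ge t' (n - 1) with hlt2 | hlt2
      · -- 1 ≤ t' ≤ n-2
        have h1t : 1 ≤ t' := by omega
        have hin : (v - x (t' + 1)).val < t' + 1 := (hmem v (t'+1) (by omega) (by omega)).1 (by omega)
        have hout : ¬ ((v - x t').val < t') := by rw [← hmem v t' h1t (by omega)]; omega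
        rcases hStep t' h1t (by omega) with hs | hs
        · rw [hs] at hin
          have hval : (v - x t').val = t' := by omega
          have hvx : v = x t' + ((t' : ℕ) : ZMod n) := by
            have h' : ((t' : ℕ) : ZMod n) = v - x t' := by
              conv_lhs => rw [← hval]
              rw [sp_cast_val]
            rw [h']; ring
          have hvm : v - 1 - x t' = ((t' - 1 : ℕ) : ZMod n) := by
            rw [hvx, Nat.cast_sub h1t]
            push_cast
            ring
          have : (τ.symm (v - 1) : ℕ) < t' := (hmem _ t' h1t (by omega)).2 (by
            rw [hvm, ZMod.val_cast_of_lt (by omega)]; omega)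
          omega
        · rw [hs] at hin
          have hw : (v - x t').val = n - 1 := by
            by_contra hw
            have hwlt : (v - x t').val < n - 1 := by have := ZMod.val_lt (v - x t'); omega
            have he : v - (x t' - 1) = (((v - x t').val + 1 : ℕ) : ZMod n) := by
              push_cast [sp_cast_val]
              ring
            rw [he, ZMod.val_cast_of_lt (by omega)] at hin
            omega
          have hvx : v = x t' - 1 := by
            have : v - x t' = ((n - 1 : ℕ) : ZMod n) := by
              conv_rhs => rw [← hw]
              rw [sp_cast_val]
            rw [Nat.cast_sub (by omega)] at this
            simp only [ZMod.natCast_self, Nat.cast_one, zero_sub] at this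
            linear_combination this
          have hvp : v + 1 = x t' := by rw [hvx]; ring
          have : (τ.symm (v + 1) : ℕ) < t' := (hmem _ t' h1t (by omega)).2 (by
            rw [hvp]
            simp only [sub_self, ZMod.val_zero]
            omega)
          omega
      · -- t' = n - 1 : v is the last vertex, its neighbours are earlier
        have : (τ.symm (v - 1) : ℕ) < n := Fin.is_lt _
        omega
  · -- unique local maximum
    have hn1 : n - 1 < n := by omega
    refine ⟨τ ⟨n - 1, hn1⟩, ⟨?_, ?_⟩, ?_⟩
    · refine Fin.lt_def.mpr ?_
      rw [Equiv.symm_apply_apply]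
      have hne : τ.symm (τ ⟨n - 1, hn1⟩ - 1) ≠ ⟨n - 1, hn1⟩ := by
        intro h
        exact hsub1 _ ((Equiv.symm_apply_eq τ).mp h)
      have := Fin.val_ne_of_ne hne
      have := Fin.is_lt (τ.symm (τ ⟨n - 1, hn1⟩ - 1))
      simp only [Fin.val_mk] at *
      omega
    · refine Fin.lt_def.mpr ?_
      rw [Equiv.symm_apply_apply]
      have hne : τ.symm (τ ⟨n - 1, hn1⟩ + 1) ≠ ⟨n - 1, hn1⟩ := by
        intro h
        exact sp_add_one_ne hn2 _ ((Equiv.symm_apply_eq τ).mp h)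
      have := Fin.val_ne_of_ne hne
      have := Fin.is_lt (τ.symm (τ ⟨n - 1, hn1⟩ + 1))
      simp only [Fin.val_mk] at *
      omega
    · intro v hv
      by_contra hne
      have hp0 : (τ.symm v : ℕ) ≠ n - 1 := by
        intro h
        apply hne
        rw [← Equiv.symm_apply_eq]
        exact Fin.ext (by simpa using h)
      set t0 := (τ.symm v : ℕ) with ht0
      have hlt : t0 ≤ n - 2 := by have := Fin.is_lt (τ.symm v); omega
      have hv1 : (τ.symm (v - 1) : ℕ) < (τ.symm v : ℕ) := Fin.lt_def.mp hv.1
      have hv2 : (τ.symm (v + 1) : ℕ) < (τ.symm v : ℕ) := Fin.lt_def.mp hv.2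
      have h1t : 1 ≤ t0 := by omega
      have hin : (v - x (t0 + 1)).val < t0 + 1 := (hmem v (t0+1) (by omega) (by omega)).1 (by omega)
      have hout : ¬ ((v - x t0).val < t0) := by rw [← hmem v t0 h1t (by omega)]; omega
      rcases hStep t0 h1t (by omega) with hs | hs
      · rw [hs] at hin
        have hval : (v - x t0).val = t0 := by omega
        have hvx : v = x t0 + ((t0 : ℕ) : ZMod n) := by
          have h' : ((t0 : ℕ) : ZMod n) = v - x t0 := by
            conv_lhs => rw [← hval]
            rw [sp_cast_val]
          rw [h']; ring
        have hvp : (v + 1) - x (t0 + 1) = ((t0 + 1 : ℕ) : ZMod n) := by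
          rw [hs, hvx]
          push_cast
          ring
        have : ¬ ((τ.symm (v + 1) : ℕ) < t0 + 1) := by
          rw [hmem _ (t0+1) (by omega) (by omega), hvp, ZMod.val_cast_of_lt (by omega)]
          omega
        omega
      · rw [hs] at hin
        have hw : (v - x t0).val = n - 1 := by
          by_contra hw
          have hwlt : (v - x t0).val < n - 1 := by have := ZMod.val_lt (v - x t0); omega
          have he : v - (x t0 - 1) = (((v - x t0).val + 1 : ℕ) : ZMod n) := by
            push_cast [sp_cast_val]
            ring
          rw [he, ZMod.val_cast_of_lt (by omega)] at hin
          omega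
        have hvx : v = x t0 - 1 := by
          have : v - x t0 = ((n - 1 : ℕ) : ZMod n) := by
            conv_rhs => rw [← hw]
            rw [sp_cast_val]
          rw [Nat.cast_sub (by omega)] at this
          simp only [ZMod.natCast_self, Nat.cast_one, zero_sub] at this
          linear_combination this
        have hvm : (v - 1) - x (t0 + 1) = ((n - 1 : ℕ) : ZMod n) := by
          rw [hs, hvx, Nat.cast_sub (by omega)]
          simp only [ZMod.natCast_self, Nat.cast_one, zero_sub]
          ring
        have : ¬ ((τ.symm (v - 1) : ℕ) < t0 + 1) := by
          rw [hmem _ (t0+1) (by omega) (by omega), hvm, ZMod.val_cast_of_lt (by omega)]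
          omega
        omega

end Rev

private lemma sp_phi_one {n k : ℕ} [NeZero n] (hkn : k ∣ n) :
    (((1 : ZMod n).val : ℕ) : ZMod k) = 1 := by
  have := sp_phi_natCast hkn 1
  rwa [Nat.cast_one, Nat.cast_one] at this

private lemma sp_sub_one_ne {n : ℕ} [NeZero n] (hn2 : 2 ≤ n) (a : ZMod n) : a - 1 ≠ a := by
  intro h
  have := sp_add_one_ne hn2 (a - 1)
  rw [sub_add_cancel, h] at this
  exact this rfl

private lemma sp_min0 {n : ℕ} [NeZero n] (hn2 : 2 ≤ n) (τ : Fin n ≃ ZMod n) :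
    CycLocalMin τ (τ ⟨0, by omega⟩) := by
  have h0n : (0:ℕ) < n := by omega
  constructor
  · refine Fin.lt_def.mpr ?_
    rw [Equiv.symm_apply_apply]
    have hne : τ.symm (τ ⟨0, h0n⟩ - 1) ≠ ⟨0, h0n⟩ := by
      intro h
      exact sp_sub_one_ne hn2 _ ((Equiv.symm_apply_eq τ).mp h)
    have := Fin.val_ne_of_ne hne
    simp only [Fin.val_mk] at this ⊢
    omega
  · refine Fin.lt_def.mpr ?_
    rw [Equiv.symm_apply_apply]
    have hne : τ.symm (τ ⟨0, h0n⟩ + 1) ≠ ⟨0, h0n⟩ := by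
      intro h
      exact sp_add_one_ne hn2 _ ((Equiv.symm_apply_eq τ).mp h)
    have := Fin.val_ne_of_ne hne
    simp only [Fin.val_mk] at this ⊢
    omega

private lemma sp_forward {n k : ℕ} (hk : 1 < k) (hn2 : 2 ≤ n)
    {ℓ : ZMod n → ZMod n → ZMod k} (hP : IsSigmaPartition n k ℓ)
    (τ : Fin n ≃ ZMod n) (hOri : IsTransSigmaOrientation n k ℓ τ) (hBit : Bitonic τ) :
    2 * k ∣ n ∧ ∀ j : ℕ, 1 ≤ j → j ≤ n / 2 - 1 →
      ℓ 0 ((j + 1 : ℕ) : ZMod n) = ℓ 0 ((j : ℕ) : ZMod n) ∨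
      ℓ 0 ((j + 1 : ℕ) : ZMod n) = ℓ 0 ((j : ℕ) : ZMod n) + 1 := by
  haveI : NeZero n := ⟨by omega⟩
  haveI : NeZero k := ⟨by omega⟩
  have hkn : k ∣ n := sp_k_dvd hn2 hk hP
  have h0n : (0:ℕ) < n := by omega
  obtain ⟨j0, hj0, huniq⟩ := hBit.1
  have hN : ∀ v : ZMod n, τ.symm v ≠ 0 →
      τ.symm (v - 1) < τ.symm v ∨ τ.symm (v + 1) < τ.symm v := by
    intro v hv0
    by_contra hcon
    push_neg at hcon
    have hvmin : CycLocalMin τ v := by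
      constructor
      · show τ.symm v < τ.symm (v - 1)
        exact lt_of_le_of_ne hcon.1 (fun h => sp_sub_one_ne hn2 v (τ.symm.injective h.symm))
      · show τ.symm v < τ.symm (v + 1)
        exact lt_of_le_of_ne hcon.2 (fun h => sp_add_one_ne hn2 v (τ.symm.injective h.symm))
    have hveq : v = τ ⟨0, h0n⟩ := (huniq v hvmin).trans (huniq _ (sp_min0 hn2 τ)).symm
    apply hv0
    rw [hveq, Equiv.symm_apply_apply]
    exact Fin.ext (by simp)
  have hex : ∀ t, 1 ≤ t ∧ t ≤ n →
      ∃ x0 : ZMod n, ∀ v : ZMod n, ((τ.symm v : ℕ) < t ↔ (v - x0).val < t) :=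
    fun t h => sp_arcs_exist hn2 τ hN t h.1 h.2
  classical
  set x : ℕ → ZMod n := fun t => if h : 1 ≤ t ∧ t ≤ n then (hex t h).choose else 0 with hxdef
  have hArc : ∀ t, 1 ≤ t → t ≤ n → ∀ v : ZMod n, ((τ.symm v : ℕ) < t ↔ (v - x t).val < t) := by
    intro t h1 h2 v
    have he : x t = (hex t ⟨h1, h2⟩).choose := by
      rw [hxdef]
      simp only [dif_pos (And.intro h1 h2)]
    rw [he]
    exact (hex t ⟨h1, h2⟩).choose_spec v
  have hStep := sp_step τ x hArc
  set y : ℕ → ZMod n := fun t => x t + ((t - 1 : ℕ) : ZMod n) with hydef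
  -- key label equations
  have hstar : ∀ t, 1 ≤ t → t ≤ n - 1 →
      ℓ 0 (-((t : ℕ) : ZMod n)) = -1 - (((y t).val : ℕ) : ZMod k) := by
    intro t h1 h2
    obtain ⟨hRev, hne⟩ := sp_rev_exists hn2 τ x hArc t h1 h2
    have hOr := hOri _ _ hne hRev
    have hsh := sp_shift' hP (y t) (x t - 1) hne
    have hba : (x t - 1) - y t = -((t : ℕ) : ZMod n) := by
      rw [hydef]
      simp only []
      rw [Nat.cast_sub h1]
      push_cast
      ring
    rw [hba] at hsh
    rw [hOr] at hsh
    linear_combination -hsh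
  have hss : ∀ t, 1 ≤ t → t ≤ n - 1 →
      ℓ 0 ((t : ℕ) : ZMod n) = -1 - (((y t).val : ℕ) : ZMod k) + (t : ZMod k) := by
    intro t h1 h2
    have he : ((t : ℕ) : ZMod n) ≠ 0 := by
      intro h
      have hd := (ZMod.natCast_eq_zero_iff t n).mp h
      have := Nat.le_of_dvd (by omega) hd
      omega
    have hsym := sp_sym hP ((t : ℕ) : ZMod n) he
    rw [ZMod.val_cast_of_lt (by omega)] at hsym
    rw [hstar t h1 h2] at hsym
    linear_combination -hsym
  have ystep : ∀ t, 1 ≤ t → t ≤ n - 2 → y (t + 1) = y t + 1 ∨ y (t + 1) = y t := by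
    intro t h1 h2
    have e1 : (t + 1 - 1 : ℕ) = t := by omega
    rcases hStep t h1 (by omega) with hs | hs
    · left
      rw [hydef]
      simp only []
      rw [hs, e1, Nat.cast_sub h1]
      push_cast
      ring
    · right
      rw [hydef]
      simp only []
      rw [hs, e1, Nat.cast_sub h1]
      push_cast
      ring
  set W : ℕ → ZMod n := fun d => y (n - d) - x d + 1 with hWdef
  have hW0 : ∀ d, 1 ≤ d → d ≤ n - 1 → (((W d).val : ℕ) : ZMod k) = 0 := by
    intro d h1 h2
    have hstar' := hstar (n - d) (by omega) (by omega)
    have hcastnd : -(((n - d : ℕ)) : ZMod n) = ((d : ℕ) : ZMod n) := by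
      have h : ((n - d : ℕ) : ZMod n) + ((d : ℕ) : ZMod n) = 0 := by
        rw [← Nat.cast_add, Nat.sub_add_cancel (by omega)]
        exact ZMod.natCast_self n
      linear_combination -h
    rw [hcastnd] at hstar'
    have hssd := hss d h1 h2
    -- φ(y (n-d)) = φ(y d) - d
    have hynd : (((y (n - d)).val : ℕ) : ZMod k)
        = (((y d).val : ℕ) : ZMod k) - (d : ZMod k) := by
      linear_combination hstar' - hssd
    -- φ(y d) = φ(x d) + (d - 1)
    have hxd : (((y d).val : ℕ) : ZMod k)
        = (((x d).val : ℕ) : ZMod k) + ((d : ZMod k) - 1) := by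
      have e : y d = x d + ((d - 1 : ℕ) : ZMod n) := rfl
      rw [e, sp_phi_add hkn, sp_phi_natCast hkn, Nat.cast_sub h1, Nat.cast_one]
    -- φ(W d) + φ(x d) = φ(y (n-d)) + 1
    have hWx : (((W d).val : ℕ) : ZMod k) + (((x d).val : ℕ) : ZMod k)
        = (((y (n - d)).val : ℕ) : ZMod k) + 1 := by
      have e : W d + x d = y (n - d) + 1 := by
        rw [hWdef]
        simp only []
        ring
      have h3 := sp_phi_add hkn (W d) (x d)
      rw [e, sp_phi_add hkn (y (n - d)) 1, sp_phi_one hkn] at h3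
      linear_combination -h3
    linear_combination hWx + hynd + hxd
  have hWstep : ∀ d, 1 ≤ d → d ≤ n - 2 →
      W (d + 1) = W d ∨ W (d + 1) = W d + 1 ∨ W (d + 1) = W d - 1 := by
    intro d h1 h2
    have hyidx : n - d = (n - d - 1) + 1 := by omega
    have hy' := ystep (n - d - 1) (by omega) (by omega)
    rw [← hyidx] at hy'
    have hxs := hStep d h1 (by omega)
    have e2 : n - (d + 1) = n - d - 1 := by omega
    have eW1 : W (d + 1) = y (n - d - 1) - x (d + 1) + 1 := by
      rw [hWdef]; simp only []; rw [e2]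
    have eW : W d = y (n - d) - x d + 1 := rfl
    rcases hy' with hy | hy <;> rcases hxs with hx | hx
    · right; right
      rw [eW1, eW]
      linear_combination -hy - hx
    · left
      rw [eW1, eW]
      linear_combination -hy - hx
    · left
      rw [eW1, eW]
      linear_combination -hy - hx
    · right; left
      rw [eW1, eW]
      linear_combination -hy - hx
  have hone : (1 : ZMod k) ≠ 0 := by
    haveI : Fact (1 < k) := ⟨hk⟩
    exact one_ne_zero
  have hWconst : ∀ d, 1 ≤ d → d ≤ n - 1 → W d = W 1 := by
    intro d
    induction d with
    | zero => omega
    | succ d ih =>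
      intro h1 h2
      by_cases hd : d = 0
      · subst hd; rfl
      · have hWs := hWstep d (by omega) (by omega)
        have h0 := hW0 d (by omega) (by omega)
        have h0' := hW0 (d + 1) (by omega) h2
        rcases hWs with h | h | h
        · rw [h]; exact ih (by omega) (by omega)
        · exfalso
          rw [h, sp_phi_add hkn, sp_phi_one hkn, h0] at h0'
          rw [zero_add] at h0'
          exact hone h0'
        · exfalso
          have hW' : W d = W (d + 1) + 1 := by rw [h]; ring
          rw [hW', sp_phi_add hkn, sp_phi_one hkn, h0'] at h0
          rw [zero_add] at h0
          exact hone h0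
  have hWsum : W 1 + W (n - 1) = 0 := by
    have e1 : n - (n - 1) = 1 := by omega
    have eA : W 1 = y (n - 1) - x 1 + 1 := rfl
    have eB : W (n - 1) = y 1 - x (n - 1) + 1 := by
      rw [hWdef]; simp only []; rw [e1]
    have eyA : y (n - 1) = x (n - 1) + ((n - 2 : ℕ) : ZMod n) := by
      have e3 : n - 1 - 1 = n - 2 := by omega
      rw [hydef]; simp only []; rw [e3]
    have eyB : y 1 = x 1 := by
      rw [hydef]; simp only []
      norm_num
    have e2 : ((n - 2 : ℕ) : ZMod n) = -2 := by
      rw [Nat.cast_sub hn2]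
      simp [ZMod.natCast_self]
    rw [eA, eB, eyA, eyB, e2]
    ring
  have hW1ne : W 1 ≠ 0 := by
    intro h
    have hx1 : x 1 - x (n - 1) = ((n - 1 : ℕ) : ZMod n) := by
      have hW1e : y (n - 1) - x 1 + 1 = 0 := h
      have eyA : y (n - 1) = x (n - 1) + ((n - 2 : ℕ) : ZMod n) := by
        have e3 : n - 1 - 1 = n - 2 := by omega
        rw [hydef]; simp only []; rw [e3]
      have e2 : ((n - 1 : ℕ) : ZMod n) = ((n - 2 : ℕ) : ZMod n) + 1 := by
        rw [show n - 1 = (n - 2) + 1 by omega]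
        push_cast
        ring
      rw [eyA] at hW1e
      rw [e2]
      linear_combination -hW1e
    have hp1 : (τ.symm (x 1) : ℕ) < 1 := by
      refine (hArc 1 (le_refl 1) (by omega) _).2 ?_
      simp
    have hp2 : (x 1 - x (n - 1)).val < n - 1 := by
      refine (hArc (n - 1) (by omega) (by omega) _).1 ?_
      omega
    rw [hx1, ZMod.val_cast_of_lt (by omega)] at hp2
    omega
  have hWn1 : W (n - 1) = W 1 := hWconst (n - 1) (by omega) (le_refl _)
  have hcastW : (((W 1).val : ℕ) : ZMod n) = W 1 := sp_cast_val (W 1)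
  have hwne : (W 1).val ≠ 0 := by
    simp only [ne_eq, ZMod.val_eq_zero]
    exact hW1ne
  have h2w : ((2 * (W 1).val : ℕ) : ZMod n) = 0 := by
    push_cast
    rw [hcastW]
    linear_combination hWsum - hWn1
  have hndvd : n ∣ 2 * (W 1).val := (ZMod.natCast_eq_zero_iff _ n).mp h2w
  have hwlt : (W 1).val < n := ZMod.val_lt _
  have h2wn : 2 * (W 1).val = n := by
    obtain ⟨c, hc⟩ := hndvd
    rcases Nat.lt_or_ge c 2 with hc2 | hc2
    · interval_cases c
      · rw [mul_zero] at hc; omega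
      · rw [mul_one] at hc; omega
    · exfalso
      have hge : n * 2 ≤ n * c := Nat.mul_le_mul_left n hc2
      rw [← hc] at hge
      omega
  have hkw : k ∣ (W 1).val := by
    have := hW0 1 (le_refl 1) (by omega)
    exact (ZMod.natCast_eq_zero_iff _ k).mp this
  constructor
  · rw [← h2wn]
    exact mul_dvd_mul_left 2 hkw
  · intro j hj1 hj2
    have hjw : j ≤ (W 1).val - 1 := by omega
    have hjn : j ≤ n - 2 := by omega
    have hs1 := hss j hj1 (by omega)
    have hs2 := hss (j + 1) (by omega) (by omega)
    rcases ystep j hj1 hjn with hy | hy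
    · left
      rw [hs1, hs2, hy, sp_phi_add hkn, sp_phi_one hkn]
      push_cast
      ring
    · right
      rw [hs1, hs2, hy]
      push_cast
      ring


private lemma sp_construct {n k : ℕ} (hk : 1 < k) (hn2 : 2 ≤ n)
    {ℓ : ZMod n → ZMod n → ZMod k} (hP : IsSigmaPartition n k ℓ) (hkn : k ∣ n)
    (hstep : ∀ t, 1 ≤ t → t ≤ n - 2 →
      ℓ 0 ((t + 1 : ℕ) : ZMod n) = ℓ 0 ((t : ℕ) : ZMod n) ∨
      ℓ 0 ((t + 1 : ℕ) : ZMod n) = ℓ 0 ((t : ℕ) : ZMod n) + 1) :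
    ∃ τ : Fin n ≃ ZMod n, IsTransSigmaOrientation n k ℓ τ ∧ Bitonic τ := by
  haveI : NeZero n := ⟨by omega⟩
  haveI : NeZero k := ⟨by omega⟩
  classical
  have hone : (1 : ZMod k) ≠ 0 := by
    haveI : Fact (1 < k) := ⟨hk⟩
    exact one_ne_zero
  set c : ℕ → ZMod k := fun t => -1 - ℓ 0 ((t : ℕ) : ZMod n) + (t : ZMod k) with hc
  set ν : ℕ → ℕ := fun t => ((Finset.Ico 1 t).filter
    (fun s => ℓ 0 ((s + 1 : ℕ) : ZMod n) = ℓ 0 ((s : ℕ) : ZMod n))).card with hν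
  set y : ℕ → ZMod n := fun t => (((c 1).val : ℕ) : ZMod n) + ((ν t : ℕ) : ZMod n) with hy
  set x : ℕ → ZMod n := fun t => y t - ((t - 1 : ℕ) : ZMod n) with hx
  set f : Fin n → ZMod n := fun s =>
    if ℓ 0 (((s : ℕ) + 1 : ℕ) : ZMod n) = ℓ 0 (((s : ℕ) : ℕ) : ZMod n)
    then x ((s : ℕ) + 1) + ((s : ℕ) : ZMod n)
    else x ((s : ℕ) + 1) with hf
  have hν1 : ν 1 = 0 := by rw [hν]; simp
  have hνs : ∀ t, 1 ≤ t → ν (t + 1) =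
      if ℓ 0 ((t + 1 : ℕ) : ZMod n) = ℓ 0 ((t : ℕ) : ZMod n) then ν t + 1 else ν t := by
    intro t h1
    rw [hν]
    simp only []
    rw [Nat.Ico_succ_right_eq_insert_Ico h1, Finset.filter_insert]
    split_ifs with h
    · rw [Finset.card_insert_of_notMem (by simp)]
    · rfl
  have hhalt : ∀ t, 1 ≤ t → ℓ 0 ((t + 1 : ℕ) : ZMod n) = ℓ 0 ((t : ℕ) : ZMod n) →
      y (t + 1) = y t + 1 ∧ x (t + 1) = x t := by
    intro t h1 h
    have hyy : y (t + 1) = y t + 1 := by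
      rw [hy]
      simp only []
      rw [hνs t h1, if_pos h]
      push_cast
      ring
    refine ⟨hyy, ?_⟩
    rw [hx]
    simp only []
    rw [hyy, Nat.add_sub_cancel, Nat.cast_sub h1]
    push_cast
    ring
  have hstp : ∀ t, 1 ≤ t → ℓ 0 ((t + 1 : ℕ) : ZMod n) ≠ ℓ 0 ((t : ℕ) : ZMod n) →
      y (t + 1) = y t ∧ x (t + 1) = x t - 1 := by
    intro t h1 h
    have hyy : y (t + 1) = y t := by
      rw [hy]
      simp only []
      rw [hνs t h1, if_neg h]
    refine ⟨hyy, ?_⟩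
    rw [hx]
    simp only []
    rw [hyy, Nat.add_sub_cancel, Nat.cast_sub h1]
    push_cast
    ring
  have hcy : ∀ t, 1 ≤ t → t ≤ n - 1 → (((y t).val : ℕ) : ZMod k) = c t := by
    intro t
    induction t with
    | zero => omega
    | succ t ih =>
      intro _ h2
      by_cases ht : t = 0
      · subst ht
        simp only [Nat.zero_add]
        have hy1 : y 1 = (((c 1).val : ℕ) : ZMod n) := by
          rw [hy]
          simp only [hν1]
          rw [Nat.cast_zero, add_zero]
        rw [hy1, sp_phi_natCast hkn, sp_cast_val]
      · have h1t : 1 ≤ t := by omega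
        rcases hstep t h1t (by omega) with h | h
        · rw [(hhalt t h1t h).1, sp_phi_add hkn, sp_phi_one hkn, ih h1t (by omega)]
          rw [hc]
          simp only []
          rw [h]
          push_cast
          ring
        · have hne : ℓ 0 ((t + 1 : ℕ) : ZMod n) ≠ ℓ 0 ((t : ℕ) : ZMod n) := by
            rw [h]
            intro hcontra
            exact hone (by linear_combination hcontra)
          rw [(hstp t h1t hne).1, ih h1t (by omega)]
          rw [hc]
          simp only []
          rw [h]
          push_cast
          ring
  have hM1 : ∀ s : Fin n, (f s - x ((s : ℕ) + 1)).val < (s : ℕ) + 1 := by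
    intro s
    rw [hf]
    simp only []
    split_ifs with h
    · rw [add_sub_cancel_left, ZMod.val_cast_of_lt s.is_lt]
      omega
    · rw [sub_self, ZMod.val_zero]
      omega
  have hM2 : ∀ s : Fin n, 1 ≤ (s : ℕ) → ¬ ((f s - x (s : ℕ)).val < (s : ℕ)) := by
    intro s h1
    rw [hf]
    simp only []
    split_ifs with h
    · rw [(hhalt _ h1 h).2, add_sub_cancel_left, ZMod.val_cast_of_lt s.is_lt]
      omega
    · rw [(hstp _ h1 h).2]
      have e : x (s : ℕ) - 1 - x (s : ℕ) = ((n - 1 : ℕ) : ZMod n) := by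
        rw [Nat.cast_sub (by omega)]
        simp only [ZMod.natCast_self, Nat.cast_one]
        ring
      rw [e, ZMod.val_cast_of_lt (by omega)]
      have := s.is_lt
      omega
  have hNest : ∀ t, 1 ≤ t → t + 1 ≤ n → ∀ v : ZMod n,
      (v - x t).val < t → (v - x (t + 1)).val < t + 1 := by
    intro t h1 h2 v hv
    by_cases h : ℓ 0 ((t + 1 : ℕ) : ZMod n) = ℓ 0 ((t : ℕ) : ZMod n)
    · rw [(hhalt t h1 h).2]
      omega
    · rw [(hstp t h1 h).2]
      have he : v - (x t - 1) = (((v - x t).val + 1 : ℕ) : ZMod n) := by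
        push_cast [sp_cast_val]
        ring
      rw [he, ZMod.val_cast_of_lt (by omega)]
      omega
  have hNestLe : ∀ b a, 1 ≤ a → a ≤ b → b ≤ n → ∀ v : ZMod n,
      (v - x a).val < a → (v - x b).val < b := by
    intro b
    induction b with
    | zero => omega
    | succ b ih =>
      intro a h1 hab hbn v hv
      rcases Nat.lt_or_ge a (b + 1) with hlt | hge
      · exact hNest b (by omega) hbn v (ih a h1 (by omega) (by omega) v hv)
      · have he : a = b + 1 := by omega
        subst he
        exact hv
  have hSur : ∀ t, 1 ≤ t → t ≤ n - 1 → ∀ v : ZMod n,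
      (v - x t).val < t → ∃ s : Fin n, (s : ℕ) < t ∧ f s = v := by
    intro t
    induction t with
    | zero => omega
    | succ t ih =>
      intro _ h2 v hv
      by_cases ht : t = 0
      · subst ht
        simp only [Nat.zero_add] at hv ⊢
        have hv0 : v = x 1 := by
          have : (v - x 1).val = 0 := by omega
          rw [ZMod.val_eq_zero, sub_eq_zero] at this
          exact this
        refine ⟨⟨0, by omega⟩, by simp, ?_⟩
        rw [hf]
        simp only [Fin.val_mk]
        split_ifs <;> simp [hv0]
      · have h1t : 1 ≤ t := by omega
        by_cases hc1 : ℓ 0 ((t + 1 : ℕ) : ZMod n) = ℓ 0 ((t : ℕ) : ZMod n)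
        · rw [(hhalt t h1t hc1).2] at hv
          by_cases hvt : (v - x t).val < t
          · obtain ⟨s, hs1, hs2⟩ := ih h1t (by omega) v hvt
            exact ⟨s, by omega, hs2⟩
          · have hval : (v - x t).val = t := by omega
            refine ⟨⟨t, by omega⟩, by simp, ?_⟩
            rw [hf]
            simp only [Fin.val_mk]
            rw [if_pos hc1, (hhalt t h1t hc1).2]
            have hveq : v = x t + (((v - x t).val : ℕ) : ZMod n) := by
              rw [sp_cast_val]
              ring
            rw [hval] at hveq
            exact hveq.symm
        · rw [(hstp t h1t hc1).2] at hv
          by_cases hv0 : v - x t + 1 = 0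
          · refine ⟨⟨t, by omega⟩, by simp, ?_⟩
            rw [hf]
            simp only [Fin.val_mk]
            rw [if_neg hc1, (hstp t h1t hc1).2]
            linear_combination -hv0
          · have hvv : (v - (x t - 1)).val ≠ 0 := by
              simp only [ne_eq, ZMod.val_eq_zero]
              intro h
              apply hv0
              linear_combination h
            have he : v - x t = (((v - (x t - 1)).val - 1 : ℕ) : ZMod n) := by
              rw [Nat.cast_sub (by omega), sp_cast_val]
              push_cast
              ring
            have hlt : (v - x t).val < t := by
              rw [he, ZMod.val_cast_of_lt (by have := ZMod.val_lt (v - (x t - 1)); omega)]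
              omega
            obtain ⟨s, hs1, hs2⟩ := ih h1t (by omega) v hlt
            exact ⟨s, by omega, hs2⟩
  have hInjKey : ∀ s s' : Fin n, (s : ℕ) < (s' : ℕ) → f s ≠ f s' := by
    intro s s' hss heq
    have h1 := hM1 s
    have h2 := hNestLe (s' : ℕ) ((s : ℕ) + 1) (by omega) (by omega)
      (by have := s'.is_lt; omega) (f s) h1
    rw [heq] at h2
    exact hM2 s' (by omega) h2
  have hInj : Function.Injective f := by
    intro s s' h
    rcases lt_trichotomy ((s : ℕ)) ((s' : ℕ)) with hlt | heq | hlt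
    · exact absurd h (hInjKey s s' hlt)
    · exact Fin.ext heq
    · exact absurd h.symm (hInjKey s' s hlt)
  have hBij : Function.Bijective f :=
    (Fintype.bijective_iff_injective_and_card f).mpr ⟨hInj, by simp [ZMod.card]⟩
  set τ : Fin n ≃ ZMod n := Equiv.ofBijective f hBij with hτdef
  have hsymmv : ∀ v : ZMod n, f (τ.symm v) = v := fun v => τ.apply_symm_apply v
  have hsymm_eq : ∀ (s : Fin n) (v : ZMod n), f s = v → τ.symm v = s := by
    intro s v h
    apply hInj
    rw [hsymmv v, h]
  have hArc : ∀ t, 1 ≤ t → t ≤ n → ∀ v : ZMod n, ((τ.symm v : ℕ) < t ↔ (v - x t).val < t) := by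
    intro t h1 h2 v
    constructor
    · intro hp
      have h1' := hM1 (τ.symm v)
      rw [hsymmv v] at h1'
      exact hNestLe t ((τ.symm v : ℕ) + 1) (by omega) (by omega) h2 v h1'
    · intro hv
      rcases Nat.lt_or_ge t n with htn | htn
      · obtain ⟨s, hs1, hs2⟩ := hSur t h1 (by omega) v hv
        rw [hsymm_eq s v hs2]
        exact hs1
      · have := Fin.is_lt (τ.symm v)
        omega
  have hStepx : ∀ t, 1 ≤ t → t + 1 ≤ n - 1 → x (t + 1) = x t ∨ x (t + 1) = x t - 1 := by
    intro t h1 _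
    by_cases h : ℓ 0 ((t + 1 : ℕ) : ZMod n) = ℓ 0 ((t : ℕ) : ZMod n)
    · exact Or.inl (hhalt t h1 h).2
    · exact Or.inr (hstp t h1 h).2
  refine ⟨τ, ?_, sp_bitonic hn2 τ x hArc hStepx⟩
  intro a b hab hRev
  obtain ⟨t, h1, h2, ha, hb⟩ := sp_rev_classify hn2 τ x hArc hRev
  have hsh := sp_shift' hP a b hab
  have hba : b - a = -((t : ℕ) : ZMod n) := by
    rw [ha, hb, Nat.cast_sub h1]
    push_cast
    ring
  have hay : a = y t := by
    rw [ha, hx]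
    simp only []
    ring
  have hphia : ((a.val : ℕ) : ZMod k) = -1 - ℓ 0 ((t : ℕ) : ZMod n) + (t : ZMod k) := by
    rw [hay, hcy t h1 h2, hc]
  have het : ((t : ℕ) : ZMod n) ≠ 0 := by
    intro h
    have hd := (ZMod.natCast_eq_zero_iff t n).mp h
    have := Nat.le_of_dvd (by omega) hd
    omega
  have hsym := sp_sym hP ((t : ℕ) : ZMod n) het
  rw [ZMod.val_cast_of_lt (by omega)] at hsym
  rw [hsh, hba, hsym, hphia]
  ring


/-- A σ_n-k-partition admits a standard transitive σ_n-orientation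
iff 2k divides n and its defining sequence halts or steps at every index. -/
theorem stmt_4 (n k : ℕ) (hk : 1 < k) (hn : 0 < n)
    (ℓ : ZMod n → ZMod n → ZMod k) (hP : IsSigmaPartition n k ℓ) :
    (∃ τ : Fin n ≃ ZMod n, IsTransSigmaOrientation n k ℓ τ ∧ Bitonic τ) ↔
      (2 * k ∣ n ∧ ∀ j : ℕ, 1 ≤ j → j ≤ n / 2 - 1 →
        ℓ 0 ((j + 1 : ℕ) : ZMod n) = ℓ 0 ((j : ℕ) : ZMod n) ∨
        ℓ 0 ((j + 1 : ℕ) : ZMod n) = ℓ 0 ((j : ℕ) : ZMod n) + 1) := by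
  constructor
  · rintro ⟨τ, hOri, hBit⟩
    rcases Nat.lt_or_ge n 2 with hn1 | hn2
    · exfalso
      have hn1' : n = 1 := by omega
      subst hn1'
      obtain ⟨j, hj, _⟩ := hBit.1
      have he : j - 1 = j := Subsingleton.elim _ _
      have h1 := hj.1
      rw [he] at h1
      exact lt_irrefl _ h1
    · exact sp_forward hk hn2 hP τ hOri hBit
  · rintro ⟨hdvd, hseq⟩
    have hklen : 2 * k ≤ n := Nat.le_of_dvd hn hdvd
    have hn4 : 4 ≤ n := by omega
    have hn2 : 2 ≤ n := by omega
    haveI : NeZero n := ⟨by omega⟩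
    haveI : NeZero k := ⟨by omega⟩
    have hkn : k ∣ n := dvd_trans (Dvd.intro_left 2 rfl) hdvd
    have heven : n % 2 = 0 := by
      have h2n : 2 ∣ n := dvd_trans ⟨k, rfl⟩ hdvd
      obtain ⟨cc, hcc⟩ := h2n
      omega
    apply sp_construct hk hn2 hP hkn
    intro t h1 h2
    rcases Nat.lt_or_ge t (n / 2) with hlt | hge
    · exact hseq t h1 (by omega)
    · have hFs : ∀ s, 1 ≤ s → s ≤ n - 1 →
          ℓ 0 ((n - s : ℕ) : ZMod n) = ℓ 0 ((s : ℕ) : ZMod n) - (s : ZMod k) := by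
        intro s hs1 hs2
        have he : ((s : ℕ) : ZMod n) ≠ 0 := by
          intro h
          have hd := (ZMod.natCast_eq_zero_iff s n).mp h
          have := Nat.le_of_dvd (by omega) hd
          omega
        have hsym := sp_sym hP ((s : ℕ) : ZMod n) he
        rw [ZMod.val_cast_of_lt (by omega)] at hsym
        have hcast : ((n - s : ℕ) : ZMod n) = -((s : ℕ) : ZMod n) := by
          have h : ((n - s : ℕ) : ZMod n) + ((s : ℕ) : ZMod n) = 0 := by
            rw [← Nat.cast_add, Nat.sub_add_cancel (by omega)]
            exact ZMod.natCast_self n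
          linear_combination h
        rw [hcast]
        exact hsym
      have hFt : ℓ 0 ((t : ℕ) : ZMod n)
          = ℓ 0 ((n - t : ℕ) : ZMod n) - ((n - t : ℕ) : ZMod k) := by
        have h := hFs (n - t) (by omega) (by omega)
        rw [show n - (n - t) = t from by omega] at h
        linear_combination h
      have hFt1 : ℓ 0 ((t + 1 : ℕ) : ZMod n)
          = ℓ 0 ((n - t - 1 : ℕ) : ZMod n) - ((n - t - 1 : ℕ) : ZMod k) := by
        have h := hFs (n - t - 1) (by omega) (by omega)
        rw [show n - (n - t - 1) = t + 1 from by omega] at h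
        linear_combination h
      have hsq := hseq (n - t - 1) (by omega) (by omega)
      rw [show n - t - 1 + 1 = n - t from by omega] at hsq
      have hcast1 : ((n - t : ℕ) : ZMod k) = ((n - t - 1 : ℕ) : ZMod k) + 1 := by
        rw [show n - t = (n - t - 1) + 1 from by omega]
        push_cast
        ring
      rcases hsq with h | h
      · right
        rw [hFt, hFt1, h, hcast1]
        ring
      · left
        rw [hFt, hFt1, h, hcast1]
        ring
end

section
/- Let k > 1. If T and T′ are two standard transitive σ_n-orientations of the same σ_n-k-partition of K_n, then T′ is a shift of T by a power of σ_n^k: there exists an integer t such that for all distinct vertices a, b, the edge {a,b} is oriented from a to b in T if and only if the edge {a+kt, b+kt} is oriented from a+kt to b+kt in T′. -/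
namespace Stmt5Aux

variable {n k : ℕ}

def UV (τ : Fin n ≃ ZMod n) (m : ZMod n) (t u v : ℕ) : Prop :=
  u + v = t ∧ ∀ x : ZMod n,
    ((τ.symm x : ℕ) ≤ t ↔ (∃ i ≤ u, x = m + (i : ℕ)) ∨ (∃ j ≤ v, x = m - (j : ℕ)))

lemma cast_inj (hn : 0 < n) {a b : ℕ} (ha : a < n) (hb : b < n)
    (h : (a : ZMod n) = (b : ZMod n)) : a = b := by
  haveI : NeZero n := ⟨by omega⟩
  have := congrArg ZMod.val h
  rwa [ZMod.val_cast_of_lt ha, ZMod.val_cast_of_lt hb] at this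

lemma cast_ne_zero (hn : 0 < n) {a : ℕ} (h0 : 0 < a) (ha : a < n) :
    (a : ZMod n) ≠ 0 := by
  intro h
  have : a = 0 := cast_inj hn ha hn (by simpa using h)
  omega

lemma one_ne_zero' (hn : 2 ≤ n) : (1 : ZMod n) ≠ 0 := by
  have := cast_ne_zero (n := n) (a := 1) (by omega) (by omega) (by omega)
  simpa using this

lemma min_first (hn : 2 ≤ n) (τ : Fin n ≃ ZMod n) :
    CycLocalMin τ (τ ⟨0, by omega⟩) := by
  have hone : (1 : ZMod n) ≠ 0 := one_ne_zero' hn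
  set m := τ ⟨0, by omega⟩ with hm
  have hmpos : (τ.symm m : ℕ) = 0 := by simp [hm]
  have key : ∀ y, y ≠ m → Precedes τ m y := by
    intro y hy
    have h1 : τ.symm y ≠ τ.symm m := fun h => hy (by simpa using congrArg τ h)
    have h2 : (τ.symm y : ℕ) ≠ 0 := by
      intro h; exact h1 (Fin.ext (by omega))
    show τ.symm m < τ.symm y
    rw [Fin.lt_def]
    omega
  constructor
  · exact key _ (fun h => hone (by linear_combination -h))
  · exact key _ (fun h => hone (by linear_combination h))

lemma arc (hn : 2 ≤ n) (τ : Fin n ≃ ZMod n) (hmin : ∃! j, CycLocalMin τ j) :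
    ∀ t : ℕ, t < n → ∃ u v, UV τ (τ ⟨0, by omega⟩) t u v := by
  have hone : (1 : ZMod n) ≠ 0 := one_ne_zero' hn
  set m := τ ⟨0, by omega⟩ with hm
  intro t
  induction t with
  | zero =>
    intro _
    refine ⟨0, 0, by omega, fun x => ?_⟩
    constructor
    · intro hx
      left
      refine ⟨0, le_refl 0, ?_⟩
      have hv0 : (τ.symm x : ℕ) = 0 := by omega
      have hx0 : τ.symm x = ⟨0, by omega⟩ := Fin.ext (by simp [hv0])
      have := congrArg τ hx0
      simpa [hm] using this
    · rintro (⟨i, hi, rfl⟩ | ⟨j, hj, rfl⟩)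
      · have : i = 0 := by omega
        subst this; simp [hm]
      · have : j = 0 := by omega
        subst this; simp [hm]
  | succ t ih =>
    intro ht1
    obtain ⟨u, v, huv, H⟩ := ih (by omega)
    set w := τ ⟨t+1, ht1⟩ with hwdef
    have hwpos : (τ.symm w : ℕ) = t + 1 := by simp [hwdef]
    have hwnot : ¬ (τ.symm w : ℕ) ≤ t := by omega
    have hwR : ¬ ((∃ i ≤ u, w = m + (i:ℕ)) ∨ (∃ j ≤ v, w = m - (j:ℕ))) :=
      fun h => hwnot ((H w).2 h)
    have key : w = m + ((u+1 : ℕ) : ZMod n) ∨ w = m - ((v+1 : ℕ) : ZMod n) := by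
      by_contra hcon
      push_neg at hcon
      obtain ⟨hc1, hc2⟩ := hcon
      have h1 : ¬ ((τ.symm (w+1) : ℕ) ≤ t) := by
        intro h
        rcases (H (w+1)).1 h with ⟨i, hi, hwi⟩ | ⟨j, hj, hwj⟩
        · rcases Nat.eq_zero_or_pos i with rfl | hipos
          · have hw1 : w = m - ((1:ℕ) : ZMod n) := by
              push_cast at hwi ⊢; linear_combination hwi
            rcases Nat.eq_zero_or_pos v with rfl | hv
            · exact hc2 (by simpa using hw1)
            · exact hwR (Or.inr ⟨1, hv, hw1⟩)
          · refine hwR (Or.inl ⟨i-1, by omega, ?_⟩)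
            have hc : ((i-1:ℕ) : ZMod n) = (i : ZMod n) - 1 := by
              rw [Nat.cast_sub hipos]; simp
            rw [hc]; linear_combination hwi
        · rcases eq_or_lt_of_le hj with rfl | hjv
          · exact hc2 (by push_cast at hwj ⊢; linear_combination hwj)
          · exact hwR (Or.inr ⟨j+1, by omega, by push_cast at hwj ⊢; linear_combination hwj⟩)
      have h2 : ¬ ((τ.symm (w-1) : ℕ) ≤ t) := by
        intro h
        rcases (H (w-1)).1 h with ⟨i, hi, hwi⟩ | ⟨j, hj, hwj⟩
        · rcases eq_or_lt_of_le hi with rfl | hiu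
          · exact hc1 (by push_cast at hwi ⊢; linear_combination hwi)
          · exact hwR (Or.inl ⟨i+1, by omega, by push_cast at hwi ⊢; linear_combination hwi⟩)
        · rcases Nat.eq_zero_or_pos j with rfl | hjpos
          · rcases Nat.eq_zero_or_pos u with rfl | hu
            · exact hc1 (by push_cast at hwj ⊢; linear_combination hwj)
            · exact hwR (Or.inl ⟨1, hu, by push_cast at hwj ⊢; linear_combination hwj⟩)
          · refine hwR (Or.inr ⟨j-1, by omega, ?_⟩)
            have hc : ((j-1:ℕ) : ZMod n) = (j : ZMod n) - 1 := by
              rw [Nat.cast_sub hjpos]; simp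
            rw [hc]; linear_combination hwj
      have hwmin : CycLocalMin τ w := by
        have hgen : ∀ y, y ≠ w → ¬ ((τ.symm y : ℕ) ≤ t) → Precedes τ w y := by
          intro y hy hyt
          have h1 : τ.symm y ≠ τ.symm w := fun h => hy (by simpa using congrArg τ h)
          have h2 : (τ.symm y : ℕ) ≠ t + 1 := by
            intro h; exact h1 (Fin.ext (by omega))
          show τ.symm w < τ.symm y
          rw [Fin.lt_def]
          omega
        constructor
        · exact hgen _ (fun h => hone (by linear_combination -h)) h2
        · exact hgen _ (fun h => hone (by linear_combination h)) h1
      obtain ⟨j0, _, hj0u⟩ := hmin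
      have hwm : w = m := (hj0u w hwmin).trans (hj0u m (min_first hn τ)).symm
      have h0 : (τ.symm w : ℕ) = 0 := by rw [hwm]; simp [hm]
      omega
    have hxe : ∀ x : ZMod n, (τ.symm x : ℕ) = t + 1 ↔ x = w := by
      intro x
      constructor
      · intro h
        have hx0 : τ.symm x = ⟨t+1, ht1⟩ := Fin.ext h
        have := congrArg τ hx0
        simpa [hwdef] using this
      · rintro rfl; exact hwpos
    rcases key with hk1 | hk1
    · refine ⟨u+1, v, by omega, fun x => ?_⟩
      constructor
      · intro hx
        rcases Nat.lt_or_ge (τ.symm x : ℕ) (t+1) with h' | h'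
        · rcases (H x).1 (by omega) with ⟨i,hi,rfl⟩|⟨j,hj,rfl⟩
          · exact Or.inl ⟨i, by omega, rfl⟩
          · exact Or.inr ⟨j, hj, rfl⟩
        · have hx1 : x = w := (hxe x).1 (by omega)
          exact Or.inl ⟨u+1, le_refl _, by rw [hx1, hk1]⟩
      · rintro (⟨i,hi,rfl⟩|⟨j,hj,rfl⟩)
        · rcases Nat.lt_or_ge i (u+1) with h' | h'
          · have := (H _).2 (Or.inl ⟨i, by omega, rfl⟩); omega
          · have hi1 : i = u+1 := by omega
            subst hi1
            have he : (τ.symm (m + ((u+1:ℕ) : ZMod n)) : ℕ) = t+1 := by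
              rw [← hk1]; exact hwpos
            omega
        · have := (H _).2 (Or.inr ⟨j, hj, rfl⟩); omega
    · refine ⟨u, v+1, by omega, fun x => ?_⟩
      constructor
      · intro hx
        rcases Nat.lt_or_ge (τ.symm x : ℕ) (t+1) with h' | h'
        · rcases (H x).1 (by omega) with ⟨i,hi,rfl⟩|⟨j,hj,rfl⟩
          · exact Or.inl ⟨i, hi, rfl⟩
          · exact Or.inr ⟨j, by omega, rfl⟩
        · have hx1 : x = w := (hxe x).1 (by omega)
          exact Or.inr ⟨v+1, le_refl _, by rw [hx1, hk1]⟩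
      · rintro (⟨i,hi,rfl⟩|⟨j,hj,rfl⟩)
        · have := (H _).2 (Or.inl ⟨i, hi, rfl⟩); omega
        · rcases Nat.lt_or_ge j (v+1) with h' | h'
          · have := (H _).2 (Or.inr ⟨j, by omega, rfl⟩); omega
          · have hj1 : j = v+1 := by omega
            subst hj1
            have he : (τ.symm (m - ((v+1:ℕ) : ZMod n)) : ℕ) = t+1 := by
              rw [← hk1]; exact hwpos
            omega

lemma add_ne_sub (hn : 0 < n) (m : ZMod n) {i j : ℕ} (h0 : 0 < i + j)
    (hij : i + j < n) : m + (i : ℕ) ≠ m - (j : ℕ) := by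
  intro h
  have h2 : ((i + j : ℕ) : ZMod n) = 0 := by push_cast; linear_combination h
  exact absurd (cast_inj hn hij hn (by simpa using h2)) (by omega)

lemma add_inj (hn : 0 < n) (m : ZMod n) {i j : ℕ} (hi : i < n) (hj : j < n)
    (h : m + (i : ℕ) = m + (j : ℕ)) : i = j :=
  cast_inj hn hi hj (by linear_combination h)

lemma sub_inj (hn : 0 < n) (m : ZMod n) {i j : ℕ} (hi : i < n) (hj : j < n)
    (h : m - (i : ℕ) = m - (j : ℕ)) : i = j :=
  cast_inj hn hi hj (by linear_combination -h)

lemma lshift {ℓ : ZMod n → ZMod n → ZMod k}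
    (hstep : ∀ a b : ZMod n, a ≠ b → ℓ (a + 1) (b + 1) = ℓ a b + 1)
    (c : ℕ) {a b : ZMod n} (h : a ≠ b) :
    ℓ (a + (c : ℕ)) (b + (c : ℕ)) = ℓ a b + (c : ZMod k) := by
  induction c with
  | zero => simp
  | succ c ih =>
      have hne : a + (c : ℕ) ≠ b + (c : ℕ) := by
        intro he; exact h (by linear_combination he)
      have := hstep _ _ hne
      push_cast
      push_cast at ih
      rw [show a + ((c : ZMod n) + 1) = (a + c) + 1 by ring,
        show b + ((c : ZMod n) + 1) = (b + c) + 1 by ring, this, ih]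
      ring

lemma compl_plus (hn : 0 < n) {τ : Fin n ≃ ZMod n} {m : ZMod n} {t u v : ℕ}
    (H : UV τ m t u v) {r : ℕ} (hur : u < r) (hrn : r + v < n) :
    ¬ ((τ.symm (m + (r:ℕ)) : ℕ) ≤ t) := by
  intro h
  rcases (H.2 _).1 h with ⟨i, hi, he⟩ | ⟨j, hj, he⟩
  · have : r = i := add_inj hn m (by omega) (by omega) he
    omega
  · exact add_ne_sub hn m (by omega) (by omega) he

lemma compl_minus (hn : 0 < n) {τ : Fin n ≃ ZMod n} {m : ZMod n} {t u v : ℕ}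
    (H : UV τ m t u v) {r : ℕ} (hvr : v < r) (hrn : r + u < n) :
    ¬ ((τ.symm (m - (r:ℕ)) : ℕ) ≤ t) := by
  intro h
  rcases (H.2 _).1 h with ⟨i, hi, he⟩ | ⟨j, hj, he⟩
  · exact add_ne_sub hn m (by omega) (by omega) (i := i) (j := r) he.symm
  · have : r = j := sub_inj hn m (by omega) (by omega) he
    omega

lemma frontier {ℓ : ZMod n → ZMod n → ZMod k} (hn : 2 ≤ n)
    {τ : Fin n ≃ ZMod n} {m : ZMod n} {t u v : ℕ}
    (hstep : ∀ a b : ZMod n, a ≠ b → ℓ (a+1) (b+1) = ℓ a b + 1)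
    (hT : ∀ a b : ZMod n, a ≠ b → Reverses τ a b → ℓ a b = -1)
    (H : UV τ m t u v) (ht : t + 2 ≤ n) :
    ℓ 0 (- ((t+1 : ℕ) : ZMod n)) + ((m.val + u : ℕ) : ZMod k) = -1 := by
  haveI : NeZero n := ⟨by omega⟩
  have huv := H.1
  have Hx := H.2
  have hmu : (τ.symm (m + (u:ℕ)) : ℕ) ≤ t := (Hx _).2 (Or.inl ⟨u, le_refl _, rfl⟩)
  have hmv : (τ.symm (m - (v:ℕ)) : ℕ) ≤ t := (Hx _).2 (Or.inr ⟨v, le_refl _, rfl⟩)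
  have hcp : ¬ ((τ.symm (m + ((u+1:ℕ) : ℕ)) : ℕ) ≤ t) :=
    compl_plus (by omega) H (by omega) (by omega)
  have hcm : ¬ ((τ.symm (m - ((v+1:ℕ) : ℕ)) : ℕ) ≤ t) :=
    compl_minus (by omega) H (by omega) (by omega)
  have hne : m + (u:ℕ) ≠ m - ((v+1:ℕ) : ℕ) := add_ne_sub (by omega) m (by omega) (by omega)
  have hrev : Reverses τ (m + (u:ℕ)) (m - ((v+1:ℕ) : ℕ)) := by
    constructor
    · show τ.symm _ < τ.symm _
      rw [Fin.lt_def]; omega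
    · have e1 : m - ((v+1:ℕ) : ZMod n) + 1 = m - (v:ℕ) := by push_cast; ring
      have e2 : m + ((u:ℕ) : ZMod n) + 1 = m + ((u+1:ℕ) : ℕ) := by push_cast; ring
      rw [e1, e2]
      show τ.symm _ < τ.symm _
      rw [Fin.lt_def]; omega
  have hl := hT _ _ hne hrev
  have e1 : (0 : ZMod n) + ((m.val + u : ℕ) : ZMod n) = m + (u:ℕ) := by
    push_cast [ZMod.natCast_val, ZMod.cast_id]; ring
  have e2 : (-((t+1:ℕ)) : ZMod n) + ((m.val + u : ℕ) : ZMod n) = m - ((v+1:ℕ) : ℕ) := by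
    have ht' : t + 1 = u + (v + 1) := by omega
    rw [ht']
    push_cast [ZMod.natCast_val, ZMod.cast_id]; ring
  have h0 : (0 : ZMod n) ≠ -(((t+1:ℕ)) : ZMod n) := by
    intro h
    exact cast_ne_zero (n := n) (a := t+1) (by omega) (by omega) (by omega)
      (by linear_combination h)
  have hs := lshift hstep (m.val + u) h0
  rw [e1, e2] at hs
  rw [hs] at hl
  exact hl

lemma arc_unique (hn : 0 < n) {τ : Fin n ≃ ZMod n} {m : ZMod n} {t u v u' v' : ℕ}
    (H : UV τ m t u v) (H' : UV τ m t u' v') (ht : t + 2 ≤ n) : u = u' := by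
  have h1 := H.1
  have h2 := H'.1
  by_contra hne
  rcases Nat.lt_or_ge u u' with h | h
  · exact compl_plus hn H (by omega) (by omega)
      ((H'.2 _).2 (Or.inl ⟨u+1, by omega, rfl⟩))
  · exact compl_plus hn H' (by omega) (by omega)
      ((H.2 _).2 (Or.inl ⟨u'+1, by omega, rfl⟩))

lemma arc_succ (hn : 0 < n) {τ : Fin n ≃ ZMod n} {m : ZMod n} {t u v u' v' : ℕ}
    (H : UV τ m t u v) (H' : UV τ m (t+1) u' v') (ht : t + 3 ≤ n) :
    u ≤ u' ∧ u' ≤ u + 1 := by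
  have h1 := H.1
  have h2 := H'.1
  constructor
  · by_contra h
    push_neg at h
    have m1 : (τ.symm (m - ((v+1:ℕ) : ℕ)) : ℕ) ≤ t+1 :=
      (H'.2 _).2 (Or.inr ⟨v+1, by omega, rfl⟩)
    have m2 : (τ.symm (m - ((v+2:ℕ) : ℕ)) : ℕ) ≤ t+1 :=
      (H'.2 _).2 (Or.inr ⟨v+2, by omega, rfl⟩)
    have c1 : ¬ ((τ.symm (m - ((v+1:ℕ) : ℕ)) : ℕ) ≤ t) := compl_minus hn H (by omega) (by omega)
    have c2 : ¬ ((τ.symm (m - ((v+2:ℕ) : ℕ)) : ℕ) ≤ t) := compl_minus hn H (by omega) (by omega)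
    have he : τ.symm (m - ((v+1:ℕ) : ℕ)) = τ.symm (m - ((v+2:ℕ) : ℕ)) := Fin.ext (by omega)
    have := τ.symm.injective he
    exact absurd (sub_inj hn m (by omega) (by omega) this) (by omega)
  · by_contra h
    push_neg at h
    have m1 : (τ.symm (m + ((u+1:ℕ) : ℕ)) : ℕ) ≤ t+1 :=
      (H'.2 _).2 (Or.inl ⟨u+1, by omega, rfl⟩)
    have m2 : (τ.symm (m + ((u+2:ℕ) : ℕ)) : ℕ) ≤ t+1 :=
      (H'.2 _).2 (Or.inl ⟨u+2, by omega, rfl⟩)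
    have c1 : ¬ ((τ.symm (m + ((u+1:ℕ) : ℕ)) : ℕ) ≤ t) := compl_plus hn H (by omega) (by omega)
    have c2 : ¬ ((τ.symm (m + ((u+2:ℕ) : ℕ)) : ℕ) ≤ t) := compl_plus hn H (by omega) (by omega)
    have he : τ.symm (m + ((u+1:ℕ) : ℕ)) = τ.symm (m + ((u+2:ℕ) : ℕ)) := Fin.ext (by omega)
    have := τ.symm.injective he
    exact absurd (add_inj hn m (by omega) (by omega) this) (by omega)

lemma elem_det (hn : 0 < n) {τ : Fin n ≃ ZMod n} {m : ZMod n} {t u v u' v' : ℕ}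
    (H : UV τ m t u v) (H' : UV τ m (t+1) u' v') (ht : t + 3 ≤ n) (ht1 : t + 1 < n) :
    (u' = u + 1 ∧ τ ⟨t+1, ht1⟩ = m + ((u+1 : ℕ) : ℕ)) ∨
    (u' = u ∧ τ ⟨t+1, ht1⟩ = m - ((v+1 : ℕ) : ℕ)) := by
  obtain ⟨hs1, hs2⟩ := arc_succ hn H H' ht
  have h1 := H.1
  have h2 := H'.1
  set w := τ ⟨t+1, ht1⟩ with hw
  have hwpos : (τ.symm w : ℕ) = t + 1 := by simp [hw]
  rcases (H'.2 w).1 (by omega) with ⟨i, hi, he⟩ | ⟨j, hj, he⟩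
  · have hiu : u < i := by
      by_contra hle
      push_neg at hle
      have := (H.2 w).2 (Or.inl ⟨i, hle, he⟩)
      omega
    have hieq : i = u + 1 := by omega
    left
    exact ⟨by omega, by rw [he, hieq]⟩
  · have hjv : v < j := by
      by_contra hle
      push_neg at hle
      have := (H.2 w).2 (Or.inr ⟨j, hle, he⟩)
      omega
    have hjeq : j = v + 1 := by omega
    right
    exact ⟨by omega, by rw [he, hjeq]⟩

lemma unique_ord {ℓ : ZMod n → ZMod n → ZMod k} (hn : 2 ≤ n) (hk : 1 < k)
    (hstep : ∀ a b : ZMod n, a ≠ b → ℓ (a+1) (b+1) = ℓ a b + 1)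
    (τ τ₂ : Fin n ≃ ZMod n)
    (hT : ∀ a b : ZMod n, a ≠ b → Reverses τ a b → ℓ a b = -1)
    (hmin : ∃! j, CycLocalMin τ j)
    (hT₂ : ∀ a b : ZMod n, a ≠ b → Reverses τ₂ a b → ℓ a b = -1)
    (hmin₂ : ∃! j, CycLocalMin τ₂ j)
    (h0 : τ ⟨0, by omega⟩ = τ₂ ⟨0, by omega⟩) : τ = τ₂ := by
  have hn0 : 0 < n := by omega
  set m := τ ⟨0, by omega⟩ with hm
  have hm₂ : m = τ₂ ⟨0, by omega⟩ := h0
  have arc₂ : ∀ t : ℕ, t < n → ∃ u v, UV τ₂ m t u v := by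
    intro t ht
    rw [hm₂]
    exact arc hn τ₂ hmin₂ t ht
  have arc₁ : ∀ t : ℕ, t < n → ∃ u v, UV τ m t u v := fun t ht => arc hn τ hmin t ht
  -- step 1 : the u–sequences agree
  have step1 : ∀ t u v u₂ v₂, t + 2 ≤ n → UV τ m t u v → UV τ₂ m t u₂ v₂ → u = u₂ := by
    intro t
    induction t with
    | zero =>
      intro u v u₂ v₂ _ H H₂
      have := H.1
      have := H₂.1
      omega
    | succ t ih =>
      intro u v u₂ v₂ ht H H₂
      obtain ⟨u₁, v₁, H₁⟩ := arc₁ t (by omega)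
      obtain ⟨u₁₂, v₁₂, H₁₂⟩ := arc₂ t (by omega)
      have e := ih u₁ v₁ u₁₂ v₁₂ (by omega) H₁ H₁₂
      obtain ⟨ha1, ha2⟩ := arc_succ hn0 H₁ H (by omega)
      obtain ⟨hb1, hb2⟩ := arc_succ hn0 H₁₂ H₂ (by omega)
      have f1 := frontier hn hstep hT H (by omega)
      have f2 := frontier hn hstep hT₂ H₂ (by omega)
      have hc : ((m.val + u : ℕ) : ZMod k) = ((m.val + u₂ : ℕ) : ZMod k) := by
        linear_combination f1 - f2
      by_contra hne
      have honek : (1 : ZMod k) ≠ 0 := one_ne_zero' hk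
      have hcc : ((u:ℕ) : ZMod k) = ((u₂:ℕ) : ZMod k) := by
        push_cast at hc
        linear_combination hc
      rcases (by omega : u = u₂ + 1 ∨ u₂ = u + 1) with he | he
      · rw [he] at hcc
        push_cast at hcc
        exact honek (by linear_combination hcc)
      · rw [he] at hcc
        push_cast at hcc
        exact honek (by linear_combination -hcc)
  -- step 2 : all but possibly the last element agree
  have hlow : ∀ i : Fin n, (i : ℕ) + 2 ≤ n → τ i = τ₂ i := by
    intro i hi
    rcases Nat.eq_zero_or_pos i.val with h | h
    · have : i = ⟨0, by omega⟩ := Fin.ext (by simp [h])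
      rw [this]
      exact h0
    · obtain ⟨t, ht⟩ : ∃ t, (i:ℕ) = t + 1 := ⟨i.val - 1, by omega⟩
      obtain ⟨u₁, v₁, H₁⟩ := arc₁ t (by omega)
      obtain ⟨u, v, H⟩ := arc₁ (t+1) (by omega)
      obtain ⟨u₁', v₁', H₁'⟩ := arc₂ t (by omega)
      obtain ⟨u', v', H'⟩ := arc₂ (t+1) (by omega)
      have e1 : u₁ = u₁' := step1 t _ _ _ _ (by omega) H₁ H₁'
      have e2 : u = u' := step1 (t+1) _ _ _ _ (by omega) H H'
      have hv : v₁ = v₁' := by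
        have := H₁.1
        have := H₁'.1
        omega
      have d1 := elem_det hn0 H₁ H (by omega) (by omega : t + 1 < n)
      have d2 := elem_det hn0 H₁' H' (by omega) (by omega : t + 1 < n)
      have key : τ ⟨t+1, by omega⟩ = τ₂ ⟨t+1, by omega⟩ := by
        rcases d1 with ⟨ha, hb⟩ | ⟨ha, hb⟩ <;> rcases d2 with ⟨hc, hd⟩ | ⟨hc, hd⟩
        · rw [hb, hd, e1]
        · exact absurd rfl (by omega : ¬ (0:ℕ) = 0)
        · exact absurd rfl (by omega : ¬ (0:ℕ) = 0)
        · rw [hb, hd, hv]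
      have : i = ⟨t+1, by omega⟩ := Fin.ext (by simp [ht])
      rw [this]
      exact key
  -- conclude
  apply Equiv.ext
  intro i
  rcases Nat.lt_or_ge ((i:ℕ) + 2) (n+1) with h | h
  · exact hlow i (by omega)
  · have hin : (i:ℕ) = n - 1 := by have := i.isLt; omega
    by_contra hne
    set j := τ₂.symm (τ i) with hj
    have hji : j ≠ i := by
      intro hcon
      apply hne
      have : τ₂ j = τ i := by simp [hj]
      rw [← this, hcon]
    have hjlow : (j:ℕ) + 2 ≤ n := by
      have hjl := j.isLt
      rcases Nat.lt_or_ge ((j:ℕ) + 2) (n+1) with h' | h'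
      · omega
      · exact absurd (Fin.ext (by omega : (j:ℕ) = (i:ℕ)) : j = i) hji
    have h1 : τ j = τ₂ j := hlow j hjlow
    have h2 : τ₂ j = τ i := by simp [hj]
    exact hji (τ.injective (h1.trans h2))

end Stmt5Aux

/-- Two standard transitive σ_n-orientations of the same
σ_n-k-partition differ by a shift by a power of σ_n^k. -/
theorem stmt_5 (n k : ℕ) (hk : 1 < k) (hn : 0 < n)
    (ℓ : ZMod n → ZMod n → ZMod k) (hP : IsSigmaPartition n k ℓ)
    (τ τ' : Fin n ≃ ZMod n)
    (hT : IsTransSigmaOrientation n k ℓ τ) (hB : Bitonic τ)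
    (hT' : IsTransSigmaOrientation n k ℓ τ') (hB' : Bitonic τ') :
    ∃ t : ℤ, ∀ a b : ZMod n, a ≠ b →
      (Precedes τ a b ↔
        Precedes τ' (a + (((k : ℤ) * t : ℤ) : ZMod n))
          (b + (((k : ℤ) * t : ℤ) : ZMod n))) := by
  classical
  rcases Nat.lt_or_ge n 2 with hn2 | hn2
  · obtain rfl : n = 1 := by omega
    exact ⟨0, fun a b hab => absurd (Subsingleton.elim a b) hab⟩
  have hn0 : 0 < n := by omega
  haveI : NeZero n := ⟨by omega⟩
  obtain ⟨hsym, hstep⟩ := hP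
  set m := τ ⟨0, by omega⟩ with hm
  set m' := τ' ⟨0, by omega⟩ with hm'
  obtain ⟨u0, v0, H0⟩ := Stmt5Aux.arc hn2 τ hB.1 0 (by omega)
  obtain ⟨u0', v0', H0'⟩ := Stmt5Aux.arc hn2 τ' hB'.1 0 (by omega)
  have hu0 : u0 = 0 := by have := H0.1; omega
  have hu0' : u0' = 0 := by have := H0'.1; omega
  have f0 := Stmt5Aux.frontier hn2 hstep hT H0 (by omega)
  have f0' := Stmt5Aux.frontier hn2 hstep hT' H0' (by omega)
  rw [hu0] at f0
  rw [hu0'] at f0'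
  have hval : ((m.val : ℕ) : ZMod k) = ((m'.val : ℕ) : ZMod k) := by
    push_cast at f0 f0'
    linear_combination f0 - f0'
  have hdvd : (k:ℤ) ∣ ((m'.val : ℤ) - (m.val : ℤ)) := by
    have hz : (((m'.val : ℤ) - (m.val : ℤ) : ℤ) : ZMod k) = 0 := by
      push_cast
      rw [← hval]
      ring
    exact (ZMod.intCast_zmod_eq_zero_iff_dvd _ k).1 hz
  obtain ⟨t₀, ht₀⟩ := hdvd
  refine ⟨t₀, ?_⟩
  have hkn : k ∣ n := by
    have h01 : (0 : ZMod n) ≠ 1 := fun h => Stmt5Aux.one_ne_zero' hn2 h.symm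
    have hln := Stmt5Aux.lshift hstep n h01
    rw [ZMod.natCast_self] at hln
    simp only [add_zero] at hln
    have hnz : ((n:ℕ) : ZMod k) = 0 := by linear_combination -hln
    exact (ZMod.natCast_eq_zero_iff _ _).1 hnz
  set s : ZMod n := m' - m with hs
  have hsv : ((s.val : ℕ) : ZMod n) = s := by rw [ZMod.natCast_val, ZMod.cast_id]
  have hsk : ((s.val : ℕ) : ZMod k) = 0 := by
    obtain ⟨q, hq⟩ : (n:ℤ) ∣ ((s.val : ℤ) - ((m'.val:ℤ) - (m.val:ℤ))) := by
      have hz : (((s.val : ℤ) - ((m'.val:ℤ) - (m.val:ℤ)) : ℤ) : ZMod n) = 0 := by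
        push_cast
        rw [hsv, ZMod.natCast_val, ZMod.cast_id, ZMod.natCast_val, ZMod.cast_id, hs]
        ring
      exact (ZMod.intCast_zmod_eq_zero_iff_dvd _ n).1 hz
    have hk2 : (k:ℤ) ∣ (s.val : ℤ) := by
      have hkn' : (k:ℤ) ∣ (n:ℤ) := Int.natCast_dvd_natCast.2 hkn
      have hse : (s.val : ℤ) = ((m'.val:ℤ) - (m.val:ℤ)) + (n:ℤ) * q := by linarith [hq]
      rw [hse]
      exact dvd_add ⟨t₀, ht₀⟩ (Dvd.dvd.mul_right hkn' q)
    obtain ⟨r, hr⟩ := hk2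
    have hz : ((s.val : ℤ) : ZMod k) = 0 := by
      rw [hr]
      push_cast
      rw [ZMod.natCast_self, zero_mul]
    push_cast at hz
    exact hz
  have hcast : (((k : ℤ) * t₀ : ℤ) : ZMod n) = s := by
    rw [← ht₀]
    push_cast
    rw [ZMod.natCast_val, ZMod.cast_id, ZMod.natCast_val, ZMod.cast_id, hs]
  set τ'' : Fin n ≃ ZMod n := τ'.trans (Equiv.subRight s) with hτ''
  have hsymm'' : ∀ x, τ''.symm x = τ'.symm (x + s) := by
    intro x
    simp [hτ'', Equiv.subRight]
  have happ'' : ∀ i, τ'' i = τ' i - s := by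
    intro i
    simp [hτ'', Equiv.subRight]
  have hPrec : ∀ a b, (Precedes τ'' a b ↔ Precedes τ' (a+s) (b+s)) := by
    intro a b
    simp only [Precedes, hsymm'']
  have hT'' : ∀ a b : ZMod n, a ≠ b → Reverses τ'' a b → ℓ a b = -1 := by
    intro a b hab hrev
    have hab' : a + s ≠ b + s := fun h => hab (by linear_combination h)
    have hrev' : Reverses τ' (a+s) (b+s) := by
      obtain ⟨r1, r2⟩ := hrev
      refine ⟨(hPrec _ _).1 r1, ?_⟩
      have h2 := (hPrec _ _).1 r2
      rwa [show b + 1 + s = (b+s) + 1 by ring, show a + 1 + s = (a+s) + 1 by ring] at h2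
    have hminus1 := hT' _ _ hab' hrev'
    have hls := Stmt5Aux.lshift hstep s.val hab
    rw [hsv, hsk, add_zero] at hls
    rw [← hls]
    exact hminus1
  have hmin'' : ∃! j, CycLocalMin τ'' j := by
    obtain ⟨j0, hj0, hj0u⟩ := hB'.1
    have hiff : ∀ j, CycLocalMin τ'' j ↔ CycLocalMin τ' (j + s) := by
      intro j
      simp only [CycLocalMin]
      rw [hPrec, hPrec,
        show j - 1 + s = (j+s) - 1 by ring, show j + 1 + s = (j+s) + 1 by ring]
    refine ⟨j0 - s, ?_, ?_⟩
    · show CycLocalMin τ'' (j0 - s)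
      rw [hiff]
      simpa using hj0
    · intro y hy
      have := hj0u _ ((hiff y).1 hy)
      linear_combination this
  have h0'' : τ ⟨0, by omega⟩ = τ'' ⟨0, by omega⟩ := by
    rw [happ'']
    show m = m' - s
    rw [hs]
    ring
  have huniq := Stmt5Aux.unique_ord hn2 hk hstep τ τ'' hT hB.1 hT'' hmin'' h0''
  intro a b hab
  rw [hcast, huniq]
  exact hPrec a b
end
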